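/- arXiv:math/9201290 — 12 statements merged into one kernel-verified Lean document; each statement's English description precedes it below -/
import Mathlib

section
/- Let f : [0,1] → [0,1] be continuous and let U ⊆ [0,1] be a nondegenerate interval such that f^m(U) ∩ U ≠ ∅ for some m ≥ 1. Then there exists a closed interval I ⊇ U and an integer n ≥ 1 such that f^n(I) ⊆ I, the closure of the orbit ⋃_{i≥0} f^i(U) equals ⋃_{i=0}^{n-1} f^i(I), and the set (⋃_{i=0}^{n-1} f^i(I)) \ (⋃_{i≥0} f^i(U)) is finite. -/
/-!
Let `L = ⋃ₖ f^{km}(U)`. Consecutive pieces of this union meet (`f^m(U) ∩ U ≠ ∅`), so `L` is an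
interval, and `f^m(L) ⊆ L`. Its closure `I` is a closed interval with `f^m(I) ⊆ I`, and the orbit
of `U` is `⋃_{i<m} f^i(L)`. By compactness `f^i(I)` is the closure of the interval `f^i(L)`, which
it exceeds by at most its two endpoints.
-/

open Set Function

section ClosureDiff

variable {α : Type*} [ConditionallyCompleteLinearOrder α] [TopologicalSpace α] [OrderTopology α]

theorem IsPreconnected.closure_diff_subset_csInf_csSup {s : Set α} (hs : IsPreconnected s) :
    closure s \ s ⊆ {sInf s, sSup s} := by
  rintro x ⟨hxc, hxs⟩
  have hne : s.Nonempty := closure_nonempty_iff.mp ⟨x, hxc⟩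
  by_cases hlow : x ∈ lowerBounds s
  · exact Or.inl ((isGLB_of_mem_closure hlow hxc).csInf_eq hne).symm
  by_cases hup : x ∈ upperBounds s
  · exact Or.inr ((isLUB_of_mem_closure hup hxc).csSup_eq hne).symm
  simp only [mem_lowerBounds, mem_upperBounds, not_forall, not_le, exists_prop] at hlow hup
  obtain ⟨y, hy, hyx⟩ := hlow
  obtain ⟨z, hz, hxz⟩ := hup
  exact absurd (hs.Icc_subset hy hz ⟨hyx.le, hxz.le⟩) hxs

theorem IsPreconnected.finite_closure_diff {s : Set α} (hs : IsPreconnected s) :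
    (closure s \ s).Finite :=
  (toFinite {sInf s, sSup s}).subset hs.closure_diff_subset_csInf_csSup

theorem finite_closure_biUnion_diff_of_isPreconnected {ι : Type*} (s : Finset ι) {t : ι → Set α}
    (ht : ∀ i ∈ s, IsPreconnected (t i)) :
    (closure (⋃ i ∈ s, t i) \ ⋃ i ∈ s, t i).Finite := by
  rw [Finset.closure_biUnion]
  refine (s.finite_toSet.biUnion fun i hi => (ht i hi).finite_closure_diff).subset ?_
  rintro x ⟨hx, hxt⟩
  obtain ⟨i, hi, hxi⟩ := mem_iUnion₂.mp hx
  exact mem_iUnion₂.mpr ⟨i, hi, hxi, fun h => hxt (mem_iUnion₂.mpr ⟨i, hi, h⟩)⟩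

end ClosureDiff

section IterateUnion

variable {β : Type*} (f : β → β) (U : Set β) (m : ℕ)

theorem image_iterate_iUnion_iterate_mul_subset :
    f^[m] '' ⋃ k, f^[k * m] '' U ⊆ ⋃ k, f^[k * m] '' U := by
  rintro _ ⟨_, hx, rfl⟩
  obtain ⟨k, u, hu, rfl⟩ := mem_iUnion.mp hx
  refine mem_iUnion.mpr ⟨k + 1, u, hu, ?_⟩
  rw [add_one_mul, Nat.add_comm, iterate_add_apply]

theorem biUnion_range_image_iUnion_iterate_mul (hm : 1 ≤ m) :
    ⋃ i ∈ Finset.range m, f^[i] '' ⋃ k, f^[k * m] '' U = ⋃ i, f^[i] '' U := by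
  ext z
  simp only [mem_iUnion, Finset.mem_range, exists_prop]
  constructor
  · rintro ⟨i, -, x, hx, rfl⟩
    obtain ⟨k, u, hu, rfl⟩ := mem_iUnion.mp hx
    exact ⟨i + k * m, u, hu, iterate_add_apply f i (k * m) u⟩
  · rintro ⟨i, u, hu, rfl⟩
    refine ⟨i % m, Nat.mod_lt _ hm, f^[i / m * m] u, mem_iUnion.mpr ⟨i / m, u, hu, rfl⟩, ?_⟩
    rw [← iterate_add_apply, Nat.mod_add_div' i m]

theorem isPreconnected_iUnion_iterate_mul [TopologicalSpace β] {K : Set β}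
    (hf : ContinuousOn f K) (hmaps : MapsTo f K K) (hUK : U ⊆ K) (hU : IsPreconnected U)
    (hint : (f^[m] '' U ∩ U).Nonempty) : IsPreconnected (⋃ k, f^[k * m] '' U) := by
  obtain ⟨x, ⟨u, hu, rfl⟩, hx⟩ := hint
  refine IsPreconnected.iUnion_of_chain
    (fun k => hU.image _ ((hf.iterate hmaps _).mono hUK)) fun k => ⟨f^[k * m] (f^[m] u), ?_, ?_⟩
  · exact mem_image_of_mem _ hx
  · refine ⟨u, hu, ?_⟩
    rw [Order.succ_eq_add_one, add_one_mul, iterate_add_apply]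

end IterateUnion

theorem stmt_0_general (f : ℝ → ℝ) (hf : ContinuousOn f (Icc 0 1))
    (hmaps : MapsTo f (Icc 0 1) (Icc 0 1))
    (U : Set ℝ) (hU : U ⊆ Icc 0 1) (hUconn : U.OrdConnected)
    (m : ℕ) (hm : 1 ≤ m) (hint : ((f^[m] '' U) ∩ U).Nonempty) :
    ∃ (a b : ℝ) (n : ℕ), 1 ≤ n ∧ U ⊆ Icc a b ∧ Icc a b ⊆ Icc 0 1 ∧
      f^[n] '' Icc a b ⊆ Icc a b ∧
      closure (⋃ i, f^[i] '' U) = ⋃ i ∈ Finset.range n, f^[i] '' Icc a b ∧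
      ((⋃ i ∈ Finset.range n, f^[i] '' Icc a b) \ (⋃ i, f^[i] '' U)).Finite := by
  set L := ⋃ k, f^[k * m] '' U
  have hUL : U ⊆ L := fun u hu => mem_iUnion.mpr ⟨0, u, hu, by simp⟩
  have hL : IsConnected L := ⟨hint.mono (inter_subset_right.trans hUL),
    isPreconnected_iUnion_iterate_mul f U m hf hmaps hU hUconn.isPreconnected hint⟩
  have hLI : L ⊆ Icc 0 1 := iUnion_subset fun k => ((hmaps.iterate _).mono_left hU).image_subset
  have hcl : closure L ⊆ Icc 0 1 := closure_minimal hLI isClosed_Icc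
  have hIcc := eq_Icc_csInf_csSup_of_connected_bdd_closed hL.closure (bddBelow_Icc.mono hcl)
    (bddAbove_Icc.mono hcl) isClosed_closure
  have himage (i : ℕ) : f^[i] '' closure L = closure (f^[i] '' L) :=
    image_closure_of_isCompact (isCompact_Icc.of_isClosed_subset isClosed_closure hcl)
      ((hf.iterate hmaps i).mono hcl)
  have horbit : ⋃ i ∈ Finset.range m, f^[i] '' L = ⋃ i, f^[i] '' U :=
    biUnion_range_image_iUnion_iterate_mul f U m hm
  have hclosure : closure (⋃ i, f^[i] '' U) = ⋃ i ∈ Finset.range m, f^[i] '' closure L := by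
    simp only [← horbit, Finset.closure_biUnion, himage]
  refine ⟨_, _, m, hm, hIcc ▸ hUL.trans subset_closure, hIcc ▸ hcl, ?_, hIcc ▸ hclosure, ?_⟩
  · rw [← hIcc, himage]
    exact closure_mono (image_iterate_iUnion_iterate_mul_subset f U m)
  · rw [← hIcc, ← hclosure, ← horbit]
    exact finite_closure_biUnion_diff_of_isPreconnected _ fun i _ =>
      hL.isPreconnected.image _ ((hf.iterate hmaps i).mono hLI)

theorem stmt_0 (f : ℝ → ℝ) (hf : ContinuousOn f (Icc 0 1))
    (hmaps : MapsTo f (Icc 0 1) (Icc 0 1))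
    (U : Set ℝ) (hU : U ⊆ Icc 0 1) (hUconn : U.OrdConnected) (hUnt : U.Nontrivial)
    (m : ℕ) (hm : 1 ≤ m) (hint : ((f^[m] '' U) ∩ U).Nonempty) :
    ∃ (a b : ℝ) (n : ℕ), 1 ≤ n ∧ U ⊆ Icc a b ∧ Icc a b ⊆ Icc 0 1 ∧
      f^[n] '' Icc a b ⊆ Icc a b ∧
      closure (⋃ i, f^[i] '' U) = ⋃ i ∈ Finset.range n, f^[i] '' Icc a b ∧
      ((⋃ i ∈ Finset.range n, f^[i] '' Icc a b) \ (⋃ i, f^[i] '' U)).Finite :=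
  stmt_0_general f hf hmaps U hU hUconn m hm hint
end

section
/- Let f : [0,1] → [0,1] be continuous and let J be a closed interval with f^l(J) ⊆ J for some l ≥ 1. Then L = ⋂_{i≥0} f^{il}(J) is an interval (possibly degenerate) satisfying f^l(L) = L. -/
/-! The sets `g^[n] '' J` (with `g = f^[l]`) form a decreasing sequence of compact intervals, so
their intersection `L` is an interval. For `g '' L = L`, the inclusion `⊆` is immediate; for
`⊇`, a point `y` of `L` has, for every `n`, a preimage in `g^[n] '' J`, and these compact fibres are
nested, so by Cantor's intersection theorem some preimage of `y` lies in all of them. -/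

open Set Function

theorem Antitone.image_iInter_eq_of_isCompact {X Y : Type*} [TopologicalSpace X] [T2Space X]
    [TopologicalSpace Y] [T1Space Y] {K : ℕ → Set X} (hK : Antitone K)
    (hKc : ∀ n, IsCompact (K n)) {g : X → Y} (hg : ContinuousOn g (K 0)) :
    g '' ⋂ n, K n = ⋂ n, g '' K n := by
  refine (image_iInter_subset K g).antisymm fun y hy => ?_
  have hfiber_closed : ∀ n, IsClosed (K n ∩ g ⁻¹' {y}) := fun n =>
    (hg.mono (hK n.zero_le)).preimage_isClosed_of_isClosed (hKc n).isClosed isClosed_singleton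
  have hfiber_nonempty : ∀ n, (K n ∩ g ⁻¹' {y}).Nonempty := fun n => by
    obtain ⟨x, hxK, rfl⟩ := mem_iInter.1 hy n
    exact ⟨x, hxK, rfl⟩
  obtain ⟨x, hx⟩ := IsCompact.nonempty_iInter_of_sequence_nonempty_isCompact_isClosed _
    (fun n => inter_subset_inter_left _ (hK n.le_succ)) hfiber_nonempty
    ((hKc 0).of_isClosed_subset (hfiber_closed 0) inter_subset_left) hfiber_closed
  exact ⟨x, mem_iInter.2 fun n => (mem_iInter.1 hx n).1, (mem_iInter.1 hx 0).2⟩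

section IterateImage

variable {X : Type*} {g : X → X} {s : Set X}

theorem antitone_image_iterate (hs : MapsTo g s s) : Antitone fun n => g^[n] '' s :=
  antitone_nat_of_succ_le fun n => by
    rw [iterate_succ, image_comp]
    exact image_mono hs.image_subset

theorem isCompact_image_iterate [TopologicalSpace X] (hs : IsCompact s) (hg : ContinuousOn g s)
    (hgs : MapsTo g s s) (n : ℕ) : IsCompact (g^[n] '' s) :=
  hs.image_of_continuousOn (hg.iterate hgs n)

theorem image_iInter_image_iterate [TopologicalSpace X] [T2Space X] (hs : IsCompact s)
    (hg : ContinuousOn g s) (hgs : MapsTo g s s) :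
    g '' ⋂ n, g^[n] '' s = ⋂ n, g^[n] '' s := by
  have hanti := antitone_image_iterate hgs
  calc g '' ⋂ n, g^[n] '' s
      = ⋂ n, g '' (g^[n] '' s) :=
        hanti.image_iInter_eq_of_isCompact (isCompact_image_iterate hs hg hgs)
          (by rwa [iterate_zero, image_id])
    _ = ⋂ n, g^[n + 1] '' s := by simp only [iterate_succ', image_comp]
    _ = ⋂ n, g^[n] '' s := hanti.iInter_nat_add 1

theorem ordConnected_iInter_image_iterate [LinearOrder X] [TopologicalSpace X]
    [OrderClosedTopology X] (hs : IsPreconnected s) (hg : ContinuousOn g s) (hgs : MapsTo g s s) :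
    (⋂ n, g^[n] '' s).OrdConnected :=
  ordConnected_iInter fun n => (hs.image _ (hg.iterate hgs n)).ordConnected

end IterateImage

theorem stmt_1_general (f : ℝ → ℝ) (hf : ContinuousOn f (Icc 0 1))
    (hmaps : MapsTo f (Icc 0 1) (Icc 0 1))
    (a b : ℝ) (hJ : Icc a b ⊆ Icc 0 1) (l : ℕ)
    (hper : f^[l] '' Icc a b ⊆ Icc a b) :
    (⋂ i : ℕ, f^[i * l] '' Icc a b).OrdConnected ∧
      f^[l] '' (⋂ i : ℕ, f^[i * l] '' Icc a b) = ⋂ i : ℕ, f^[i * l] '' Icc a b := by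
  have hiter : ∀ i : ℕ, f^[i * l] = (f^[l])^[i] := fun i => by rw [mul_comm, iterate_mul]
  have hcont : ContinuousOn f^[l] (Icc a b) := (hf.iterate hmaps l).mono hJ
  have hmapsJ : MapsTo f^[l] (Icc a b) (Icc a b) := mapsTo_iff_image_subset.2 hper
  simp only [hiter]
  exact ⟨ordConnected_iInter_image_iterate isPreconnected_Icc hcont hmapsJ,
    image_iInter_image_iterate isCompact_Icc hcont hmapsJ⟩

theorem stmt_1 (f : ℝ → ℝ) (hf : ContinuousOn f (Icc 0 1))
    (hmaps : MapsTo f (Icc 0 1) (Icc 0 1))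
    (a b : ℝ) (hJ : Icc a b ⊆ Icc 0 1) (l : ℕ) (hl : 1 ≤ l)
    (hper : f^[l] '' Icc a b ⊆ Icc a b) :
    (⋂ i : ℕ, f^[i * l] '' Icc a b).OrdConnected ∧
      f^[l] '' (⋂ i : ℕ, f^[i * l] '' Icc a b) = ⋂ i : ℕ, f^[i * l] '' Icc a b :=
  stmt_1_general f hf hmaps a b hJ l hper
end

section
/- Let f : [0,1] → [0,1] be continuous, U ⊆ [0,1] an interval with x ∈ U, λ(U) ≥ ε > 0 (where λ is Lebesgue measure/length), and n > 0 an integer. Then there exists an interval V with x ∈ V ⊆ U such that λ(f^i(V)) ≤ ε for all 0 ≤ i ≤ n, and λ(f^j(V)) = ε for some 0 ≤ j ≤ n. -/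
open Set Function MeasureTheory

/-!
Shrink `U` by the homotheties `y ↦ x + s (y - x)` centred at `x`, `s ∈ [0, 1]`. Each image
`f^[i] '' V` of the shrunken interval `V` has the length of the compact interval `f^[i] '' closure V`,
which depends continuously on `s`. The largest of these `n + 1` lengths vanishes at `s = 0` and is at
least `λ(U) ≥ ε` at `s = 1`, so by the intermediate value theorem it equals `ε` at some scale.
-/

theorem Convex.addHaar_closure {E : Type*} [NormedAddCommGroup E] [NormedSpace ℝ E]
    [MeasurableSpace E] [BorelSpace E] [FiniteDimensional ℝ E] (μ : Measure E)
    [μ.IsAddHaarMeasure] {s : Set E} (hs : Convex ℝ s) : μ (closure s) = μ s := by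
  refine le_antisymm ?_ (measure_mono subset_closure)
  calc μ (closure s) = μ (s ∪ frontier s) := by rw [closure_eq_self_union_frontier]
    _ ≤ μ s + μ (frontier s) := measure_union_le _ _
    _ = μ s := by rw [hs.addHaar_frontier μ, add_zero]

theorem Set.EqOn.iterate {α : Type*} {f g : α → α} {s : Set α} (h : EqOn f g s)
    (hf : MapsTo f s s) : ∀ n, EqOn f^[n] g^[n] s
  | 0 => eqOn_refl _ _
  | n + 1 => fun y hy => by
    rw [iterate_succ_apply, iterate_succ_apply, ← h hy]
    exact h.iterate hf n (hf hy)

theorem ContinuousOn.exists_continuous_eqOn_Icc {α β : Type*} [LinearOrder α] [TopologicalSpace α]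
    [OrderTopology α] [TopologicalSpace β] {f : α → β} {a b : α} (hab : a ≤ b)
    (hf : ContinuousOn f (Icc a b)) : ∃ F : α → β, Continuous F ∧ EqOn F f (Icc a b) :=
  ⟨IccExtend hab ((Icc a b).domRestrict f), continuous_IccExtend_iff.2 hf.domRestrict,
    fun _ hy => IccExtend_of_mem hab _ hy⟩

theorem Set.OrdConnected.image_of_continuousOn {α β : Type*} [ConditionallyCompleteLinearOrder α]
    [TopologicalSpace α] [OrderTopology α] [DenselyOrdered α] [LinearOrder β] [TopologicalSpace β]
    [OrderClosedTopology β] {s : Set α} {f : α → β} (hs : s.OrdConnected)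
    (hf : ContinuousOn f s) : (f '' s).OrdConnected :=
  (hs.isPreconnected.image f hf).ordConnected

theorem IsCompact.continuous_diam_image {γ : Type*} [TopologicalSpace γ] {K : Set ℝ}
    (hK : IsCompact K) {g : γ → ℝ → ℝ} (hg : Continuous ↿g) :
    Continuous fun c => Metric.diam (g c '' K) := by
  have hgc : ∀ c, Continuous (g c) := fun c => hg.comp (.prodMk_right c)
  simp_rw [fun c => Real.diam_eq (hK.image (hgc c)).isBounded]
  exact (hK.continuous_sSup hg).sub (hK.continuous_sInf hg)

namespace Real

theorem volume_eq_ofReal_diam {K : Set ℝ} (hK : IsCompact K) (hc : IsConnected K) :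
    volume K = ENNReal.ofReal (Metric.diam K) := by
  rw [eq_Icc_of_connected_compact hc hK, volume_Icc,
    diam_Icc (sInf_le_sSup K hK.bddBelow hK.bddAbove)]

theorem volume_image_eq_of_subset_closure {g : ℝ → ℝ} (hg : Continuous g) {s t : Set ℝ}
    (hs : s.OrdConnected) (hst : s ⊆ t) (hts : t ⊆ closure s) :
    volume (g '' t) = volume (g '' s) := by
  refine le_antisymm ?_ (measure_mono (image_mono hst))
  calc volume (g '' t) ≤ volume (closure (g '' s)) :=
        measure_mono ((image_mono hts).trans (image_closure_subset_closure_image hg))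
    _ = volume (g '' s) := (hs.image_of_continuousOn hg.continuousOn).convex.addHaar_closure _

end Real

section Homothety

variable {U : Set ℝ} {x : ℝ}

theorem Set.OrdConnected.image_homothety_subset (hU : U.OrdConnected) (hx : x ∈ U) {s : ℝ}
    (hs : s ∈ Icc 0 1) : (fun y => x + s * (y - x)) '' U ⊆ U := by
  rintro _ ⟨y, hy, rfl⟩
  exact hU.convex.add_smul_sub_mem hx hy hs

theorem volume_image_image_homothety (hUb : Bornology.IsBounded U) (hU : U.OrdConnected)
    (hx : x ∈ U) {g : ℝ → ℝ} (hg : Continuous g) (s : ℝ) :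
    volume (g '' ((fun y => x + s * (y - x)) '' U)) =
      ENNReal.ofReal (Metric.diam ((fun y => g (x + s * (y - x))) '' closure U)) := by
  have hh : Continuous fun y => x + s * (y - x) := by fun_prop
  rw [← Real.volume_image_eq_of_subset_closure hg (hU.image_of_continuousOn hh.continuousOn)
    (image_mono subset_closure) (image_closure_subset_closure_image hh), image_image]
  have hUc : IsConnected U := ⟨⟨x, hx⟩, hU.isPreconnected⟩
  exact Real.volume_eq_ofReal_diam (hUb.isCompact_closure.image (hg.comp hh))
    (hUc.closure.image _ (hg.comp hh).continuousOn)

theorem exists_ordConnected_subset_volume_image_le_and_eq {ι : Type*} (I : Finset ι)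
    (g : ι → ℝ → ℝ) (hg : ∀ i ∈ I, Continuous (g i)) {i₀ : ι} (hi₀ : i₀ ∈ I)
    (hUb : Bornology.IsBounded U) (hU : U.OrdConnected) (hx : x ∈ U) {ε : ℝ} (hε : 0 ≤ ε)
    (hεU : ENNReal.ofReal ε ≤ volume (g i₀ '' U)) :
    ∃ V : Set ℝ, x ∈ V ∧ V ⊆ U ∧ V.OrdConnected ∧
      (∀ i ∈ I, volume (g i '' V) ≤ ENNReal.ofReal ε) ∧
      ∃ j ∈ I, volume (g j '' V) = ENNReal.ofReal ε := by
  set φ : ι → ℝ → ℝ := fun i s => Metric.diam ((fun y => g i (x + s * (y - x))) '' closure U)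
  have hvol : ∀ i ∈ I, ∀ s, volume (g i '' ((fun y => x + s * (y - x)) '' U)) =
      ENNReal.ofReal (φ i s) := fun i hi s => volume_image_image_homothety hUb hU hx (hg i hi) s
  have hne : I.Nonempty := ⟨i₀, hi₀⟩
  set Φ : ℝ → ℝ := fun s => I.sup' hne fun i => φ i s
  have hΦ : Continuous Φ := Continuous.finset_sup'_apply hne fun i hi =>
    hUb.isCompact_closure.continuous_diam_image (by have := hg i hi; fun_prop)
  have hΦ0 : Φ 0 = 0 := by
    have hUne : (closure U).Nonempty := ⟨x, subset_closure hx⟩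
    simp only [Φ, φ, zero_mul, add_zero, hUne.image_const, Metric.diam_singleton,
      Finset.sup'_const]
  have hΦ1 : ε ≤ Φ 1 := by
    have hφ : ε ≤ φ i₀ 1 := by
      rw [← ENNReal.ofReal_le_ofReal_iff Metric.diam_nonneg, ← hvol i₀ hi₀]
      simpa only [one_mul, add_sub_cancel, image_id'] using hεU
    exact hφ.trans (Finset.le_sup' (fun i => φ i 1) hi₀)
  obtain ⟨s, hs, hΦs⟩ := intermediate_value_Icc zero_le_one hΦ.continuousOn ⟨hΦ0.symm ▸ hε, hΦ1⟩
  refine ⟨(fun y => x + s * (y - x)) '' U, ⟨x, hx, by ring⟩, hU.image_homothety_subset hx hs,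
    hU.image_of_continuousOn (by fun_prop), fun i hi => ?_, ?_⟩
  · rw [hvol i hi s]
    exact ENNReal.ofReal_le_ofReal (hΦs ▸ Finset.le_sup' (fun i => φ i s) hi)
  · obtain ⟨j, hj, hΦj⟩ := Finset.exists_mem_eq_sup' hne fun i => φ i s
    exact ⟨j, hj, by rw [hvol j hj, ← hΦj]; exact congrArg _ hΦs⟩

end Homothety

theorem stmt_3_general (f : ℝ → ℝ) (hf : ContinuousOn f (Icc 0 1))
    (hmaps : MapsTo f (Icc 0 1) (Icc 0 1))
    (U : Set ℝ) (hU : U ⊆ Icc 0 1) (hUconn : U.OrdConnected)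
    (x : ℝ) (hx : x ∈ U) (ε : ℝ) (hε : 0 < ε) (hUε : ENNReal.ofReal ε ≤ volume U)
    (n : ℕ) :
    ∃ V : Set ℝ, x ∈ V ∧ V ⊆ U ∧ V.OrdConnected ∧
      (∀ i ≤ n, volume (f^[i] '' V) ≤ ENNReal.ofReal ε) ∧
      ∃ j ≤ n, volume (f^[j] '' V) = ENNReal.ofReal ε := by
  obtain ⟨F, hFc, hFf⟩ := hf.exists_continuous_eqOn_Icc zero_le_one
  obtain ⟨V, hxV, hVU, hV, hle, j, hj, heq⟩ :=
    exists_ordConnected_subset_volume_image_le_and_eq (Finset.range (n + 1)) (fun i => F^[i])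
      (fun i _ => hFc.iterate i) (Finset.mem_range.2 n.succ_pos)
      (Metric.isBounded_Icc 0 1 |>.subset hU) hUconn hx hε.le (by simpa using hUε)
  have himage : ∀ i, f^[i] '' V = F^[i] '' V := fun i =>
    ((hFf.symm.iterate hmaps i).mono (hVU.trans hU)).image_eq
  refine ⟨V, hxV, hVU, hV, fun i hi => ?_, j, Finset.mem_range_succ_iff.1 hj, ?_⟩
  · rw [himage]
    exact hle i (Finset.mem_range_succ_iff.2 hi)
  · rw [himage, heq]

theorem stmt_3 (f : ℝ → ℝ) (hf : ContinuousOn f (Icc 0 1))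
    (hmaps : MapsTo f (Icc 0 1) (Icc 0 1))
    (U : Set ℝ) (hU : U ⊆ Icc 0 1) (hUconn : U.OrdConnected)
    (x : ℝ) (hx : x ∈ U) (ε : ℝ) (hε : 0 < ε) (hUε : ENNReal.ofReal ε ≤ volume U)
    (n : ℕ) (hn : 0 < n) :
    ∃ V : Set ℝ, x ∈ V ∧ V ⊆ U ∧ V.OrdConnected ∧
      (∀ i ≤ n, volume (f^[i] '' V) ≤ ENNReal.ofReal ε) ∧
      ∃ j ≤ n, volume (f^[j] '' V) = ENNReal.ofReal ε :=
  stmt_3_general f hf hmaps U hU hUconn x hx ε hε hUε n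
end

section
/- A continuous map f : [0,1] → [0,1] has no wandering intervals if and only if the set Z_f = {x ∈ [0,1] : ω(x) is a periodic orbit} is dense in [0,1]. -/
open Set Function Filter

/-- ω-limit set of a point under iteration of `f`. -/
def omegaSet (f : ℝ → ℝ) (x : ℝ) : Set ℝ :=
  omegaLimit atTop (fun n : ℕ => f^[n]) {x}

/-- `ω(x)` is a cycle (periodic orbit) of `f`. -/
def TendsToCycle (f : ℝ → ℝ) (x : ℝ) : Prop :=
  ∃ p : ℝ, p ∈ Icc (0:ℝ) 1 ∧ (∃ n : ℕ, 0 < n ∧ f^[n] p = p) ∧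
    omegaSet f x = Set.range fun i : ℕ => f^[i] p

/-- `J` is a wandering interval of `f` in `[0,1]`. -/
def WanderingInterval (f : ℝ → ℝ) (J : Set ℝ) : Prop :=
  J ⊆ Icc 0 1 ∧ J.OrdConnected ∧ J.Nontrivial ∧
    (∀ m n : ℕ, m < n → Disjoint (f^[m] '' J) (f^[n] '' J)) ∧
    ∀ x ∈ J, ¬ TendsToCycle f x


open Topology

/-!
A point outside the closure of `Z_f` has a nondegenerate interval `J` around it missing `Z_f`.
If two images `f^[m] J` and `f^[n] J` (`m < n`) met, then with `p = n - m` the union of the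
`f^[p]`-images of `f^[m] J` would be a connected `f^[p]`-invariant set `L`. On `L` the map
`f^[p]` either has a fixed point, or `f^[p] t - t` has constant sign, so every `f^[p]`-orbit in
`L` is monotone and converges to a fixed point of `f^[p]`; in both cases the `f`-orbit of some
point of `J` is attracted to a cycle. Hence `J` is wandering. Conversely, density of `Z_f`
means every nondegenerate interval meets `Z_f`, so none is wandering.
-/

namespace Nat

theorem eventually_atTop_of_forall_mul_add {p : ℕ} (hp : 0 < p) {P : ℕ → Prop}
    (h : ∀ i < p, ∀ᶠ k in atTop, P (p * k + i)) : ∀ᶠ n in atTop, P n := by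
  obtain ⟨K, hK⟩ := eventually_atTop.1 <|
    (eventually_all_finset (Finset.range p)).2 fun i hi => h i (Finset.mem_range.1 hi)
  refine eventually_atTop.2 ⟨p * K, fun n hn => ?_⟩
  rw [← Nat.div_add_mod n p]
  exact hK _ ((Nat.le_div_iff_mul_le hp).2 (by linarith [mul_comm p K]))
    _ (Finset.mem_range.2 (Nat.mod_lt n hp))

end Nat

theorem Function.IsPeriodicPt.finite_range_iterate {α : Type*} {f : α → α} {p : ℕ} {x : α}
    (h : IsPeriodicPt f p x) (hp : 0 < p) : (range fun i => f^[i] x).Finite :=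
  ((finite_Iio p).image fun i => f^[i] x).subset <| by
    rintro _ ⟨i, rfl⟩
    exact ⟨i % p, Nat.mod_lt i hp, h.iterate_mod_apply i⟩

theorem exists_Icc_subset_inter_of_mem_nhds {lo hi x : ℝ} (hlohi : lo < hi) (hx : x ∈ Icc lo hi)
    {U : Set ℝ} (hU : U ∈ 𝓝 x) : ∃ a b, a < b ∧ Icc a b ⊆ Icc lo hi ∩ U := by
  obtain ⟨ε, hε, hball⟩ := Metric.mem_nhds_iff.1 hU
  refine ⟨max lo (x - ε / 2), min hi (x + ε / 2), ?_, fun t ht => ⟨?_, hball ?_⟩⟩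
  · exact max_lt (lt_min hlohi (by linarith [hx.1])) (lt_min (by linarith [hx.2]) (by linarith))
  · exact Icc_subset_Icc (le_max_left _ _) (min_le_left _ _) ht
  · have h₁ := (le_max_right _ _).trans ht.1
    have h₂ := ht.2.trans (min_le_right _ _)
    rw [Metric.mem_ball, Real.dist_eq, abs_lt]
    constructor <;> linarith

theorem exists_isFixedPt_tendsto_iterate_of_isPreconnected {g : ℝ → ℝ} {L s : Set ℝ}
    (hL : IsPreconnected L) (hLs : L ⊆ s) (hs : IsCompact s) (hg : ContinuousOn g s)
    (hgL : MapsTo g L L) (hfix : ∀ t ∈ L, g t ≠ t) {x : ℝ} (hx : x ∈ L) :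
    ∃ ℓ ∈ s, IsFixedPt g ℓ ∧ Tendsto (fun k => g^[k] x) atTop (𝓝 ℓ) := by
  have horbit : ∀ k, g^[k] x ∈ L := fun k => hgL.iterate k hx
  have hbdd : range (fun k => g^[k] x) ⊆ s := range_subset_iff.2 fun k => hLs (horbit k)
  -- `g - id` does not vanish on the preconnected set `L`, so it has constant sign there.
  have hsign := (hL.image _ ((hg.sub continuousOn_id).mono hLs)).subset_or_subset
    isOpen_Ioi isOpen_Iio Ioi_disjoint_Iio_same (by
      rintro _ ⟨t, ht, rfl⟩
      exact (sub_ne_zero.2 (hfix t ht)).lt_or_gt.symm)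
  have hstep : ∀ k, g^[k + 1] x - g^[k] x ∈ (fun t => g t - t) '' L := fun k =>
    ⟨_, horbit k, by rw [iterate_succ_apply']⟩
  obtain ⟨ℓ, hlim⟩ : ∃ ℓ, Tendsto (fun k => g^[k] x) atTop (𝓝 ℓ) := by
    rcases hsign with hup | hdown
    · exact ⟨_, tendsto_atTop_ciSup (monotone_nat_of_le_succ fun k =>
        sub_nonneg.1 (hup (hstep k)).le) (hs.bddAbove.mono hbdd)⟩
    · exact ⟨_, tendsto_atTop_ciInf (antitone_nat_of_succ_le fun k =>
        sub_nonpos.1 (hdown (hstep k)).le) (hs.bddBelow.mono hbdd)⟩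
  have hℓ : ℓ ∈ s := hs.isClosed.mem_of_tendsto hlim (Eventually.of_forall fun k => hbdd ⟨k, rfl⟩)
  refine ⟨ℓ, hℓ, tendsto_nhds_unique ?_ ((tendsto_add_atTop_iff_nat 1).2 hlim), hlim⟩
  simp only [iterate_succ_apply']
  exact (hg ℓ hℓ).tendsto.comp
    (tendsto_nhdsWithin_iff.2 ⟨hlim, Eventually.of_forall fun k => hbdd ⟨k, rfl⟩⟩)

theorem omegaSet_iterate (f : ℝ → ℝ) (x : ℝ) (m : ℕ) :
    omegaSet f (f^[m] x) = omegaSet f x := by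
  ext z
  simp only [omegaSet, mem_omegaLimit_singleton_iff_mapClusterPt, ← iterate_add_apply]
  change MapClusterPt z atTop ((fun n => f^[n] x) ∘ (· + m)) ↔ _
  rw [mapClusterPt_comp, map_add_atTop_eq_nat]

theorem tendsToCycle_iterate_iff (f : ℝ → ℝ) (x : ℝ) (m : ℕ) :
    TendsToCycle f (f^[m] x) ↔ TendsToCycle f x := by
  simp only [TendsToCycle, omegaSet_iterate]

section IntervalMap

variable {f : ℝ → ℝ}

theorem tendsToCycle_of_tendsto_iterate_mul (hf : ContinuousOn f (Icc 0 1))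
    (hmaps : MapsTo f (Icc 0 1) (Icc 0 1)) {x ℓ : ℝ} {p : ℕ} (hx : x ∈ Icc (0:ℝ) 1) (hp : 0 < p)
    (hℓ : ℓ ∈ Icc (0:ℝ) 1) (hper : IsPeriodicPt f p ℓ)
    (hlim : Tendsto (fun k => f^[p * k] x) atTop (𝓝 ℓ)) : TendsToCycle f x := by
  have hsub : ∀ i, Tendsto (fun k => f^[p * k + i] x) atTop (𝓝 (f^[i] ℓ)) := fun i => by
    simp only [add_comm _ i, iterate_add_apply]
    exact (hf.iterate hmaps i ℓ hℓ).tendsto.comp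
      (tendsto_nhdsWithin_iff.2 ⟨hlim, Eventually.of_forall fun k => hmaps.iterate _ hx⟩)
  refine ⟨ℓ, hℓ, ⟨p, hp, hper⟩, Subset.antisymm (fun z hz => ?_) ?_⟩
  · rw [omegaSet, mem_omegaLimit_singleton_iff_mapClusterPt] at hz
    have hnear : Tendsto (fun n => f^[n] x) atTop (𝓝ˢ (range fun i => f^[i] ℓ)) :=
      fun U hU => Nat.eventually_atTop_of_forall_mul_add hp fun i _ =>
        hsub i (mem_nhdsSet_iff_forall.1 hU _ ⟨i, rfl⟩)
    by_contra hzO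
    rw [← (hper.finite_range_iterate hp).isClosed.closure_eq, ← disjoint_nhds_nhdsSet] at hzO
    exact clusterPt_iff_not_disjoint.1 (hz.clusterPt.mono hnear) hzO
  · rintro _ ⟨i, rfl⟩
    rw [omegaSet, mem_omegaLimit_singleton_iff_mapClusterPt]
    exact (hsub i).mapClusterPt.of_comp
      ((tendsto_add_atTop_nat i).comp (tendsto_id.const_mul_atTop' hp))

theorem tendsToCycle_of_isPeriodicPt (hf : ContinuousOn f (Icc 0 1))
    (hmaps : MapsTo f (Icc 0 1) (Icc 0 1)) {x : ℝ} {p : ℕ} (hx : x ∈ Icc (0:ℝ) 1) (hp : 0 < p)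
    (hper : IsPeriodicPt f p x) : TendsToCycle f x :=
  tendsToCycle_of_tendsto_iterate_mul hf hmaps hx hp hx hper <|
    tendsto_const_nhds.congr fun k => (hper.mul_const k).eq.symm

theorem exists_tendsToCycle_of_mapsTo_iterate (hf : ContinuousOn f (Icc 0 1))
    (hmaps : MapsTo f (Icc 0 1) (Icc 0 1)) {L : Set ℝ} (hL : IsPreconnected L)
    (hL01 : L ⊆ Icc 0 1) (hne : L.Nonempty) {p : ℕ} (hp : 0 < p) (hpL : MapsTo f^[p] L L) :
    ∃ x ∈ L, TendsToCycle f x := by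
  obtain ⟨x, hx⟩ := hne
  by_cases hfix : ∃ t ∈ L, f^[p] t = t
  · obtain ⟨t, ht, hper⟩ := hfix
    exact ⟨t, ht, tendsToCycle_of_isPeriodicPt hf hmaps (hL01 ht) hp hper⟩
  push Not at hfix
  obtain ⟨ℓ, hℓ, hfixℓ, hlim⟩ := exists_isFixedPt_tendsto_iterate_of_isPreconnected hL hL01
    isCompact_Icc (hf.iterate hmaps p) hpL hfix hx
  refine ⟨x, hx, tendsToCycle_of_tendsto_iterate_mul hf hmaps (hL01 hx) hp hℓ hfixℓ ?_⟩
  simpa only [iterate_mul] using hlim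

theorem disjoint_image_iterate_of_forall_not_tendsToCycle (hf : ContinuousOn f (Icc 0 1))
    (hmaps : MapsTo f (Icc 0 1) (Icc 0 1)) {J : Set ℝ} (hJ01 : J ⊆ Icc 0 1)
    (hJ : IsPreconnected J) (hJZ : ∀ x ∈ J, ¬TendsToCycle f x) {m n : ℕ} (hmn : m < n) :
    Disjoint (f^[m] '' J) (f^[n] '' J) := by
  refine Set.disjoint_left.2 ?_
  rintro w ⟨y₀, hy₀, hwy₀⟩ ⟨z₀, hz₀, hwz₀⟩
  obtain ⟨p, hp, rfl⟩ : ∃ p, 0 < p ∧ n = p + m := ⟨n - m, by omega, by omega⟩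
  -- `P k = f^[p * k] '' (f^[m] '' J)`; consecutive pieces meet, so their union is connected.
  set P : ℕ → Set ℝ := fun k => f^[p * k + m] '' J
  have hmeet : ∀ k, f^[p * k] w ∈ P k ∩ P (k + 1) := fun k =>
    ⟨⟨y₀, hy₀, by rw [iterate_add_apply, hwy₀]⟩,
      ⟨z₀, hz₀, by rw [show p * (k + 1) + m = p * k + (p + m) by ring, iterate_add_apply, hwz₀]⟩⟩
  have hL : IsPreconnected (⋃ k, P k) :=
    .iUnion_of_chain (fun k => hJ.image _ ((hf.iterate hmaps _).mono hJ01)) fun k => ⟨_, hmeet k⟩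
  have hL01 : (⋃ k, P k) ⊆ Icc 0 1 :=
    iUnion_subset fun k => ((hmaps.iterate _).mono_left hJ01).image_subset
  have hpL : MapsTo f^[p] (⋃ k, P k) (⋃ k, P k) := by
    rintro _ ⟨_, ⟨k, rfl⟩, y, hy, rfl⟩
    refine mem_iUnion.2 ⟨k + 1, y, hy, ?_⟩
    rw [← iterate_add_apply]
    congr 1
    ring
  obtain ⟨_, ⟨_, ⟨k, rfl⟩, y, hy, rfl⟩, hcyc⟩ :=
    exists_tendsToCycle_of_mapsTo_iterate hf hmaps hL hL01 ⟨_, mem_iUnion.2 ⟨0, (hmeet 0).1⟩⟩ hp hpL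
  exact hJZ y hy ((tendsToCycle_iterate_iff f y _).1 hcyc)

end IntervalMap

theorem stmt_4 (f : ℝ → ℝ) (hf : ContinuousOn f (Icc 0 1))
    (hmaps : MapsTo f (Icc 0 1) (Icc 0 1)) :
    (∀ J : Set ℝ, ¬ WanderingInterval f J) ↔
      Icc (0:ℝ) 1 ⊆ closure {x ∈ Icc (0:ℝ) 1 | TendsToCycle f x} := by
  constructor
  · intro hnw x₀ hx₀
    by_contra hx₀Z
    obtain ⟨a, b, hab, hJ⟩ := exists_Icc_subset_inter_of_mem_nhds one_pos hx₀
      (isClosed_closure.isOpen_compl.mem_nhds hx₀Z)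
    have hJZ : ∀ x ∈ Icc a b, ¬TendsToCycle f x := fun x hx hcyc =>
      (hJ hx).2 (subset_closure ⟨(hJ hx).1, hcyc⟩)
    exact hnw (Icc a b) ⟨fun x hx => (hJ hx).1, ordConnected_Icc,
      ⟨a, left_mem_Icc.2 hab.le, b, right_mem_Icc.2 hab.le, hab.ne⟩,
      fun m n => disjoint_image_iterate_of_forall_not_tendsToCycle hf hmaps
        (fun x hx => (hJ hx).1) isPreconnected_Icc hJZ, hJZ⟩
  · rintro hdense J ⟨hJ01, hJ, ⟨u, hu, v, hv, huv⟩, -, hJZ⟩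
    have hI : Ioo (min u v) (max u v) ⊆ J := Ioo_subset_Icc_self.trans (hJ.uIcc_subset hu hv)
    obtain ⟨c, hc⟩ := nonempty_Ioo.2 (min_lt_max.2 huv)
    obtain ⟨z, hzI, -, hz⟩ := mem_closure_iff.1 (hdense (hJ01 (hI hc))) _ isOpen_Ioo hc
    exact hJZ z (hI hzI) hz
end

section
/- Let f : [0,1] → [0,1] be a continuous transitive map, let x ∈ (0,1) be a fixed point of f, and let η > 0. Then there exists y ∈ (x, x+η) with f^2(y) > y, or there exists y ∈ (x−η, x) with f^2(y) < y. -/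
open Set Function

/-- Topological transitivity of `f` on `[0,1]` (relative topology). -/
def TransitiveOnI (f : ℝ → ℝ) : Prop :=
  ∀ U V : Set ℝ, IsOpen U → IsOpen V → (U ∩ Icc 0 1).Nonempty →
    (V ∩ Icc 0 1).Nonempty → ∃ n : ℕ, (f^[n] '' (U ∩ Icc 0 1) ∩ V).Nonempty

/-- Auxiliary: a value at the boundary of an open interval where `f` lands in a
closed interval also lands there, by continuity. -/
lemma stmt5_closed_limit {f : ℝ → ℝ} (hf : ContinuousOn f (Icc 0 1))
    {p q A B z : ℝ} (hpq : p < q) (hsub : Icc p q ⊆ Icc (0:ℝ) 1)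
    (hz : z ∈ Icc p q) (h : ∀ t ∈ Ioo p q, f t ∈ Icc A B) :
    f z ∈ Icc A B := by
  rcases lt_or_ge p z with hpz | hzp
  · rcases lt_or_ge z q with hzq | hqz
    · exact h z ⟨hpz, hzq⟩
    · -- z = q case (z ≥ q and z ≤ q)
      have hz01 : z ∈ Icc (0:ℝ) 1 := hsub hz
      have hcw : ContinuousWithinAt f (Ioo p q) z :=
        (hf z hz01).mono (Ioo_subset_Icc_self.trans hsub)
      have hne : (nhdsWithin z (Ioo p q)).NeBot := by
        apply mem_closure_iff_nhdsWithin_neBot.mp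
        rw [closure_Ioo hpq.ne]
        exact hz
      exact isClosed_Icc.mem_of_tendsto hcw
        (Filter.eventually_of_mem self_mem_nhdsWithin h)
  · -- z = p case
    have hz01 : z ∈ Icc (0:ℝ) 1 := hsub hz
    have hcw : ContinuousWithinAt f (Ioo p q) z :=
      (hf z hz01).mono (Ioo_subset_Icc_self.trans hsub)
    have hne : (nhdsWithin z (Ioo p q)).NeBot := by
      apply mem_closure_iff_nhdsWithin_neBot.mp
      rw [closure_Ioo hpq.ne]
      exact hz
    exact isClosed_Icc.mem_of_tendsto hcw
      (Filter.eventually_of_mem self_mem_nhdsWithin h)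

lemma stmt5_maps_of_interior {f : ℝ → ℝ} (hf : ContinuousOn f (Icc 0 1))
    {p q : ℝ} (hpq : p < q) (hsub : Icc p q ⊆ Icc (0:ℝ) 1)
    (h : ∀ t ∈ Ioo p q, f t ∈ Icc p q) : MapsTo f (Icc p q) (Icc p q) :=
  fun _ hz => stmt5_closed_limit hf hpq hsub hz h

lemma stmt5_no_invariant {f : ℝ → ℝ} (htrans : TransitiveOnI f)
    {p q x : ℝ} (hp : 0 < p) (hpx : p < x) (hxq : x < q) (hq : q < 1)
    (hmapsI : MapsTo f (Icc p q) (Icc p q)) : False := by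
  obtain ⟨n, z, hz⟩ := htrans (Ioo p q) (Ioi q) isOpen_Ioo isOpen_Ioi
    ⟨x, ⟨hpx, hxq⟩, ⟨by linarith, by linarith⟩⟩
    ⟨1, hq, ⟨by norm_num, le_refl 1⟩⟩
  obtain ⟨⟨w, hw, rfl⟩, hzq⟩ := hz
  have hmem : f^[n] w ∈ Icc p q := (hmapsI.iterate n) (Ioo_subset_Icc_self hw.1)
  have : f^[n] w ≤ q := hmem.2
  exact absurd hzq (by simpa using this.not_gt)

theorem stmt_5 (f : ℝ → ℝ) (hf : ContinuousOn f (Icc 0 1))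
    (hmaps : MapsTo f (Icc 0 1) (Icc 0 1)) (htrans : TransitiveOnI f)
    (x : ℝ) (hx : x ∈ Ioo (0:ℝ) 1) (hfix : f x = x) (η : ℝ) (hη : 0 < η) :
    (∃ y ∈ Ioo x (x + η), y < f (f y)) ∨ (∃ y ∈ Ioo (x - η) x, f (f y) < y) := by
  by_contra hcon
  push_neg at hcon
  obtain ⟨h1, h2⟩ := hcon
  obtain ⟨hx0, hx1⟩ := hx
  have hmin : 0 < min η (min x (1 - x)) := lt_min hη (lt_min hx0 (by linarith))
  set η₀ : ℝ := min η (min x (1 - x)) / 2 with hη₀def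
  have hm1 : min η (min x (1 - x)) ≤ η := min_le_left _ _
  have hm2 : min η (min x (1 - x)) ≤ x := (min_le_right _ _).trans (min_le_left _ _)
  have hm3 : min η (min x (1 - x)) ≤ 1 - x := (min_le_right _ _).trans (min_le_right _ _)
  have hη₀pos : 0 < η₀ := by rw [hη₀def]; linarith
  have hη₀η : η₀ ≤ η := by rw [hη₀def]; linarith
  have hη₀x : η₀ < x := by rw [hη₀def]; linarith
  have hη₀1x : x + η₀ < 1 := by rw [hη₀def]; linarith
  set a : ℝ := x - η₀ with hadef
  set b : ℝ := x + η₀ with hbdef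
  have ha0 : 0 < a := by rw [hadef]; linarith
  have hax : a < x := by rw [hadef]; linarith
  have hxb : x < b := by rw [hbdef]; linarith
  have hb1 : b < 1 := by rw [hbdef]; linarith
  have haη : x - η ≤ a := by rw [hadef]; linarith
  have hbη : b ≤ x + η := by rw [hbdef]; linarith
  -- C1 : f ≤ id on (x, b)
  have hC1 : ∀ w ∈ Ioo x b, f w ≤ w := by
    intro w hw
    by_contra hfw
    push_neg at hfw
    have hsub : Icc x w ⊆ Icc (0:ℝ) 1 := fun t ht =>
      ⟨by linarith [ht.1], by linarith [ht.2, hw.2]⟩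
    have hivt := intermediate_value_Icc hw.1.le (hf.mono hsub)
    have hwmem : w ∈ Icc (f x) (f w) := by rw [hfix]; exact ⟨hw.1.le, hfw.le⟩
    obtain ⟨v, hv, hfv⟩ := hivt hwmem
    have hvx : x < v := by
      rcases eq_or_lt_of_le hv.1 with h | h
      · exfalso; rw [← h, hfix] at hfv; exact (ne_of_lt hw.1) hfv
      · exact h
    have hvb : v < x + η := by linarith [hv.2, hw.2]
    have hh := h1 v ⟨hvx, hvb⟩
    rw [hfv] at hh
    linarith [hv.2]
  -- C2 : f ≥ id on (a, x)
  have hC2 : ∀ w ∈ Ioo a x, w ≤ f w := by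
    intro w hw
    by_contra hfw
    push_neg at hfw
    have hsub : Icc w x ⊆ Icc (0:ℝ) 1 := fun t ht =>
      ⟨by linarith [ht.1, hw.1], by linarith [ht.2]⟩
    have hivt := intermediate_value_Icc hw.2.le (hf.mono hsub)
    have hwmem : w ∈ Icc (f w) (f x) := by rw [hfix]; exact ⟨hfw.le, hw.2.le⟩
    obtain ⟨v, hv, hfv⟩ := hivt hwmem
    have hvx : v < x := by
      rcases eq_or_lt_of_le hv.2 with h | h
      · exfalso; rw [h, hfix] at hfv; exact (ne_of_gt hw.2) hfv
      · exact h
    have hva : x - η < v := by linarith [hv.1, hw.1]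
    have hh := h2 v ⟨hva, hvx⟩
    rw [hfv] at hh
    linarith [hv.1]
  by_cases hD : ∃ t ∈ Ioo x b, f t < a
  · -- some right point dives below a : build invariant [a, σ]
    obtain ⟨tR, htR, hftR⟩ := hD
    set S : Set ℝ := Icc x tR ∩ f ⁻¹' (Iic a) with hSdef
    have hsubR : Icc x tR ⊆ Icc (0:ℝ) 1 := fun t ht =>
      ⟨by linarith [ht.1], by linarith [ht.2, htR.2]⟩
    have hSclosed : IsClosed S :=
      ContinuousOn.preimage_isClosed_of_isClosed (hf.mono hsubR) isClosed_Icc isClosed_Iic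
    have hSne : S.Nonempty := ⟨tR, ⟨htR.1.le, le_refl _⟩, hftR.le⟩
    have hSbdd : BddBelow S := ⟨x, fun s hs => hs.1.1⟩
    set σ : ℝ := sInf S with hσdef
    have hσS : σ ∈ S := hSclosed.csInf_mem hSne hSbdd
    have hσx : x ≤ σ := hσS.1.1
    have hσtR : σ ≤ tR := hσS.1.2
    have hfσ : f σ ≤ a := hσS.2
    have hxσ : x < σ := by
      rcases eq_or_lt_of_le hσx with h | h
      · exfalso; rw [← h, hfix] at hfσ; linarith
      · exact h
    have hminσ : ∀ t ∈ Ico x σ, a < f t := by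
      intro t ht
      by_contra hc; push_neg at hc
      have htS : t ∈ S := ⟨⟨ht.1, le_trans ht.2.le hσtR⟩, hc⟩
      have := csInf_le hSbdd htS
      linarith [ht.2]
    have hC9 : ∀ t ∈ Ioo a x, f t ≤ σ := by
      intro t ht
      by_contra hc; push_neg at hc
      have hsub' : Icc t x ⊆ Icc (0:ℝ) 1 := fun s hs =>
        ⟨by linarith [hs.1, ht.1], by linarith [hs.2]⟩
      have hivt := intermediate_value_Icc' ht.2.le (hf.mono hsub')
      have hmem : σ ∈ Icc (f x) (f t) := by rw [hfix]; exact ⟨hxσ.le, hc.le⟩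
      obtain ⟨v, hv, hfv⟩ := hivt hmem
      have hvx : v < x := by
        rcases eq_or_lt_of_le hv.2 with h | h
        · exfalso; rw [h, hfix] at hfv; linarith
        · exact h
      have hh := h2 v ⟨by linarith [hv.1, ht.1], hvx⟩
      rw [hfv] at hh
      linarith [hv.1, ht.1]
    have hint : ∀ t ∈ Ioo a σ, f t ∈ Icc a σ := by
      intro t ht
      rcases lt_trichotomy t x with h | h | h
      · exact ⟨by linarith [hC2 t ⟨ht.1, h⟩, ht.1], hC9 t ⟨ht.1, h⟩⟩
      · rw [h, hfix]; exact ⟨hax.le, hxσ.le⟩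
      · constructor
        · linarith [hminσ t ⟨h.le, ht.2⟩]
        · linarith [hC1 t ⟨h, by linarith [ht.2, hσtR, htR.2]⟩, ht.2]
    exact stmt5_no_invariant htrans ha0 hax hxσ (by linarith [htR.2])
      (stmt5_maps_of_interior hf (by linarith)
        (fun s hs => ⟨by linarith [hs.1], by linarith [hs.2, htR.2]⟩) hint)
  · by_cases hE : ∃ t ∈ Ioo a x, b < f t
    · -- some left point jumps above b : build invariant [σ, b]
      obtain ⟨tL, htL, hftL⟩ := hE
      set S : Set ℝ := Icc tL x ∩ f ⁻¹' (Ici b) with hSdef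
      have hsubL : Icc tL x ⊆ Icc (0:ℝ) 1 := fun t ht =>
        ⟨by linarith [ht.1, htL.1], by linarith [ht.2]⟩
      have hSclosed : IsClosed S :=
        ContinuousOn.preimage_isClosed_of_isClosed (hf.mono hsubL) isClosed_Icc isClosed_Ici
      have hSne : S.Nonempty := ⟨tL, ⟨le_refl _, htL.2.le⟩, hftL.le⟩
      have hSbdd : BddAbove S := ⟨x, fun s hs => hs.1.2⟩
      set σ : ℝ := sSup S with hσdef
      have hσS : σ ∈ S := hSclosed.csSup_mem hSne hSbdd
      have hσx : σ ≤ x := hσS.1.2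
      have htLσ : tL ≤ σ := hσS.1.1
      have hfσ : b ≤ f σ := hσS.2
      have hσltx : σ < x := by
        rcases eq_or_lt_of_le hσx with h | h
        · exfalso; rw [h, hfix] at hfσ; linarith
        · exact h
      have hminσ : ∀ t ∈ Ioc σ x, f t < b := by
        intro t ht
        by_contra hc; push_neg at hc
        have htS : t ∈ S := ⟨⟨le_trans htLσ ht.1.le, ht.2⟩, hc⟩
        have := le_csSup hSbdd htS
        linarith [ht.1]
      have hC9 : ∀ t ∈ Ioo x b, σ ≤ f t := by
        intro t ht
        by_contra hc; push_neg at hc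
        have hsub' : Icc x t ⊆ Icc (0:ℝ) 1 := fun s hs =>
          ⟨by linarith [hs.1], by linarith [hs.2, ht.2]⟩
        have hivt := intermediate_value_Icc' ht.1.le (hf.mono hsub')
        have hmem : σ ∈ Icc (f t) (f x) := by rw [hfix]; exact ⟨hc.le, hσltx.le⟩
        obtain ⟨v, hv, hfv⟩ := hivt hmem
        have hvx : x < v := by
          rcases eq_or_lt_of_le hv.1 with h | h
          · exfalso; rw [← h, hfix] at hfv; linarith
          · exact h
        have hh := h1 v ⟨hvx, by linarith [hv.2, ht.2]⟩
        rw [hfv] at hh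
        linarith [hv.2, ht.2]
      have hint : ∀ t ∈ Ioo σ b, f t ∈ Icc σ b := by
        intro t ht
        rcases lt_trichotomy t x with h | h | h
        · constructor
          · linarith [hC2 t ⟨by linarith [ht.1, htLσ, htL.1], h⟩, ht.1]
          · linarith [hminσ t ⟨ht.1, h.le⟩]
        · rw [h, hfix]; exact ⟨hσltx.le, hxb.le⟩
        · exact ⟨hC9 t ⟨h, ht.2⟩, by linarith [hC1 t ⟨h, ht.2⟩, ht.2]⟩
      exact stmt5_no_invariant htrans (by linarith [htLσ, htL.1]) hσltx hxb hb1
        (stmt5_maps_of_interior hf (by linarith)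
          (fun s hs => ⟨by linarith [hs.1, htLσ, htL.1], by linarith [hs.2]⟩) hint)
    · -- neither : [a, b] itself is invariant
      push_neg at hD hE
      have hint : ∀ t ∈ Ioo a b, f t ∈ Icc a b := by
        intro t ht
        rcases lt_trichotomy t x with h | h | h
        · exact ⟨by linarith [hC2 t ⟨ht.1, h⟩, ht.1], hE t ⟨ht.1, h⟩⟩
        · rw [h, hfix]; exact ⟨hax.le, hxb.le⟩
        · exact ⟨hD t ⟨h, ht.2⟩, by linarith [hC1 t ⟨h, ht.2⟩, ht.2]⟩
      exact stmt5_no_invariant htrans ha0 hax hxb hb1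
        (stmt5_maps_of_interior hf (by linarith)
          (fun s hs => ⟨by linarith [hs.1], by linarith [hs.2]⟩) hint)
end

section
/- Let f : [0,1] → [0,1] be a continuous transitive map. Then f has a fixed point in the open interval (0,1). -/
open Set Function Topology Filter

theorem stmt_6 (f : ℝ → ℝ) (hf : ContinuousOn f (Icc 0 1))
    (hmaps : MapsTo f (Icc 0 1) (Icc 0 1)) (htrans : TransitiveOnI f) :
    ∃ x ∈ Ioo (0:ℝ) 1, f x = x := by
  by_contra h
  push_neg at h
  have hIccsub : Ioo (0:ℝ) 1 ⊆ Icc 0 1 := Ioo_subset_Icc_self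
  -- f x - x has constant sign on (0,1)
  have hsign : (∀ x ∈ Ioo (0:ℝ) 1, x < f x) ∨ (∀ x ∈ Ioo (0:ℝ) 1, f x < x) := by
    by_contra hc
    push_neg at hc
    obtain ⟨⟨a, ha, hfa⟩, ⟨b, hb, hfb⟩⟩ := hc
    have hfa' : f a < a := lt_of_le_of_ne hfa (h a ha)
    have hfb' : b < f b := lt_of_le_of_ne hfb fun e => (h b hb) e.symm
    have hsub : uIcc a b ⊆ Ioo (0:ℝ) 1 := (ordConnected_Ioo).uIcc_subset ha hb
    have hcont : ContinuousOn (fun x => f x - x) (uIcc a b) :=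
      ((hf.mono (hsub.trans hIccsub)).sub continuousOn_id)
    have h0 : (0:ℝ) ∈ uIcc (f a - a) (f b - b) := by
      rw [mem_uIcc]
      left
      constructor <;> linarith
    obtain ⟨c, hc', hc0⟩ := intermediate_value_uIcc hcont h0
    exact h c (hsub hc') (by linarith [sub_eq_zero.mp hc0])
  rcases hsign with hup | hdn
  · -- f x > x on (0,1): then f 1 = 1 and (1/2,1] is invariant
    have h1mem : (1:ℝ) ∈ Icc (0:ℝ) 1 := by norm_num
    have hf1 : f 1 = 1 := by
      have hle : f 1 ≤ 1 := (hmaps h1mem).2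
      have hne : (𝓝[Ioo (0:ℝ) 1] 1).NeBot := by
        rw [← mem_closure_iff_nhdsWithin_neBot, closure_Ioo (zero_ne_one)]
        exact h1mem
      have htf : Filter.Tendsto f (𝓝[Ioo (0:ℝ) 1] 1) (𝓝 (f 1)) :=
        (hf.continuousWithinAt h1mem).mono_left (nhdsWithin_mono _ hIccsub)
      have hti : Filter.Tendsto (fun x : ℝ => x) (𝓝[Ioo (0:ℝ) 1] 1) (𝓝 1) :=
        tendsto_id.mono_left nhdsWithin_le_nhds
      have hge : (1:ℝ) ≤ f 1 :=
        le_of_tendsto_of_tendsto hti htf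
          (Filter.eventually_of_mem self_mem_nhdsWithin fun x hx => (hup x hx).le)
      linarith
    have hinv : ∀ x ∈ Ioc (1/2:ℝ) 1, f x ∈ Ioc (1/2:ℝ) 1 := by
      intro x hx
      rcases eq_or_lt_of_le hx.2 with heq | hlt
      · rw [heq, hf1]; exact ⟨by norm_num, le_rfl⟩
      · have hx' : x ∈ Ioo (0:ℝ) 1 := ⟨by linarith [hx.1], hlt⟩
        exact ⟨lt_trans hx.1 (hup x hx'), (hmaps ⟨by linarith [hx.1], hx.2⟩).2⟩
    have hiter : ∀ n, ∀ x ∈ Ioc (1/2:ℝ) 1, f^[n] x ∈ Ioc (1/2:ℝ) 1 := by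
      intro n
      induction n with
      | zero => intro x hx; simpa using hx
      | succ k ih => intro x hx; rw [iterate_succ_apply]; exact ih _ (hinv x hx)
    obtain ⟨n, y, ⟨x, hxU, hxy⟩, hyV⟩ := htrans (Ioi (1/2)) (Iio (1/2)) isOpen_Ioi isOpen_Iio
      ⟨3/4, by norm_num, by norm_num [mem_Icc]⟩ ⟨1/4, by norm_num, by norm_num [mem_Icc]⟩
    have hmem : f^[n] x ∈ Ioc (1/2:ℝ) 1 := hiter n x ⟨hxU.1, hxU.2.2⟩
    rw [hxy] at hmem
    exact absurd hyV (not_lt.2 hmem.1.le)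
  · -- f x < x on (0,1): then f 0 = 0 and [0,1/2) is invariant
    have h0mem : (0:ℝ) ∈ Icc (0:ℝ) 1 := by norm_num
    have hf0 : f 0 = 0 := by
      have hge : 0 ≤ f 0 := (hmaps h0mem).1
      have hne : (𝓝[Ioo (0:ℝ) 1] 0).NeBot := by
        rw [← mem_closure_iff_nhdsWithin_neBot, closure_Ioo (zero_ne_one)]
        exact h0mem
      have htf : Filter.Tendsto f (𝓝[Ioo (0:ℝ) 1] 0) (𝓝 (f 0)) :=
        (hf.continuousWithinAt h0mem).mono_left (nhdsWithin_mono _ hIccsub)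
      have hti : Filter.Tendsto (fun x : ℝ => x) (𝓝[Ioo (0:ℝ) 1] 0) (𝓝 0) :=
        tendsto_id.mono_left nhdsWithin_le_nhds
      have hle : f 0 ≤ 0 :=
        le_of_tendsto_of_tendsto htf hti
          (Filter.eventually_of_mem self_mem_nhdsWithin fun x hx => (hdn x hx).le)
      linarith
    have hinv : ∀ x ∈ Ico (0:ℝ) (1/2), f x ∈ Ico (0:ℝ) (1/2) := by
      intro x hx
      rcases eq_or_lt_of_le hx.1 with heq | hlt
      · rw [← heq, hf0]; exact ⟨le_rfl, by norm_num⟩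
      · have hx' : x ∈ Ioo (0:ℝ) 1 := ⟨hlt, by linarith [hx.2]⟩
        exact ⟨(hmaps ⟨hx.1, by linarith [hx.2]⟩).1, lt_trans (hdn x hx') hx.2⟩
    have hiter : ∀ n, ∀ x ∈ Ico (0:ℝ) (1/2), f^[n] x ∈ Ico (0:ℝ) (1/2) := by
      intro n
      induction n with
      | zero => intro x hx; simpa using hx
      | succ k ih => intro x hx; rw [iterate_succ_apply]; exact ih _ (hinv x hx)
    obtain ⟨n, y, ⟨x, hxU, hxy⟩, hyV⟩ := htrans (Iio (1/2)) (Ioi (1/2)) isOpen_Iio isOpen_Ioi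
      ⟨1/4, by norm_num, by norm_num [mem_Icc]⟩ ⟨3/4, by norm_num, by norm_num [mem_Icc]⟩
    have hmem : f^[n] x ∈ Ico (0:ℝ) (1/2) := hiter n x ⟨hxU.2.1, hxU.1⟩
    rw [hxy] at hmem
    exact absurd hyV (not_lt.2 hmem.2.le)
end

section
/- Let f : [0,1] → [0,1] be a continuous transitive map. Then either (1) f is topologically mixing, or (2) there exists a fixed point a ∈ (0,1) such that f([0,a]) = [a,1], f([a,1]) = [0,a], and both f^2 restricted to [0,a] and f^2 restricted to [a,1] are topologically mixing. In either case the periodic points of f are dense in [0,1]. -/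
open Set Function

/-- Topological transitivity of `g` on the set `S` (relative topology). -/
def TransitiveOnS (g : ℝ → ℝ) (S : Set ℝ) : Prop :=
  ∀ U V : Set ℝ, IsOpen U → IsOpen V → (U ∩ S).Nonempty → (V ∩ S).Nonempty →
    ∃ n : ℕ, (g^[n] '' (U ∩ S) ∩ V).Nonempty

/-- Topological mixing of `g` on the set `S` (relative topology). -/
def MixingOnS (g : ℝ → ℝ) (S : Set ℝ) : Prop :=
  ∀ U V : Set ℝ, IsOpen U → IsOpen V → (U ∩ S).Nonempty → (V ∩ S).Nonempty →
    ∃ N : ℕ, ∀ n ≥ N, (g^[n] '' (U ∩ S) ∩ V).Nonempty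

/-!
Periodic points are dense: on a subinterval without periodic points every iterate moves all its
points in one direction, while orbits crossing it in both directions make a common iterate move
points both ways. Hence images of nondegenerate intervals stay nondegenerate, and `g` is onto.

Fix a nondegenerate interval `J`. If some `g^[m] '' J` contains a fixed point `c`, it contains an
interval `A = uIcc a c` with `a` interior. When two consecutive images of `A` overlap in more than
`c`, the overlap expands back over `A`, so `A` returns to itself at two consecutive times, hence at
all large times, and the images of `J` eventually contain every interior point. Otherwise the
images of `A` alternate between the two sides of `c`. If no image of `J` contains a fixed point,
then a fixed point `c` between the extremes of a periodic orbit meeting `J` is avoided by all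
images, which therefore stay on the side of `c` prescribed by the orbit. In both cases, grouping
the images along the period and taking closures shows that `g` exchanges `[u, c]` and `[c, v]`,
since an invariant half would contradict transitivity. So `g` is mixing unless it exchanges two
halves.

In that case `g ∘ g` is transitive on `[u, c]`, because odd iterates land in the other half; it
cannot exchange two halves of `[u, c]` since the endpoint `c` is fixed, so it is mixing there, and
`g` carries this over to `[c, v]`.
-/

open Filter

theorem exists_Icc_subset_of_isOpen {u v : ℝ} (huv : u < v) {U : Set ℝ} (hU : IsOpen U)
    (hUI : (U ∩ Icc u v).Nonempty) : ∃ s t, u < s ∧ s < t ∧ t < v ∧ Icc s t ⊆ U := by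
  obtain ⟨x, hxU, hxI⟩ := hUI
  rw [← closure_Ioo huv.ne] at hxI
  obtain ⟨y, hyU, hy⟩ := mem_closure_iff.1 hxI U hU hxU
  obtain ⟨ε, hε, hball⟩ := Metric.isOpen_iff.1 (hU.inter isOpen_Ioo) y ⟨hyU, hy⟩
  have hsub : Icc (y - ε / 2) (y + ε / 2) ⊆ U ∩ Ioo u v := by
    rw [← Real.closedBall_eq_Icc]
    exact (Metric.closedBall_subset_ball (half_lt_self hε)).trans hball
  exact ⟨y - ε / 2, y + ε / 2, (hsub (left_mem_Icc.2 (by linarith))).2.1, by linarith,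
    (hsub (right_mem_Icc.2 (by linarith))).2.2, hsub.trans inter_subset_left⟩

theorem lt_apply_iff_of_forall_ne {s : Set ℝ} (hs : IsPreconnected s) {φ : ℝ → ℝ}
    (hφ : ContinuousOn φ s) (hne : ∀ z ∈ s, φ z ≠ z) {x y : ℝ} (hx : x ∈ s) (hy : y ∈ s) :
    x < φ x ↔ y < φ y := by
  have key : ∀ {x y}, x ∈ s → y ∈ s → x < φ x → y < φ y := by
    intro x y hx hy hlt
    by_contra hle
    obtain ⟨z, hz, hfix⟩ := hs.intermediate_value₂ hx hy continuousOn_id hφ hlt.le (not_lt.1 hle)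
    exact hne z hz hfix.symm
  exact ⟨key hx hy, key hy hx⟩

theorem image_eq_of_mapsTo_of_mapsTo {α : Type*} {g : α → α} {A B : Set α}
    (hsurj : A ∪ B ⊆ g '' (A ∪ B)) (hA : MapsTo g A B) (hB : MapsTo g B A)
    (hAB : B ∩ A ⊆ g '' A) : g '' A = B := by
  refine hA.image_subset.antisymm fun y hy => ?_
  obtain ⟨x, hx | hx, rfl⟩ := hsurj (Or.inr hy)
  · exact mem_image_of_mem g hx
  · exact hAB ⟨hy, hB hx⟩

theorem AddSubmonoid.mem_of_mul_self_le {S : AddSubmonoid ℕ} {r n : ℕ} (hr : r ∈ S)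
    (hr1 : r + 1 ∈ S) (hn : r * r ≤ n) : n ∈ S := by
  obtain rfl | hr0 := r.eq_zero_or_pos
  · simpa using nsmul_mem hr1 n
  have hmod : n % r ≤ n / r := (Nat.mod_lt n hr0).le.trans ((Nat.le_div_iff_mul_le hr0).2 hn)
  have hsplit : n = (n / r - n % r) * r + n % r * (r + 1) := by
    have hdiv := Nat.div_add_mod n r
    generalize n / r = q, n % r = s at hmod hdiv ⊢
    zify [hmod] at hdiv ⊢
    linear_combination -hdiv
  rw [hsplit]
  simpa using add_mem (nsmul_mem hr (n / r - n % r)) (nsmul_mem hr1 (n % r))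

theorem MixingOnS.of_semiconj {φ ψ h : ℝ → ℝ} {S T : Set ℝ} (hmix : MixingOnS φ S)
    (hφ : MapsTo φ S S) (hh : ContinuousOn h S) (hST : h '' S = T)
    (hsc : ∀ x ∈ S, h (φ x) = ψ (h x)) : MixingOnS ψ T := by
  have hiter : ∀ n, ∀ x ∈ S, h (φ^[n] x) = ψ^[n] (h x) := by
    intro n
    induction n with
    | zero => exact fun _ _ => rfl
    | succ n ih =>
      intro x hx
      rw [iterate_succ_apply', iterate_succ_apply', hsc _ (hφ.iterate n hx), ih x hx]
  intro U V hU hV hUT hVT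
  obtain ⟨U', hU', hUU'⟩ := continuousOn_iff'.1 hh U hU
  obtain ⟨V', hV', hVV'⟩ := continuousOn_iff'.1 hh V hV
  have hpre : ∀ {W W'}, h ⁻¹' W ∩ S = W' ∩ S → (W ∩ T).Nonempty → (W' ∩ S).Nonempty := by
    rintro W W' hWW' ⟨_, hyW, hyT⟩
    obtain ⟨x, hxS, rfl⟩ := hST.symm ▸ hyT
    exact ⟨x, (hWW' ▸ ⟨hyW, hxS⟩ : x ∈ W' ∩ S)⟩
  obtain ⟨N, hN⟩ := hmix U' V' hU' hV' (hpre hUU' hUT) (hpre hVV' hVT)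
  refine ⟨N, fun n hn => ?_⟩
  obtain ⟨_, ⟨x, ⟨hxU', hxS⟩, rfl⟩, hxV'⟩ := hN n hn
  have hxU : h x ∈ U := (hUU'.symm ▸ ⟨hxU', hxS⟩ : x ∈ h ⁻¹' U ∩ S).1
  have hxV : h (φ^[n] x) ∈ V :=
    (hVV'.symm ▸ ⟨hxV', hφ.iterate n hxS⟩ : φ^[n] x ∈ h ⁻¹' V ∩ S).1
  exact ⟨_, ⟨h x, ⟨hxU, hST ▸ mem_image_of_mem h hxS⟩, (hiter n x hxS).symm⟩, hxV⟩

theorem closure_iUnion_subset_of_add_mul {α : Type*} [TopologicalSpace α] {Y : ℕ → Set α}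
    {k : ℕ} (hk : 0 < k) (hYk : ∀ j t, Y (j + t * k) ⊆ Y j) :
    closure (⋃ j, Y j) ⊆ ⋃ j ∈ Finset.range k, closure (Y j) := by
  refine closure_minimal (iUnion_subset fun n => ?_)
    (isClosed_biUnion_finset fun j _ => isClosed_closure)
  refine subset_closure.trans (subset_biUnion_of_mem (u := fun j => closure (Y j))
    (Finset.mem_coe.2 (Finset.mem_range.2 (Nat.mod_lt n hk))) |>.trans' ?_)
  simpa only [Nat.mod_add_div'] using closure_mono (hYk (n % k) (n / k))

theorem mem_of_fixed_of_mapsTo_succ {α : Type*} {g : α → α} {M : ℕ → Set α} {k : ℕ} (hk : 0 < k)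
    (hMg : ∀ j, MapsTo g (M j) (M (j + 1))) (hMk : ∀ j t, M (j + t * k) ⊆ M j) {c : α}
    (hfix : g c = c) {j₀ : ℕ} (hj₀ : c ∈ M j₀) (j : ℕ) : c ∈ M j := by
  have hfwd : ∀ i, c ∈ M (j₀ + i) := by
    intro i
    induction i with
    | zero => exact hj₀
    | succ i ih =>
      have := hMg _ ih
      rwa [hfix, add_assoc] at this
  have hj : j₀ + (j + j₀ * k - j₀) = j + j₀ * k := by
    have := Nat.le_mul_of_pos_right j₀ hk
    omega
  exact hMk j j₀ (hj ▸ hfwd _)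

theorem sides_of_subsingleton_inter {S T : Set ℝ} {c : ℝ} (hS : S.OrdConnected)
    (hT : T.OrdConnected) (hcS : c ∈ S) (hcT : c ∈ T) (hSn : S.Nontrivial) (hTn : T.Nontrivial)
    (hST : (S ∩ T).Subsingleton) : S ⊆ Iic c ∧ T ⊆ Ici c ∨ S ⊆ Ici c ∧ T ⊆ Iic c := by
  have hsame : ∀ y ∈ S, ∀ z ∈ T, ¬(y < c ∧ z < c ∨ c < y ∧ c < z) := by
    rintro y hy z hz (⟨hyc, hzc⟩ | ⟨hcy, hcz⟩)
    · exact (max_lt hyc hzc).ne (hST ⟨hS.out hy hcS ⟨le_max_left _ _, max_le hyc.le hzc.le⟩,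
        hT.out hz hcT ⟨le_max_right _ _, max_le hyc.le hzc.le⟩⟩ ⟨hcS, hcT⟩)
    · exact (lt_min hcy hcz).ne' (hST ⟨hS.out hcS hy ⟨le_min hcy.le hcz.le, min_le_left _ _⟩,
        hT.out hcT hz ⟨le_min hcy.le hcz.le, min_le_right _ _⟩⟩ ⟨hcS, hcT⟩)
  obtain ⟨y, hy, hyc⟩ := hSn.exists_ne c
  obtain ⟨z, hz, hzc⟩ := hTn.exists_ne c
  rcases lt_or_gt_of_ne hyc with hyc | hcy
  · have hcz : c < z :=
      (lt_or_gt_of_ne hzc).resolve_left fun h => hsame y hy z hz (Or.inl ⟨hyc, h⟩)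
    exact Or.inl ⟨fun y' hy' => not_lt.1 fun h => hsame y' hy' z hz (Or.inr ⟨h, hcz⟩),
      fun z' hz' => not_lt.1 fun h => hsame y hy z' hz' (Or.inl ⟨hyc, h⟩)⟩
  · have hzc : z < c :=
      (lt_or_gt_of_ne hzc).resolve_right fun h => hsame y hy z hz (Or.inr ⟨hcy, h⟩)
    exact Or.inr ⟨fun y' hy' => not_lt.1 fun h => hsame y' hy' z hz (Or.inl ⟨h, hzc⟩),
      fun z' hz' => not_lt.1 fun h => hsame y hy z' hz' (Or.inr ⟨hcy, h⟩)⟩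

theorem ordConnected_iterate_image {g : ℝ → ℝ} {S A : Set ℝ} (hc : ContinuousOn g S)
    (hm : MapsTo g S S) (hA : A.OrdConnected) (hAS : A ⊆ S) (n : ℕ) :
    (g^[n] '' A).OrdConnected :=
  (hA.isPreconnected.image _ ((hc.iterate hm n).mono hAS)).ordConnected

theorem iterate_image_subset {α : Type*} {g : α → α} {S A : Set α} (hm : MapsTo g S S)
    (hAS : A ⊆ S) (n : ℕ) : g^[n] '' A ⊆ S :=
  ((hm.iterate n).mono_left hAS).image_subset

theorem mapsTo_iterate_image {α : Type*} (g : α → α) (A : Set α) (n : ℕ) :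
    MapsTo g (g^[n] '' A) (g^[n + 1] '' A) := by
  rintro _ ⟨x, hx, rfl⟩
  exact ⟨x, hx, iterate_succ_apply' g n x⟩

section IntervalMaps

variable {g : ℝ → ℝ} {u v : ℝ}

def SwapsHalves (g : ℝ → ℝ) (u c v : ℝ) : Prop :=
  MapsTo g (Icc u c) (Icc c v) ∧ MapsTo g (Icc c v) (Icc u c)

theorem SwapsHalves.apply_eq {c : ℝ} (hsw : SwapsHalves g u c v) (huc : u ≤ c) (hcv : c ≤ v) :
    g c = c :=
  le_antisymm (hsw.2 ⟨le_rfl, hcv⟩).2 (hsw.1 ⟨huc, le_rfl⟩).1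

theorem exists_fixed_between_of_isPeriodicPt (hc : ContinuousOn g (Icc u v))
    (hm : MapsTo g (Icc u v) (Icc u v)) {p : ℝ} (hp : p ∈ Icc u v) {k : ℕ} (hk : 0 < k)
    (hpk : IsPeriodicPt g k p) : ∃ c, g c = c ∧ ∃ i j, g^[i] p ≤ c ∧ c ≤ g^[j] p := by
  have hfin : (range fun n => g^[n] p).Finite :=
    ((finite_Iio k).image fun n => g^[n] p).subset <| by
      rintro _ ⟨n, rfl⟩
      exact ⟨n % k, Nat.mod_lt n hk, hpk.iterate_mod_apply n⟩
  obtain ⟨_, ⟨i, rfl⟩, hi⟩ := exists_min_image _ id hfin (range_nonempty _)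
  obtain ⟨_, ⟨j, rfl⟩, hj⟩ := exists_max_image _ id hfin (range_nonempty _)
  have hlo : g^[i] p ≤ g (g^[i] p) := hi _ ⟨i + 1, iterate_succ_apply' g i p⟩
  have hhi : g (g^[j] p) ≤ g^[j] p := hj _ ⟨j + 1, iterate_succ_apply' g j p⟩
  have hsub : Icc (g^[i] p) (g^[j] p) ⊆ Icc u v :=
    Icc_subset_Icc (hm.iterate i hp).1 (hm.iterate j hp).2
  obtain ⟨c, hc', hfix⟩ := intermediate_value_Icc' (hi _ (mem_range_self j))
    ((hc.mono hsub).sub continuousOn_id)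
    (show (0 : ℝ) ∈ Icc (g (g^[j] p) - g^[j] p) (g (g^[i] p) - g^[i] p) from
      ⟨by linarith, by linarith⟩)
  exact ⟨c, sub_eq_zero.1 hfix, i, j, hc'⟩

theorem lt_iterate_iff_of_forall_not_mem {s : Set ℝ} (hs : IsPreconnected s) {n : ℕ}
    (hn : 0 < n) (hcont : ContinuousOn g^[n] s) (hno : ∀ z ∈ s, z ∉ periodicPts g) {x y : ℝ}
    (hx : x ∈ s) (hy : y ∈ s) : x < g^[n] x ↔ y < g^[n] y :=
  lt_apply_iff_of_forall_ne hs hcont (fun z hz h => hno z hz (mk_mem_periodicPts hn h)) hx hy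

theorem lt_iterate_mul_iff {a b : ℝ} (hcont : ∀ n, ContinuousOn g^[n] (Ioo a b))
    (hno : ∀ z ∈ Ioo a b, z ∉ periodicPts g) {z : ℝ} {d : ℕ} (hd : 0 < d) (hz : z ∈ Ioo a b)
    (hdz : g^[d] z ∈ Ioo a b) {j : ℕ} (hj : 0 < j) : z < g^[j * d] z ↔ z < g^[d] z := by
  induction j, hj using Nat.le_induction with
  | base => simp
  | succ j hj ih =>
    have hstep := lt_iterate_iff_of_forall_not_mem isPreconnected_Ioo (n := j * d)
      (by positivity) (hcont _) hno hdz hz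
    rw [ih] at hstep
    rw [add_one_mul, iterate_add_apply]
    rcases lt_or_gt_of_ne fun h => hno z hz (mk_mem_periodicPts hd h.symm) with h | h
    · exact iff_of_true (h.trans (hstep.2 h)) h
    · exact iff_of_false
        (lt_asymm (lt_of_le_of_lt (not_lt.1 fun h' => lt_asymm h (hstep.1 h')) h)) (lt_asymm h)

def returnTimes (g : ℝ → ℝ) (A : Set ℝ) : AddSubmonoid ℕ where
  carrier := {n | A ⊆ g^[n] '' A}
  zero_mem' := by simp
  add_mem' {m n} hm hn :=
    calc A ⊆ g^[n] '' A := hn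
      _ ⊆ g^[n] '' (g^[m] '' A) := image_mono hm
      _ = g^[m + n] '' A := by rw [← image_comp, ← iterate_add, add_comm]

namespace TransitiveOnS

theorem exists_iterate_mem (ht : TransitiveOnS g (Icc u v)) {A W : Set ℝ}
    (hA : A.OrdConnected) (hAn : A.Nontrivial) (hAI : A ⊆ Icc u v) (hW : IsOpen W)
    (hWI : (W ∩ Icc u v).Nonempty) : ∃ n, ∃ x ∈ A, g^[n] x ∈ W := by
  obtain ⟨p, hp, q, hq, hpq⟩ := hAn.exists_lt
  have hpqA : Ioo p q ⊆ A := Ioo_subset_Icc_self.trans (hA.out hp hq)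
  obtain ⟨m, hm⟩ := nonempty_Ioo.2 hpq
  obtain ⟨n, _, ⟨x, hx, rfl⟩, hxW⟩ := ht _ _ isOpen_Ioo hW ⟨m, hm, hAI (hpqA hm)⟩ hWI
  exact ⟨n, x, hpqA hx.1, hxW⟩

theorem subset_closure_of_mapsTo (ht : TransitiveOnS g (Icc u v)) {A K : Set ℝ}
    (hA : A.OrdConnected) (hAn : A.Nontrivial) (hAI : A ⊆ Icc u v) (hAK : A ⊆ K)
    (hK : MapsTo g K K) : Icc u v ⊆ closure K := by
  intro x hx
  rw [mem_closure_iff]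
  intro O hO hxO
  obtain ⟨n, y, hy, hyO⟩ := ht.exists_iterate_mem hA hAn hAI hO ⟨x, hxO, hx⟩
  exact ⟨_, hyO, hK.iterate n (hAK hy)⟩

theorem Icc_subset_of_mapsTo (ht : TransitiveOnS g (Icc u v)) {a b : ℝ} (hab : a < b)
    (habI : Icc a b ⊆ Icc u v) (hinv : MapsTo g (Icc a b) (Icc a b)) : Icc u v ⊆ Icc a b := by
  simpa using ht.subset_closure_of_mapsTo ordConnected_Icc (Icc_infinite hab).nontrivial habI
    subset_rfl hinv

theorem exists_mem_periodicPts (ht : TransitiveOnS g (Icc u v)) (hc : ContinuousOn g (Icc u v))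
    (hm : MapsTo g (Icc u v) (Icc u v)) {a b : ℝ} (hua : u ≤ a) (hab : a < b) (hbv : b ≤ v) :
    ∃ p ∈ Ioo a b, p ∈ periodicPts g := by
  by_contra! hno
  have hJ : Ioo a b ⊆ Icc u v := Ioo_subset_Icc_self.trans (Icc_subset_Icc hua hbv)
  have hcont : ∀ n, ContinuousOn g^[n] (Ioo a b) := fun n => (hc.iterate hm n).mono hJ
  obtain ⟨m, ham, hmb⟩ := exists_between hab
  have hLJ : Ioo a m ⊆ Ioo a b := Ioo_subset_Ioo_right hmb.le
  have hRJ : Ioo m b ⊆ Ioo a b := Ioo_subset_Ioo_left ham.le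
  have hL : (Ioo a m ∩ Icc u v).Nonempty :=
    let ⟨z, hz⟩ := nonempty_Ioo.2 ham; ⟨z, hz, hJ (hLJ hz)⟩
  have hR : (Ioo m b ∩ Icc u v).Nonempty :=
    let ⟨z, hz⟩ := nonempty_Ioo.2 hmb; ⟨z, hz, hJ (hRJ hz)⟩
  -- an orbit from the left half to the right half and one going back: all `g^[j * d]` push
  -- points of `(a, b)` up while all `g^[j * e]` push them down
  obtain ⟨d, _, ⟨x, hx, rfl⟩, hdx⟩ := ht _ _ isOpen_Ioo isOpen_Ioo hL hR
  obtain ⟨e, _, ⟨y, hy, rfl⟩, hey⟩ := ht _ _ isOpen_Ioo isOpen_Ioo hR hL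
  have hxd : x < g^[d] x := hx.1.2.trans hdx.1
  have hye : g^[e] y < y := hey.2.trans hy.1.1
  have hd : 0 < d := Nat.pos_of_ne_zero (by rintro rfl; exact hxd.false)
  have he : 0 < e := Nat.pos_of_ne_zero (by rintro rfl; exact hye.false)
  have hx' : x < g^[e * d] x := (lt_iterate_mul_iff hcont hno hd (hLJ hx.1) (hRJ hdx) he).2 hxd
  have hy' : ¬y < g^[d * e] y :=
    fun h => lt_asymm hye ((lt_iterate_mul_iff hcont hno he (hRJ hy.1) (hLJ hey) hd).1 h)
  rw [mul_comm] at hy'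
  exact hy' ((lt_iterate_iff_of_forall_not_mem isPreconnected_Ioo (by positivity) (hcont _) hno
    (hLJ hx.1) (hRJ hy.1)).1 hx')

theorem subset_closure_periodicPts (ht : TransitiveOnS g (Icc u v))
    (hc : ContinuousOn g (Icc u v)) (hm : MapsTo g (Icc u v) (Icc u v)) (huv : u < v) :
    Icc u v ⊆ closure {x ∈ Icc u v | x ∈ periodicPts g} := by
  intro x hx
  rw [mem_closure_iff]
  intro O hO hxO
  obtain ⟨s, t, hus, hst, htv, hsub⟩ := exists_Icc_subset_of_isOpen huv hO ⟨x, hxO, hx⟩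
  obtain ⟨p, hp, hper⟩ := ht.exists_mem_periodicPts hc hm hus.le hst htv.le
  exact ⟨p, hsub (Ioo_subset_Icc_self hp), ⟨hus.le.trans hp.1.le, hp.2.le.trans htv.le⟩, hper⟩

theorem surjOn (ht : TransitiveOnS g (Icc u v)) (hc : ContinuousOn g (Icc u v))
    (hm : MapsTo g (Icc u v) (Icc u v)) (huv : u < v) : SurjOn g (Icc u v) (Icc u v) := by
  have hper : {x ∈ Icc u v | x ∈ periodicPts g} ⊆ g '' Icc u v := by
    rintro x ⟨hx, n, hn, hnx⟩
    refine ⟨g^[n - 1] x, hm.iterate _ hx, ?_⟩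
    rw [← iterate_succ_apply' g, Nat.succ_eq_add_one, Nat.sub_add_cancel hn]
    exact hnx
  calc Icc u v ⊆ closure {x ∈ Icc u v | x ∈ periodicPts g} :=
        ht.subset_closure_periodicPts hc hm huv
    _ ⊆ closure (g '' Icc u v) := closure_mono hper
    _ = g '' Icc u v := (isCompact_Icc.image_of_continuousOn hc).isClosed.closure_eq

theorem nontrivial_iterate_image (ht : TransitiveOnS g (Icc u v))
    (hc : ContinuousOn g (Icc u v)) (hm : MapsTo g (Icc u v) (Icc u v)) {A : Set ℝ}
    (hA : A.OrdConnected) (hAn : A.Nontrivial) (hAI : A ⊆ Icc u v) (n : ℕ) :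
    (g^[n] '' A).Nontrivial := by
  obtain ⟨x, hx, y, hy, hxy⟩ := hAn.exists_lt
  obtain ⟨p, hp, k, hk, hpk⟩ := ht.exists_mem_periodicPts hc hm (hAI hx).1 hxy (hAI hy).2
  obtain ⟨q, hq, l, hl, hql⟩ :=
    ht.exists_mem_periodicPts hc hm ((hAI hx).1.trans hp.1.le) hp.2 (hAI hy).2
  have hpA : p ∈ A := hA.out hx hy (Ioo_subset_Icc_self hp)
  have hqA : q ∈ A := hA.out hx hy ⟨hp.1.le.trans hq.1.le, hq.2.le⟩
  -- `g` permutes the points of period `k * l`, so `g^[n]` separates `p` and `q`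
  refine ⟨_, mem_image_of_mem _ hpA, _, mem_image_of_mem _ hqA, fun h => hq.1.ne ?_⟩
  exact ((bijOn_ptsOfPeriod g (mul_pos hk hl)).iterate n).injOn (hpk.mul_const l)
    (hql.const_mul k) h

theorem eventually_mem_iterate_image (ht : TransitiveOnS g (Icc u v))
    (hc : ContinuousOn g (Icc u v)) (hm : MapsTo g (Icc u v) (Icc u v)) {A : Set ℝ}
    (hA : A.OrdConnected) (hAn : A.Nontrivial) (hAI : A ⊆ Icc u v) {r : ℕ}
    (hr : r ∈ returnTimes g A) (hr1 : r + 1 ∈ returnTimes g A) {w : ℝ} (hw : w ∈ Ioo u v) :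
    ∀ᶠ n in atTop, w ∈ g^[n] '' A := by
  have hret : ∀ᶠ n in atTop, A ⊆ g^[n] '' A :=
    eventually_atTop.2 ⟨r * r, fun n hn => AddSubmonoid.mem_of_mul_self_le hr hr1 hn⟩
  have hvisit : ∀ W, IsOpen W → (W ∩ Icc u v).Nonempty →
      ∀ᶠ n in atTop, ∃ y ∈ g^[n] '' A, y ∈ W := by
    intro W hW hWI
    obtain ⟨m, x, hx, hxW⟩ := ht.exists_iterate_mem hA hAn hAI hW hWI
    rw [← map_add_atTop_eq_nat m]
    refine hret.mono fun n hn => ⟨g^[m] x, ?_, hxW⟩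
    show g^[m] x ∈ g^[n + m] '' A
    rw [add_comm, iterate_add, image_comp]
    exact image_mono hn (mem_image_of_mem _ hx)
  have huv : u ≤ v := (hw.1.trans hw.2).le
  filter_upwards [hvisit _ isOpen_Iio ⟨u, hw.1, left_mem_Icc.2 huv⟩,
    hvisit _ isOpen_Ioi ⟨v, hw.2, right_mem_Icc.2 huv⟩] with n ⟨y, hy, hyw⟩ ⟨z, hz, hzw⟩
  exact (ordConnected_iterate_image hc hm hA hAI n).out hy hz ⟨le_of_lt hyw, le_of_lt hzw⟩

theorem exists_uIcc_subset_iterate_image (ht : TransitiveOnS g (Icc u v))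
    (hc : ContinuousOn g (Icc u v)) (hm : MapsTo g (Icc u v) (Icc u v)) {K : Set ℝ}
    (hK : K.OrdConnected) (hKn : K.Nontrivial) (hKI : K ⊆ Icc u v) {a c : ℝ} (hfix : g c = c)
    (hcK : c ∈ K) (ha : a ∈ Ioo u v) : ∃ σ, uIcc a c ⊆ g^[σ] '' K := by
  obtain ⟨W, hW, hWI, hWa⟩ :
      ∃ W : Set ℝ, IsOpen W ∧ (W ∩ Icc u v).Nonempty ∧ ∀ y ∈ W, a ∈ uIcc y c := by
    have huv : u ≤ v := (ha.1.trans ha.2).le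
    rcases le_total a c with hac | hca
    · exact ⟨Iio a, isOpen_Iio, ⟨u, ha.1, left_mem_Icc.2 huv⟩,
        fun y hy => mem_uIcc.2 (Or.inl ⟨le_of_lt hy, hac⟩)⟩
    · exact ⟨Ioi a, isOpen_Ioi, ⟨v, ha.2, right_mem_Icc.2 huv⟩,
        fun y hy => mem_uIcc.2 (Or.inr ⟨hca, le_of_lt hy⟩)⟩
  obtain ⟨σ, x, hx, hxW⟩ := ht.exists_iterate_mem hK hKn hKI hW hWI
  refine ⟨σ, (uIcc_subset_uIcc (hWa _ hxW) right_mem_uIcc).trans ?_⟩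
  exact (ordConnected_iterate_image hc hm hK hKI σ).uIcc_subset (mem_image_of_mem _ hx)
    ⟨c, hcK, iterate_fixed hfix σ⟩

theorem subset_iUnion_closure_of_mapsTo_succ (ht : TransitiveOnS g (Icc u v))
    {Y : ℕ → Set ℝ} {k : ℕ} (hk : 0 < k) (hYI : ∀ j, Y j ⊆ Icc u v)
    (hYg : ∀ j, MapsTo g (Y j) (Y (j + 1))) (hYk : ∀ j t, Y (j + t * k) ⊆ Y j)
    (hY0 : (Y 0).OrdConnected) (hY0n : (Y 0).Nontrivial) :
    Icc u v ⊆ ⋃ j ∈ Finset.range k, closure (Y j) :=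
  (ht.subset_closure_of_mapsTo hY0 hY0n (hYI 0) (subset_iUnion Y 0) fun _ hx =>
    let ⟨j, hj⟩ := mem_iUnion.1 hx; mem_iUnion.2 ⟨j + 1, hYg j hj⟩).trans
    (closure_iUnion_subset_of_add_mul hk hYk)

theorem swapsHalves_of_sides (ht : TransitiveOnS g (Icc u v)) (hc : ContinuousOn g (Icc u v))
    (hm : MapsTo g (Icc u v) (Icc u v)) {c : ℝ} (hcI : c ∈ Ioo u v) (hfix : g c = c)
    {Y : ℕ → Set ℝ} {k : ℕ} (hk : 0 < k) (hYI : ∀ j, Y j ⊆ Icc u v)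
    (hYg : ∀ j, MapsTo g (Y j) (Y (j + 1))) (hYk : ∀ j t, Y (j + t * k) ⊆ Y j)
    (hYc : ∀ j, IsPreconnected (Y j)) (hside : ∀ j, Y j ⊆ Iic c ∨ Y j ⊆ Ici c)
    (hY0 : (Y 0).Nontrivial) : SwapsHalves g u c v := by
  set M := fun j => closure (Y j)
  have hMI : ∀ j, M j ⊆ Icc u v := fun j => closure_minimal (hYI j) isClosed_Icc
  have hMg : ∀ j, MapsTo g (M j) (M (j + 1)) := fun j =>
    mapsTo_iff_image_subset.2 <|
      (hc.mono (hMI j)).image_closure.trans (closure_mono (hYg j).image_subset)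
  have hMo : ∀ j, (M j).OrdConnected := fun j => (hYc j).closure.ordConnected
  have hMside : ∀ j, M j ⊆ Iic c ∨ M j ⊆ Ici c := fun j =>
    (hside j).imp (closure_minimal · isClosed_Iic) (closure_minimal · isClosed_Ici)
  have hcover : ∀ x ∈ Icc u v, ∃ j, x ∈ M j := by
    intro x hx
    obtain ⟨j, -, hj⟩ := mem_iUnion₂.1 (ht.subset_iUnion_closure_of_mapsTo_succ hk hYI hYg hYk
      (hYc 0).ordConnected hY0 hx)
    exact ⟨j, hj⟩
  have hcM : ∀ j, c ∈ M j :=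
    let ⟨_, hj₀⟩ := hcover c (Ioo_subset_Icc_self hcI)
    mem_of_fixed_of_mapsTo_succ hk hMg (fun j t => closure_mono (hYk j t)) hfix hj₀
  -- the piece of the cover containing an endpoint contains a whole half, and the image of that
  -- half lies on one side of `c`; the wrong side would be an invariant proper subinterval
  have huv : u ≤ v := (hcI.1.trans hcI.2).le
  have hLI : Icc u c ⊆ Icc u v := Icc_subset_Icc_right hcI.2.le
  have hRI : Icc c v ⊆ Icc u v := Icc_subset_Icc_left hcI.1.le
  constructor
  · obtain ⟨j, hj⟩ := hcover u (left_mem_Icc.2 huv)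
    have hsub : Icc u c ⊆ M j := (hMo j).out hj (hcM j)
    rcases hMside (j + 1) with h | h
    · have hinv : MapsTo g (Icc u c) (Icc u c) :=
        fun x hx => ⟨(hm (hLI hx)).1, h (hMg j (hsub hx))⟩
      exact absurd (ht.Icc_subset_of_mapsTo hcI.1 hLI hinv (right_mem_Icc.2 huv)).2
        hcI.2.not_ge
    · exact fun x hx => ⟨h (hMg j (hsub hx)), (hm (hLI hx)).2⟩
  · obtain ⟨j, hj⟩ := hcover v (right_mem_Icc.2 huv)
    have hsub : Icc c v ⊆ M j := (hMo j).out (hcM j) hj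
    rcases hMside (j + 1) with h | h
    · exact fun x hx => ⟨(hm (hRI hx)).1, h (hMg j (hsub hx))⟩
    · have hinv : MapsTo g (Icc c v) (Icc c v) :=
        fun x hx => ⟨h (hMg j (hsub hx)), (hm (hRI hx)).2⟩
      exact absurd (ht.Icc_subset_of_mapsTo hcI.2 hRI hinv (left_mem_Icc.2 huv)).1
        hcI.1.not_ge

theorem swapsHalves_of_periodic_sides (ht : TransitiveOnS g (Icc u v))
    (hc : ContinuousOn g (Icc u v)) (hm : MapsTo g (Icc u v) (Icc u v)) {c : ℝ}
    (hcI : c ∈ Ioo u v) (hfix : g c = c) {A : Set ℝ} (hA : A.OrdConnected) (hAn : A.Nontrivial)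
    (hAI : A ⊆ Icc u v) {k : ℕ} (hk : 0 < k) (hanchor : ∀ j, ∃ x, ∀ t, x ∈ g^[j + t * k] '' A)
    (hside : ∀ j, (∀ t, g^[j + t * k] '' A ⊆ Iic c) ∨ ∀ t, g^[j + t * k] '' A ⊆ Ici c) :
    SwapsHalves g u c v := by
  refine ht.swapsHalves_of_sides hc hm hcI hfix (Y := fun j => ⋃ t, g^[j + t * k] '' A) hk
    (fun j => iUnion_subset fun t => iterate_image_subset hm hAI _) (fun j x hx => ?_)
    (fun j t => ?_) (fun j => ?_) (fun j => (hside j).imp iUnion_subset iUnion_subset) ?_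
  · obtain ⟨t, hxt⟩ := mem_iUnion.1 hx
    exact mem_iUnion.2 ⟨t, by rw [add_right_comm]; exact mapsTo_iterate_image g A _ hxt⟩
  · exact iUnion_subset fun t' =>
      subset_iUnion_of_subset (t + t') (by rw [add_assoc, ← add_mul])
  · obtain ⟨x, hx⟩ := hanchor j
    exact isPreconnected_iUnion ⟨x, mem_iInter.2 hx⟩ fun t =>
      (ordConnected_iterate_image hc hm hA hAI _).isPreconnected
  · exact hAn.mono (subset_iUnion_of_subset 0 (by simp))

theorem exists_swapsHalves_of_forall_not_fixed (ht : TransitiveOnS g (Icc u v))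
    (hc : ContinuousOn g (Icc u v)) (hm : MapsTo g (Icc u v) (Icc u v)) {A : Set ℝ}
    (hA : A.OrdConnected) (hAn : A.Nontrivial) (hAI : A ⊆ Icc u v)
    (hnc : ∀ n, ∀ y ∈ g^[n] '' A, g y ≠ y) : ∃ c ∈ Ioo u v, SwapsHalves g u c v := by
  obtain ⟨x, hx, y, hy, hxy⟩ := hAn.exists_lt
  obtain ⟨p, hp, k, hk, hpk⟩ := ht.exists_mem_periodicPts hc hm (hAI hx).1 hxy (hAI hy).2
  have hpA : p ∈ A := hA.out hx hy (Ioo_subset_Icc_self hp)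
  obtain ⟨c, hfix, i₁, i₂, hic, hcj⟩ := exists_fixed_between_of_isPeriodicPt hc hm (hAI hpA) hk hpk
  have horb : ∀ n, g^[n] p ∈ g^[n] '' A := fun n => mem_image_of_mem _ hpA
  have hper : ∀ j t, g^[j + t * k] p = g^[j] p := fun j t => by
    rw [iterate_add_apply, (hpk.const_mul t).eq]
  have hne : ∀ n, g^[n] p ≠ c := fun n h => hnc n _ (horb n) (h ▸ hfix)
  have hside : ∀ n, ∀ y ∈ g^[n] '' A, y < c ↔ g^[n] p < c := by
    intro n y hy
    have hcn : c ∉ g^[n] '' A := fun h => hnc n c h hfix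
    have hord := ordConnected_iterate_image hc hm hA hAI n
    exact ⟨fun hyc => not_le.1 fun h => hcn (hord.out hy (horb n) ⟨hyc.le, h⟩),
      fun hpc => not_le.1 fun h => hcn (hord.out (horb n) hy ⟨hpc.le, h⟩)⟩
  have hcI : c ∈ Ioo u v :=
    ⟨(iterate_image_subset hm hAI i₁ (horb i₁)).1.trans_lt (hic.lt_of_ne (hne i₁)),
      (hcj.lt_of_ne (hne i₂).symm).trans_le (iterate_image_subset hm hAI i₂ (horb i₂)).2⟩
  refine ⟨c, hcI, ht.swapsHalves_of_periodic_sides hc hm hcI hfix hA hAn hAI hk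
    (fun j => ⟨g^[j] p, fun t => hper j t ▸ horb _⟩) fun j => ?_⟩
  rcases lt_or_gt_of_ne (hne j) with h | h
  · exact Or.inl fun t y hy => ((hside _ y hy).2 (by rwa [hper])).le
  · exact Or.inr fun t y hy => not_lt.1 fun hyc =>
      lt_asymm h (hper j t ▸ (hside _ y hy).1 hyc)

theorem swapsHalves_of_subsingleton_inter (ht : TransitiveOnS g (Icc u v))
    (hc : ContinuousOn g (Icc u v)) (hm : MapsTo g (Icc u v) (Icc u v)) {A : Set ℝ} {c : ℝ}
    (hA : A.OrdConnected) (hAn : A.Nontrivial) (hAI : A ⊆ Icc u v) (hfix : g c = c)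
    (hcA : c ∈ A) (hsub : ∀ n, (g^[n] '' A ∩ g^[n + 1] '' A).Subsingleton) :
    c ∈ Ioo u v ∧ SwapsHalves g u c v := by
  set X := fun n => g^[n] '' A
  have hXo : ∀ n, (X n).OrdConnected := ordConnected_iterate_image hc hm hA hAI
  have hXc : ∀ n, c ∈ X n := fun n => ⟨c, hcA, iterate_fixed hfix n⟩
  have hXn : ∀ n, (X n).Nontrivial := ht.nontrivial_iterate_image hc hm hA hAn hAI
  have hpair : ∀ n, X n ⊆ Iic c ∧ X (n + 1) ⊆ Ici c ∨ X n ⊆ Ici c ∧ X (n + 1) ⊆ Iic c :=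
    fun n => sides_of_subsingleton_inter (hXo n) (hXo _) (hXc n) (hXc _) (hXn n) (hXn _) (hsub n)
  have hboth : ∀ n, X n ⊆ Iic c → X n ⊆ Ici c → False := fun n h1 h2 =>
    let ⟨y, hy, hyc⟩ := (hXn n).exists_ne c
    hyc (le_antisymm (h1 hy) (h2 hy))
  have hlt : ∀ n, X n ⊆ Iic c → u < c := fun n h =>
    let ⟨y, hy, hyc⟩ := (hXn n).exists_ne c
    (iterate_image_subset hm hAI n hy).1.trans_lt (lt_of_le_of_ne (h hy) hyc)
  have hgt : ∀ n, X n ⊆ Ici c → c < v := fun n h =>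
    let ⟨y, hy, hyc⟩ := (hXn n).exists_ne c
    (lt_of_le_of_ne (h hy) hyc.symm).trans_le (iterate_image_subset hm hAI n hy).2
  have hcI : c ∈ Ioo u v := by
    rcases hpair 0 with ⟨h0, h1⟩ | ⟨h0, h1⟩
    exacts [⟨hlt 0 h0, hgt 1 h1⟩, ⟨hlt 1 h1, hgt 0 h0⟩]
  have halt : ∀ n, X (n + 1) ⊆ Iic c ↔ ¬X n ⊆ Iic c := fun n => by
    rcases hpair n with ⟨h0, h1⟩ | ⟨h0, h1⟩
    · exact iff_of_false (fun h => hboth _ h h1) (not_not.2 h0)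
    · exact iff_of_true h1 fun h => hboth _ h h0
  have hright : ∀ n, ¬X n ⊆ Iic c → X n ⊆ Ici c := fun n h =>
    ((hpair n).resolve_left fun h' => h h'.1).1
  have hper : ∀ j t, X (j + t * 2) ⊆ Iic c ↔ X j ⊆ Iic c := by
    intro j t
    induction t with
    | zero => simp
    | succ t ih => rw [show j + (t + 1) * 2 = j + t * 2 + 1 + 1 by ring, halt, halt, not_not, ih]
  refine ⟨hcI, ht.swapsHalves_of_periodic_sides hc hm hcI hfix hA hAn hAI two_pos
    (fun j => ⟨c, fun t => hXc _⟩) fun j => ?_⟩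
  by_cases h : X j ⊆ Iic c
  · exact Or.inl fun t => (hper j t).2 h
  · exact Or.inr fun t => hright _ fun h' => h ((hper j t).1 h')

theorem eventually_mem_or_swapsHalves_of_fixed (ht : TransitiveOnS g (Icc u v))
    (hc : ContinuousOn g (Icc u v)) (hm : MapsTo g (Icc u v) (Icc u v)) {a c : ℝ}
    (ha : a ∈ Ioo u v) (hac : a ≠ c) (hcI : c ∈ Icc u v) (hfix : g c = c) :
    (∀ w ∈ Ioo u v, ∀ᶠ n in atTop, w ∈ g^[n] '' uIcc a c) ∨
      (c ∈ Ioo u v ∧ SwapsHalves g u c v) := by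
  have hA : (uIcc a c).OrdConnected := ordConnected_uIcc
  have hAn : (uIcc a c).Nontrivial := ⟨a, left_mem_uIcc, c, right_mem_uIcc, hac⟩
  have hAI : uIcc a c ⊆ Icc u v := ordConnected_Icc.uIcc_subset (Ioo_subset_Icc_self ha) hcI
  by_cases h : ∃ n, (g^[n] '' uIcc a c ∩ g^[n + 1] '' uIcc a c).Nontrivial
  · obtain ⟨n, hn⟩ := h
    have hXo := ordConnected_iterate_image hc hm hA hAI
    obtain ⟨σ, hσ⟩ := ht.exists_uIcc_subset_iterate_image hc hm ((hXo n).inter (hXo _)) hn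
      (inter_subset_left.trans (iterate_image_subset hm hAI n)) hfix
      ⟨⟨c, right_mem_uIcc, iterate_fixed hfix n⟩, ⟨c, right_mem_uIcc, iterate_fixed hfix _⟩⟩ ha
    -- the common part of two consecutive images grows back over `uIcc a c`
    have hr : σ + n ∈ returnTimes g (uIcc a c) := by
      show uIcc a c ⊆ g^[σ + n] '' uIcc a c
      rw [iterate_add, image_comp]
      exact hσ.trans (image_mono inter_subset_left)
    have hr1 : σ + n + 1 ∈ returnTimes g (uIcc a c) := by
      show uIcc a c ⊆ g^[σ + n + 1] '' uIcc a c
      rw [add_assoc, iterate_add, image_comp]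
      exact hσ.trans (image_mono inter_subset_right)
    exact Or.inl fun w hw => ht.eventually_mem_iterate_image hc hm hA hAn hAI hr hr1 hw
  · exact Or.inr (ht.swapsHalves_of_subsingleton_inter hc hm hA hAn hAI hfix right_mem_uIcc
      fun n => not_nontrivial_iff.1 fun hn => h ⟨n, hn⟩)

theorem eventually_mem_iterate_image_or_swapsHalves (ht : TransitiveOnS g (Icc u v))
    (hc : ContinuousOn g (Icc u v)) (hm : MapsTo g (Icc u v) (Icc u v)) {s t : ℝ} (hus : u < s)
    (hst : s < t) (htv : t < v) :
    (∀ w ∈ Ioo u v, ∀ᶠ n in atTop, w ∈ g^[n] '' Icc s t) ∨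
      ∃ c ∈ Ioo u v, SwapsHalves g u c v := by
  have hJI : Icc s t ⊆ Icc u v := Icc_subset_Icc hus.le htv.le
  have hJn : (Icc s t).Nontrivial := (Icc_infinite hst).nontrivial
  by_cases hcap : ∃ m, ∃ c ∈ g^[m] '' Icc s t, g c = c
  swap
  · push Not at hcap
    exact Or.inr (ht.exists_swapsHalves_of_forall_not_fixed hc hm ordConnected_Icc hJn hJI hcap)
  obtain ⟨m, c, hcm, hfix⟩ := hcap
  have hcI : c ∈ Icc u v := iterate_image_subset hm hJI m hcm
  have hord := ordConnected_iterate_image hc hm ordConnected_Icc hJI m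
  obtain ⟨z, hz, hzc⟩ := (ht.nontrivial_iterate_image hc hm ordConnected_Icc hJn hJI m).exists_ne c
  have hzI := iterate_image_subset hm hJI m hz
  obtain ⟨a, ha, hac, haz⟩ : ∃ a ∈ Ioo u v, a ≠ c ∧ a ∈ uIcc z c := by
    rcases lt_or_gt_of_ne hzc with h | h
    · exact ⟨(z + c) / 2, ⟨by linarith [hzI.1], by linarith [hcI.2]⟩,
        (by linarith : (z + c) / 2 < c).ne, mem_uIcc.2 (Or.inl ⟨by linarith, by linarith⟩)⟩
    · exact ⟨(z + c) / 2, ⟨by linarith [hcI.1], by linarith [hzI.2]⟩,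
        (by linarith : c < (z + c) / 2).ne', mem_uIcc.2 (Or.inr ⟨by linarith, by linarith⟩)⟩
  have hsub : uIcc a c ⊆ g^[m] '' Icc s t := hord.uIcc_subset (hord.uIcc_subset hz hcm haz) hcm
  refine (ht.eventually_mem_or_swapsHalves_of_fixed hc hm ha hac hcI hfix).imp
    (fun hev w hw => ?_) fun h => ⟨c, h⟩
  rw [← map_add_atTop_eq_nat m]
  refine (hev w hw).mono fun n hn => ?_
  show w ∈ g^[n + m] '' Icc s t
  rw [iterate_add, image_comp]
  exact image_mono hsub hn

theorem mixingOnS_or_exists_swapsHalves (ht : TransitiveOnS g (Icc u v))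
    (hc : ContinuousOn g (Icc u v)) (hm : MapsTo g (Icc u v) (Icc u v)) (huv : u < v) :
    MixingOnS g (Icc u v) ∨ ∃ c ∈ Ioo u v, SwapsHalves g u c v := by
  refine or_iff_not_imp_right.2 fun hsw U V hU hV hUI hVI => ?_
  obtain ⟨s, t, hus, hst, htv, hstU⟩ := exists_Icc_subset_of_isOpen huv hU hUI
  obtain ⟨w, t', huw, hwt', ht'v, hwV⟩ := exists_Icc_subset_of_isOpen huv hV hVI
  obtain ⟨N, hN⟩ := eventually_atTop.1
    (((ht.eventually_mem_iterate_image_or_swapsHalves hc hm hus hst htv).resolve_right hsw) w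
      ⟨huw, hwt'.trans ht'v⟩)
  exact ⟨N, fun n hn => ⟨w, image_mono (subset_inter hstU (Icc_subset_Icc hus.le htv.le))
    (hN n hn), hwV (left_mem_Icc.2 hwt'.le)⟩⟩

theorem image_Icc_eq_of_swapsHalves (ht : TransitiveOnS g (Icc u v))
    (hc : ContinuousOn g (Icc u v)) (hm : MapsTo g (Icc u v) (Icc u v)) {c : ℝ}
    (hcI : c ∈ Ioo u v) (hsw : SwapsHalves g u c v) :
    g '' Icc u c = Icc c v ∧ g '' Icc c v = Icc u c := by
  have hfix := hsw.apply_eq hcI.1.le hcI.2.le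
  have hsurj : Icc u c ∪ Icc c v ⊆ g '' (Icc u c ∪ Icc c v) := by
    rw [Icc_union_Icc_eq_Icc hcI.1.le hcI.2.le]
    exact ht.surjOn hc hm (hcI.1.trans hcI.2)
  refine ⟨image_eq_of_mapsTo_of_mapsTo hsurj hsw.1 hsw.2 fun y hy => ?_,
    image_eq_of_mapsTo_of_mapsTo (union_comm (Icc u c) _ ▸ hsurj) hsw.2 hsw.1 fun y hy => ?_⟩
  · obtain rfl : y = c := le_antisymm hy.2.2 hy.1.1
    exact ⟨y, right_mem_Icc.2 hcI.1.le, hfix⟩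
  · obtain rfl : y = c := le_antisymm hy.1.2 hy.2.1
    exact ⟨y, left_mem_Icc.2 hcI.2.le, hfix⟩

theorem transitiveOnS_comp_self_of_swapsHalves (ht : TransitiveOnS g (Icc u v)) {c : ℝ}
    (hcI : c ∈ Ioo u v) (hsw : SwapsHalves g u c v) : TransitiveOnS (g ∘ g) (Icc u c) := by
  intro U V hU hV hUI hVI
  obtain ⟨s, t, hus, hst, htc, hstU⟩ := exists_Icc_subset_of_isOpen hcI.1 hU hUI
  obtain ⟨s', t', hus', hst', htc', hstV⟩ := exists_Icc_subset_of_isOpen hcI.1 hV hVI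
  have hsub : ∀ {p q}, u < p → q < c → p < q → (Ioo p q ∩ Icc u v).Nonempty :=
    fun hp hq hpq => let ⟨y, hy⟩ := nonempty_Ioo.2 hpq
      ⟨y, hy, hp.le.trans hy.1.le, hy.2.le.trans (hq.trans hcI.2).le⟩
  obtain ⟨m, _, ⟨x, hx, rfl⟩, hxV⟩ :=
    ht _ _ isOpen_Ioo isOpen_Ioo (hsub hus htc hst) (hsub hus' htc' hst')
  have hxL : x ∈ Icc u c := ⟨hus.le.trans hx.1.1.le, hx.1.2.le.trans htc.le⟩
  have hiter : ∀ n, g^[2 * n] x = (g ∘ g)^[n] x := fun n => by rw [iterate_mul]; rfl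
  -- odd iterates land in the right half, which misses `Ioo s' t'`
  obtain ⟨n, rfl | rfl⟩ := Nat.even_or_odd' m
  · exact ⟨n, _, ⟨x, ⟨hstU (Ioo_subset_Icc_self hx.1), hxL⟩, rfl⟩,
      hiter n ▸ hstV (Ioo_subset_Icc_self hxV)⟩
  · have hR := hsw.1 ((hsw.2.comp hsw.1).iterate n hxL)
    rw [← hiter, ← iterate_succ_apply' g] at hR
    exact absurd hR.1 (hxV.2.trans htc').not_ge

theorem mixingOnS_comp_self_of_swapsHalves (ht : TransitiveOnS g (Icc u v))
    (hc : ContinuousOn g (Icc u v)) (hm : MapsTo g (Icc u v) (Icc u v)) {c : ℝ}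
    (hcI : c ∈ Ioo u v) (hsw : SwapsHalves g u c v) :
    MixingOnS (g ∘ g) (Icc u c) ∧ MixingOnS (g ∘ g) (Icc c v) := by
  have hfix := hsw.apply_eq hcI.1.le hcI.2.le
  have hLI : Icc u c ⊆ Icc u v := Icc_subset_Icc_right hcI.2.le
  have hRI : Icc c v ⊆ Icc u v := Icc_subset_Icc_left hcI.1.le
  have hmix : MixingOnS (g ∘ g) (Icc u c) := by
    refine ((ht.transitiveOnS_comp_self_of_swapsHalves hcI hsw).mixingOnS_or_exists_swapsHalves
      ((hc.mono hRI).comp (hc.mono hLI) hsw.1) (hsw.2.comp hsw.1) hcI.1).resolve_right ?_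
    -- a swap of `[u, c]` would send the fixed point `c` into its lower piece
    rintro ⟨c', hc', hsw'⟩
    have hcc' := (hsw'.2 ⟨hc'.2.le, le_rfl⟩).2
    rw [comp_apply, hfix, hfix] at hcc'
    exact hcc'.not_gt hc'.2
  exact ⟨hmix, hmix.of_semiconj (hsw.2.comp hsw.1) (hc.mono hLI)
    (ht.image_Icc_eq_of_swapsHalves hc hm hcI hsw).1 fun _ _ => rfl⟩

end TransitiveOnS

end IntervalMaps

theorem stmt_8 (f : ℝ → ℝ) (hf : ContinuousOn f (Icc 0 1))
    (hmaps : MapsTo f (Icc 0 1) (Icc 0 1)) (htrans : TransitiveOnS f (Icc 0 1)) :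
    (MixingOnS f (Icc 0 1) ∨
      ∃ a ∈ Ioo (0:ℝ) 1, f a = a ∧ f '' Icc 0 a = Icc a 1 ∧ f '' Icc a 1 = Icc 0 a ∧
        MixingOnS (f ∘ f) (Icc 0 a) ∧ MixingOnS (f ∘ f) (Icc a 1)) ∧
    Icc (0:ℝ) 1 ⊆ closure {x ∈ Icc (0:ℝ) 1 | ∃ n : ℕ, 0 < n ∧ f^[n] x = x} := by
  refine ⟨(htrans.mixingOnS_or_exists_swapsHalves hf hmaps one_pos).imp_right ?_,
    htrans.subset_closure_periodicPts hf hmaps one_pos⟩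
  rintro ⟨a, ha, hsw⟩
  obtain ⟨hL, hR⟩ := htrans.image_Icc_eq_of_swapsHalves hf hmaps ha hsw
  obtain ⟨hmixL, hmixR⟩ := htrans.mixingOnS_comp_self_of_swapsHalves hf hmaps ha hsw
  exact ⟨a, ha, hsw.apply_eq ha.1.le ha.2.le, hL, hR, hmixL, hmixR⟩
end

section
/- Let f : [0,1] → [0,1] be a continuous transitive map. Then the set of periodic points of f is dense in [0,1]. -/
open Set Function

/-- In every nondegenerate closed subinterval of `[0,1]` a continuous transitive
map has a periodic point. -/
lemma exists_periodic_in_Icc (f : ℝ → ℝ) (hf : ContinuousOn f (Icc 0 1))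
    (hmaps : MapsTo f (Icc 0 1) (Icc 0 1)) (htrans : TransitiveOnI f)
    {A B : ℝ} (hA : 0 ≤ A) (hB : B ≤ 1) (hAB : A < B) :
    ∃ t ∈ Icc A B, ∃ n : ℕ, 0 < n ∧ f^[n] t = t := by
  by_contra hcon
  push_neg at hcon
  have hsub : Icc A B ⊆ Icc (0:ℝ) 1 := Icc_subset_Icc hA hB
  have hmapsN : ∀ N : ℕ, MapsTo f^[N] (Icc (0:ℝ) 1) (Icc 0 1) := fun N => hmaps.iterate N
  have hcontN : ∀ N : ℕ, ContinuousOn f^[N] (Icc (0:ℝ) 1) := by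
    intro N
    induction N with
    | zero => simpa using continuousOn_id
    | succ k ih =>
      rw [Function.iterate_succ']
      exact hf.comp ih (hmapsN k)
  -- sign dichotomy
  have dich : ∀ N : ℕ, 0 < N →
      (∀ t ∈ Icc A B, t < f^[N] t) ∨ (∀ t ∈ Icc A B, f^[N] t < t) := by
    intro N hN
    by_contra hd
    push_neg at hd
    obtain ⟨⟨t₁, ht₁, ht₁'⟩, ⟨t₂, ht₂, ht₂'⟩⟩ := hd
    -- ht₁' : f^[N] t₁ ≤ t₁ ; ht₂' : t₂ ≤ f^[N] t₂
    have hgc : ContinuousOn (fun t => f^[N] t - t) (Icc A B) :=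
      ((hcontN N).mono hsub).sub continuousOn_id
    have hsubu : uIcc t₁ t₂ ⊆ Icc A B := Set.ordConnected_Icc.uIcc_subset ht₁ ht₂
    have h0 : (0:ℝ) ∈ uIcc ((fun t => f^[N] t - t) t₁) ((fun t => f^[N] t - t) t₂) := by
      apply mem_uIcc.mpr
      left
      constructor
      · simpa using sub_nonpos.mpr ht₁'
      · simpa using sub_nonneg.mpr ht₂'
    obtain ⟨t, htu, hgt⟩ := intermediate_value_uIcc (hgc.mono hsubu) h0
    have hfix : f^[N] t = t := by
      have : f^[N] t - t = 0 := hgt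
      linarith [this]
    exact hcon t (hsubu htu) N hN hfix
  set x₀ : ℝ := (A + B) / 2 with hx₀def
  have hAx₀ : A < x₀ := by simp only [hx₀def]; linarith
  have hx₀B : x₀ < B := by simp only [hx₀def]; linarith
  -- first shot : a point going up
  have ne₁ : (Ioo A x₀ ∩ Icc (0:ℝ) 1).Nonempty := by
    refine ⟨(A + x₀)/2, ⟨by linarith, by linarith⟩, ⟨by linarith, by linarith⟩⟩
  have ne₂ : (Ioo x₀ B ∩ Icc (0:ℝ) 1).Nonempty := by
    refine ⟨(x₀ + B)/2, ⟨by linarith, by linarith⟩, ⟨by linarith, by linarith⟩⟩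
  obtain ⟨p, hp⟩ := htrans (Ioo A x₀) (Ioo x₀ B) isOpen_Ioo isOpen_Ioo ne₁ ne₂
  obtain ⟨y, ⟨x₁, hx₁, hyx⟩, hyV⟩ := hp
  have hx₁I : A < x₁ ∧ x₁ < x₀ := hx₁.1
  have hu₁ : x₀ < f^[p] x₁ ∧ f^[p] x₁ < B := by rw [hyx]; exact hyV
  have hppos : 0 < p := by
    rcases Nat.eq_zero_or_pos p with h0 | h; swap; · exact h
    exfalso; subst h0; simp only [Function.iterate_zero, id_eq] at hu₁
    linarith [hx₁I.2, hu₁.1]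
  -- second shot : a point going down
  obtain ⟨q, hq⟩ := htrans (Ioo x₀ B) (Ioo A x₀) isOpen_Ioo isOpen_Ioo ne₂ ne₁
  obtain ⟨z, ⟨x₂, hx₂, hzx⟩, hzV⟩ := hq
  have hx₂I : x₀ < x₂ ∧ x₂ < B := hx₂.1
  have hw₂ : A < f^[q] x₂ ∧ f^[q] x₂ < x₀ := by rw [hzx]; exact hzV
  have hqpos : 0 < q := by
    rcases Nat.eq_zero_or_pos q with h0 | h; swap; · exact h
    exfalso; subst h0; simp only [Function.iterate_zero, id_eq] at hw₂
    linarith [hx₂I.1, hw₂.2]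
  have hx₁mem : x₁ ∈ Icc A B := ⟨hx₁I.1.le, by linarith [hx₁I.2]⟩
  have hx₂mem : x₂ ∈ Icc A B := ⟨by linarith [hx₂I.1], hx₂I.2.le⟩
  have hu₁mem : f^[p] x₁ ∈ Icc A B := ⟨by linarith [hu₁.1], hu₁.2.le⟩
  have hw₂mem : f^[q] x₂ ∈ Icc A B := ⟨hw₂.1.le, by linarith [hw₂.2]⟩
  -- the sign of p is +, the sign of q is -
  have hPosp : ∀ t ∈ Icc A B, t < f^[p] t := by
    rcases dich p hppos with h | h
    · exact h
    · exfalso; have := h x₁ hx₁mem; linarith [hu₁.1, hx₁I.2]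
  have hNegq : ∀ t ∈ Icc A B, f^[q] t < t := by
    rcases dich q hqpos with h | h
    · exfalso; have := h x₂ hx₂mem; linarith [hw₂.2, hx₂I.1]
    · exact h
  -- descent for positive sign along multiples of q
  have downA : ∀ k : ℕ, (∀ t ∈ Icc A B, t < f^[(k+1)*q] t) → (∀ t ∈ Icc A B, t < f^[q] t) := by
    intro k
    induction k with
    | zero => intro h; simpa using h
    | succ k ih =>
      intro hkk
      apply ih
      rcases dich ((k+1)*q) (Nat.mul_pos (Nat.succ_pos k) hqpos) with h | h
      · exact h
      · exfalso
        have heq : f^[(k+2)*q] x₂ = f^[(k+1)*q] (f^[q] x₂) := by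
          rw [← Function.iterate_add_apply]
          congr 1
          ring
        have h1 : f^[(k+1)*q] (f^[q] x₂) < f^[q] x₂ := h _ hw₂mem
        have h2 : x₂ < f^[(k+2)*q] x₂ := hkk x₂ hx₂mem
        rw [heq] at h2
        linarith [hw₂.2, hx₂I.1]
  -- descent for negative sign along multiples of p
  have downB : ∀ k : ℕ, (∀ t ∈ Icc A B, f^[(k+1)*p] t < t) → (∀ t ∈ Icc A B, f^[p] t < t) := by
    intro k
    induction k with
    | zero => intro h; simpa using h
    | succ k ih =>
      intro hkk
      apply ih
      rcases dich ((k+1)*p) (Nat.mul_pos (Nat.succ_pos k) hppos) with h | h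
      · exfalso
        have heq : f^[(k+2)*p] x₁ = f^[(k+1)*p] (f^[p] x₁) := by
          rw [← Function.iterate_add_apply]
          congr 1
          ring
        have h1 : f^[p] x₁ < f^[(k+1)*p] (f^[p] x₁) := h _ hu₁mem
        have h2 : f^[(k+2)*p] x₁ < x₁ := hkk x₁ hx₁mem
        rw [heq] at h2
        linarith [hu₁.1, hx₁I.2]
      · exact h
  -- final clash at exponent p*q
  obtain ⟨p', hp'⟩ : ∃ p', p = p' + 1 := ⟨p - 1, (Nat.succ_pred_eq_of_pos hppos).symm⟩
  obtain ⟨q', hq'⟩ : ∃ q', q = q' + 1 := ⟨q - 1, (Nat.succ_pred_eq_of_pos hqpos).symm⟩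
  rcases dich (p * q) (Nat.mul_pos hppos hqpos) with h | h
  · have hPq : ∀ t ∈ Icc A B, t < f^[q] t := by
      apply downA p'
      have : (p' + 1) * q = p * q := by rw [hp']
      rw [this]
      exact h
    have := hPq x₂ hx₂mem
    linarith [hw₂.2, hx₂I.1]
  · have hNp : ∀ t ∈ Icc A B, f^[p] t < t := by
      apply downB q'
      have : (q' + 1) * p = p * q := by rw [hq']; ring
      rw [this]
      exact h
    have := hNp x₁ hx₁mem
    linarith [hu₁.1, hx₁I.2]

theorem stmt_9 (f : ℝ → ℝ) (hf : ContinuousOn f (Icc 0 1))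
    (hmaps : MapsTo f (Icc 0 1) (Icc 0 1)) (htrans : TransitiveOnI f) :
    Icc (0:ℝ) 1 ⊆ closure {x ∈ Icc (0:ℝ) 1 | ∃ n : ℕ, 0 < n ∧ f^[n] x = x} := by
  intro x hx
  rw [mem_closure_iff]
  intro o ho hxo
  obtain ⟨δ, hδpos, hball⟩ := Metric.isOpen_iff.mp ho x hxo
  have hx01 : (0:ℝ) ≤ x ∧ x ≤ 1 := hx
  have hA : (0:ℝ) ≤ max 0 (x - δ/2) := le_max_left _ _
  have hB : min 1 (x + δ/2) ≤ (1:ℝ) := min_le_left _ _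
  have hAB : max 0 (x - δ/2) < min 1 (x + δ/2) := by
    apply max_lt
    · apply lt_min
      · linarith
      · linarith [hx01.1]
    · apply lt_min
      · linarith [hx01.2]
      · linarith
  obtain ⟨t, htmem, n, hn, hfix⟩ := exists_periodic_in_Icc f hf hmaps htrans hA hB hAB
  refine ⟨t, ?_, ?_⟩
  · apply hball
    rw [Metric.mem_ball, Real.dist_eq, abs_lt]
    have h1 : x - δ/2 ≤ t := le_trans (le_max_right _ _) htmem.1
    have h2 : t ≤ x + δ/2 := le_trans htmem.2 (min_le_right _ _)
    constructor <;> linarith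
  · refine ⟨⟨le_trans hA htmem.1, le_trans htmem.2 hB⟩, n, hn, hfix⟩
end

section
/- Let f : [0,1] → [0,1] be a topologically mixing continuous map. Then there exist a fixed point a ∈ (0,1) and a bi-infinite sequence of intervals (U_i)_{i∈ℤ} such that: (1) U_i ⊆ U_{i+1} = f(U_i) for all i; (2) ⋂_{i∈ℤ} U_i = {a}; (3) for any nonempty open V there exists n with f^n(V) ⊇ U_0; and (4) ⋃_{i∈ℤ} U_i ⊇ (0,1). -/
open Set Function

/-- Topological mixing of `f` on `[0,1]` (relative topology). -/
def MixingOnI (f : ℝ → ℝ) : Prop :=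
  ∀ U V : Set ℝ, IsOpen U → IsOpen V → (U ∩ Icc 0 1).Nonempty →
    (V ∩ Icc 0 1).Nonempty → ∃ N : ℕ, ∀ n ≥ N, (f^[n] '' (U ∩ Icc 0 1) ∩ V).Nonempty

/-!
Mixing makes `f` exact: the iterates of any nondegenerate interval eventually cover every
compact subinterval of `(0,1)`, so an invariant nondegenerate interval contains `(0,1)`. This
yields a fixed point `a ∈ (0,1)` and arbitrarily small intervals `I ∋ a` with `I ⊆ f '' I`.
If `m` is the first time `f^[m] '' I` covers a fixed window `W` around `a`, the intervals
`f^[m - j] '' I` are nested and each is mapped onto the previous one; `m → ∞` as `I` shrinks,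
and an ultrafilter limit of these finite chains is an infinite chain `L` with `W ⊆ L 0` and
`(0,1) ⊄ L 1`. The intersection of the `L j` is an invariant interval missing a point of
`(0,1)`, hence `{a}`. The required sequence is `U (-j) = L (J + j)` for a large `J`, continued
by forward images.
-/

open Filter Topology

theorem MonotoneOn.exists_fixedPoint_mem_Icc {α : Type*} [ConditionallyCompleteLinearOrder α]
    {g : α → α} {a b : α} (hab : a ≤ b) (hg : MonotoneOn g (Icc a b)) (ha : a ≤ g a)
    (hb : g b ≤ b) : ∃ t ∈ Icc a b, g t = t := by
  set B := {t ∈ Icc a b | t ≤ g t}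
  have haB : a ∈ B := ⟨left_mem_Icc.2 hab, ha⟩
  have hBbdd : BddAbove B := ⟨b, fun t ht => ht.1.2⟩
  have ht₀ : sSup B ∈ Icc a b := ⟨le_csSup hBbdd haB, csSup_le ⟨a, haB⟩ fun t ht => ht.1.2⟩
  have hle : sSup B ≤ g (sSup B) :=
    csSup_le ⟨a, haB⟩ fun t ht => ht.2.trans (hg ht.1 ht₀ (le_csSup hBbdd ht))
  have hgt₀ : g (sSup B) ∈ Icc a b :=
    ⟨ht₀.1.trans hle, (hg ht₀ (right_mem_Icc.2 hab) ht₀.2).trans hb⟩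
  exact ⟨sSup B, ht₀, le_antisymm (le_csSup hBbdd ⟨hgt₀, hg ht₀ hgt₀ hle⟩) hle⟩

theorem ContinuousOn.forall_le_or_forall_ge_of_ne {f : ℝ → ℝ} {a b : ℝ} (hab : a < b)
    (hf : ContinuousOn f (Icc a b)) (hne : ∀ x ∈ Ioo a b, f x ≠ x) :
    (∀ x ∈ Icc a b, x ≤ f x) ∨ ∀ x ∈ Icc a b, f x ≤ x := by
  have hIoo : (∀ x ∈ Ioo a b, x ≤ f x) ∨ ∀ x ∈ Ioo a b, f x ≤ x := by
    by_contra! h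
    obtain ⟨⟨x, hx, hfx⟩, ⟨y, hy, hfy⟩⟩ := h
    obtain ⟨z, hz, hfz⟩ := isPreconnected_Ioo.intermediate_value₂ hx hy
      (hf.mono Ioo_subset_Icc_self) continuousOn_id hfx.le hfy.le
    exact hne z hz hfz
  rw [← closure_Ioo hab.ne] at hf ⊢
  exact hIoo.imp (fun h x hx => le_on_closure h continuousOn_id hf hx)
    (fun h x hx => le_on_closure h hf continuousOn_id hx)

theorem ContinuousOn.Icc_subset_image_Icc_of_not_mapsTo {f : ℝ → ℝ} {s t : ℝ} (hst : s ≤ t)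
    (hf : ContinuousOn f (Icc s t)) (hno : ¬ MapsTo f (Icc s t) (Icc s t))
    (h : sSup (f '' Icc s t) = t ∨ sInf (f '' Icc s t) = s) : Icc s t ⊆ f '' Icc s t := by
  have himg := hf.image_Icc hst
  rw [himg]
  rcases h with h | h
  · refine Icc_subset_Icc (not_lt.1 fun hlt => hno ?_) h.ge
    exact mapsTo_iff_image_subset.2 (himg ▸ Icc_subset_Icc hlt.le h.le)
  · refine Icc_subset_Icc h.le (not_lt.1 fun hlt => hno ?_)
    exact mapsTo_iff_image_subset.2 (himg ▸ Icc_subset_Icc h.ge hlt.le)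

theorem IsCompact.exists_tendsto_ultrafilter {ι : Type*} {𝒰 : Ultrafilter ι} {K : Set ℝ}
    (hK : IsCompact K) {x : ι → ℝ} (hx : ∀ᶠ n in 𝒰, x n ∈ K) :
    ∃ p ∈ K, Tendsto x 𝒰 (𝓝 p) :=
  hK.ultrafilter_le_nhds (𝒰.map x) (le_principal_iff.2 hx)

theorem image_Icc_eq_of_tendsto {ι : Type*} {𝒰 : Ultrafilter ι} {f : ℝ → ℝ} {K : Set ℝ}
    (hK : IsCompact K) (hf : ContinuousOn f K) {x y x' y' : ι → ℝ} {p q p' q' : ℝ}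
    (hxy : ∀ n, x n ≤ y n) (hsub : ∀ n, Icc (x n) (y n) ⊆ K)
    (hx : Tendsto x 𝒰 (𝓝 p)) (hy : Tendsto y 𝒰 (𝓝 q))
    (hx' : Tendsto x' 𝒰 (𝓝 p')) (hy' : Tendsto y' 𝒰 (𝓝 q'))
    (himg : ∀ᶠ n in 𝒰, f '' Icc (x n) (y n) = Icc (x' n) (y' n)) :
    f '' Icc p q = Icc p' q' := by
  have hlim : ∀ {w : ι → ℝ} {r : ℝ}, Tendsto w 𝒰 (𝓝 r) →
      (∀ᶠ n in 𝒰, w n ∈ Icc (x n) (y n)) →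
      r ∈ Icc p q ∧ r ∈ K ∧ Tendsto (f ∘ w) 𝒰 (𝓝 (f r)) := fun {w r} hw hwI => by
    have hwK : ∀ᶠ n in 𝒰, w n ∈ K := hwI.mono fun n h => hsub n h
    have hrK : r ∈ K := hK.isClosed.mem_of_tendsto hw hwK
    exact ⟨⟨le_of_tendsto_of_tendsto hx hw (hwI.mono fun n h => h.1),
      le_of_tendsto_of_tendsto hw hy (hwI.mono fun n h => h.2)⟩, hrK,
      (hf r hrK).tendsto.comp (tendsto_nhdsWithin_iff.2 ⟨hw, hwK⟩)⟩
  -- a point of `Icc p q` is the limit of its clamps to the intervals `Icc (x n) (y n)`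
  have hclamp : ∀ z ∈ Icc p q, z ∈ K ∧ f z ∈ Icc p' q' := fun z hz => by
    set w := fun n => max (x n) (min z (y n))
    have hwI : ∀ n, w n ∈ Icc (x n) (y n) :=
      fun n => ⟨le_max_left _ _, max_le (hxy n) (min_le_right _ _)⟩
    have hw : Tendsto w 𝒰 (𝓝 z) := by
      simpa [w, min_eq_left hz.2, max_eq_right hz.1] using
        hx.max ((tendsto_const_nhds (x := z)).min hy)
    obtain ⟨-, hzK, hfw⟩ := hlim hw (.of_forall hwI)
    have hev : ∀ᶠ n in 𝒰, f (w n) ∈ Icc (x' n) (y' n) :=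
      himg.mono fun n hn => hn ▸ mem_image_of_mem f (hwI n)
    exact ⟨hzK, le_of_tendsto_of_tendsto hx' hfw (hev.mono fun n h => h.1),
      le_of_tendsto_of_tendsto hfw hy' (hev.mono fun n h => h.2)⟩
  have hend : ∀ {r' : ι → ℝ} {r : ℝ}, Tendsto r' 𝒰 (𝓝 r) →
      (∀ᶠ n in 𝒰, r' n ∈ f '' Icc (x n) (y n)) → r ∈ f '' Icc p q := fun {r' r} hr h => by
    obtain ⟨w, hw⟩ := h.choice
    obtain ⟨s, -, hws⟩ := hK.exists_tendsto_ultrafilter (hw.mono fun n h => hsub n h.1)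
    obtain ⟨hs, -, hfs⟩ := hlim hws (hw.mono fun n h => h.1)
    exact ⟨s, hs, tendsto_nhds_unique hfs (hr.congr' (hw.mono fun n h => h.2.symm))⟩
  have hx'y' : ∀ᶠ n in 𝒰, x' n ≤ y' n :=
    himg.mono fun n hn => nonempty_Icc.1 (hn ▸ (nonempty_Icc.2 (hxy n)).image f)
  refine Subset.antisymm (image_subset_iff.2 fun z hz => (hclamp z hz).2) ?_
  exact (isPreconnected_Icc.image f (hf.mono fun z hz => (hclamp z hz).1)).ordConnected.out
    (hend hx' ((himg.and hx'y').mono fun n h => h.1 ▸ left_mem_Icc.2 h.2))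
    (hend hy' ((himg.and hx'y').mono fun n h => h.1 ▸ right_mem_Icc.2 h.2))

theorem monotone_image_iterate_of_subset_image {α : Type*} {f : α → α} {S : Set α}
    (hS : S ⊆ f '' S) : Monotone fun n => f^[n] '' S :=
  monotone_nat_of_le_succ fun n => by
    simpa only [iterate_succ, image_comp] using image_mono hS

theorem IsOpen.exists_Icc_subset_inter_Icc {V : Set ℝ} (hV : IsOpen V) {a b : ℝ} (hab : a < b)
    (hne : (V ∩ Icc a b).Nonempty) : ∃ u v, u < v ∧ Icc u v ⊆ V ∩ Icc a b := by
  obtain ⟨x, hxV, hx⟩ := hne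
  rw [← closure_Ioo hab.ne] at hx
  obtain ⟨l, r, hlr, hsub⟩ :=
    (hV.inter isOpen_Ioo).exists_Ioo_subset (mem_closure_iff.1 hx V hV hxV)
  refine ⟨(2 * l + r) / 3, (l + 2 * r) / 3, by linarith, fun z hz => ?_⟩
  have h : z ∈ V ∩ Ioo a b := hsub ⟨by linarith [hz.1], by linarith [hz.2]⟩
  exact ⟨h.1, Ioo_subset_Icc_self h.2⟩

section Mixing

variable {f : ℝ → ℝ}

theorem MixingOnI.eventually_Icc_subset_image_iterate (hmix : MixingOnI f)
    (hf : ContinuousOn f (Icc 0 1)) (hmaps : MapsTo f (Icc 0 1) (Icc 0 1)) {u v c d : ℝ}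
    (huv : u < v) (hI : Icc u v ⊆ Icc 0 1) (hc : 0 < c) (hd : d < 1) :
    ∀ᶠ n in atTop, Icc c d ⊆ f^[n] '' Icc u v := by
  have hU : (Ioo u v ∩ Icc 0 1).Nonempty :=
    ⟨(u + v) / 2, ⟨by linarith, by linarith⟩, hI ⟨by linarith, by linarith⟩⟩
  have hUI : Ioo u v ∩ Icc 0 1 ⊆ Icc u v := fun x hx => Ioo_subset_Icc_self hx.1
  obtain ⟨N₁, hN₁⟩ := hmix _ _ isOpen_Ioo isOpen_Iio hU ⟨0, hc, le_rfl, zero_le_one⟩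
  obtain ⟨N₂, hN₂⟩ := hmix _ _ isOpen_Ioo isOpen_Ioi hU ⟨1, hd, zero_le_one, le_rfl⟩
  filter_upwards [eventually_ge_atTop N₁, eventually_ge_atTop N₂] with n hn₁ hn₂
  obtain ⟨y₁, hy₁, hy₁c⟩ := hN₁ n hn₁
  obtain ⟨y₂, hy₂, hy₂d⟩ := hN₂ n hn₂
  exact (Icc_subset_Icc (le_of_lt hy₁c) (le_of_lt hy₂d)).trans
    ((isPreconnected_Icc.image _ ((hf.iterate hmaps n).mono hI)).ordConnected.out
      (image_mono hUI hy₁) (image_mono hUI hy₂))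

theorem MixingOnI.Ioo_subset_of_mapsTo (hmix : MixingOnI f) (hf : ContinuousOn f (Icc 0 1))
    (hmaps : MapsTo f (Icc 0 1) (Icc 0 1)) {S : Set ℝ} {u v : ℝ} (huv : u < v)
    (hI : Icc u v ⊆ Icc 0 1) (hS : Icc u v ⊆ S) (hinv : MapsTo f S S) : Ioo 0 1 ⊆ S := by
  intro x hx
  obtain ⟨n, hn⟩ := (hmix.eventually_Icc_subset_image_iterate hf hmaps huv hI hx.1 hx.2).exists
  exact (hinv.iterate n).image_subset (image_mono hS (hn ⟨le_rfl, le_rfl⟩))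

theorem MixingOnI.exists_fixedPoint_mem_Ioo (hmix : MixingOnI f)
    (hf : ContinuousOn f (Icc 0 1)) (hmaps : MapsTo f (Icc 0 1) (Icc 0 1)) :
    ∃ a ∈ Ioo (0 : ℝ) 1, f a = a := by
  by_contra! hne
  rcases hf.forall_le_or_forall_ge_of_ne zero_lt_one hne with h | h
  · have hinv : MapsTo f (Icc (1 / 2) 1) (Icc (1 / 2) 1) := fun x hx =>
      ⟨hx.1.trans (h x ⟨by linarith [hx.1], hx.2⟩), (hmaps ⟨by linarith [hx.1], hx.2⟩).2⟩
    have := hmix.Ioo_subset_of_mapsTo hf hmaps (by norm_num) (Icc_subset_Icc (by norm_num) le_rfl)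
      subset_rfl hinv (show (1 / 4 : ℝ) ∈ Ioo 0 1 by norm_num)
    norm_num at this
  · have hinv : MapsTo f (Icc 0 (1 / 2)) (Icc 0 (1 / 2)) := fun x hx =>
      ⟨(hmaps ⟨hx.1, by linarith [hx.2]⟩).1, (h x ⟨hx.1, by linarith [hx.2]⟩).trans hx.2⟩
    have := hmix.Ioo_subset_of_mapsTo hf hmaps (by norm_num) (Icc_subset_Icc le_rfl (by norm_num))
      subset_rfl hinv (show (3 / 4 : ℝ) ∈ Ioo 0 1 by norm_num)
    norm_num at this

theorem MixingOnI.exists_Icc_subset_image_Icc (hmix : MixingOnI f)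
    (hf : ContinuousOn f (Icc 0 1)) (hmaps : MapsTo f (Icc 0 1) (Icc 0 1)) {a c d : ℝ}
    (hfa : f a = a) (hc : 0 < c) (hca : c < a) (had : a < d) (hd : d < 1) :
    ∃ u v, c ≤ u ∧ u < v ∧ v ≤ d ∧ a ∈ Icc u v ∧ Icc u v ⊆ f '' Icc u v := by
  have hfI : ∀ {s t}, c ≤ s → t ≤ d → ContinuousOn f (Icc s t) :=
    fun hs ht => hf.mono (Icc_subset_Icc (hc.le.trans hs) (ht.trans hd.le))
  have hbdd : ∀ {s t}, c ≤ s → t ≤ d → BddAbove (f '' Icc s t) ∧ BddBelow (f '' Icc s t) :=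
    fun hs ht =>
      let h := isCompact_Icc.image_of_continuousOn (hfI hs ht)
      ⟨h.bddAbove, h.bddBelow⟩
  have hno : ∀ {s t}, c ≤ s → s < t → t ≤ d → ¬ MapsTo f (Icc s t) (Icc s t) :=
    fun hs hst ht hinv => by
      have := (hmix.Ioo_subset_of_mapsTo hf hmaps hst
        (Icc_subset_Icc (hc.le.trans hs) (ht.trans hd.le)) subset_rfl hinv
        ⟨half_pos hc, by linarith⟩).1
      linarith
  -- If `f '' Icc c d` stays below `d`, move the right end to a fixed point `t` of
  -- `t ↦ sSup (f '' Icc c t)`: then `Icc c t` is expanding, since it cannot be invariant.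
  -- Symmetrically on the left; if neither side applies, `Icc c d` itself is expanding.
  by_cases hM : sSup (f '' Icc c d) ≤ d
  · have hmono : MonotoneOn (fun t => sSup (f '' Icc c t)) (Icc a d) := fun s hs t ht hst =>
      csSup_le_csSup (hbdd le_rfl ht.2).1 ((nonempty_Icc.2 (hca.le.trans hs.1)).image f)
        (image_mono (Icc_subset_Icc_right hst))
    obtain ⟨t, ht, hfix⟩ := hmono.exists_fixedPoint_mem_Icc had.le
      (hfa.symm.le.trans ((hfI le_rfl had.le).le_sSup_image_Icc ⟨hca.le, le_rfl⟩)) hM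
    exact ⟨c, t, le_rfl, hca.trans_le ht.1, ht.2, ⟨hca.le, ht.1⟩,
      (hfI le_rfl ht.2).Icc_subset_image_Icc_of_not_mapsTo (hca.le.trans ht.1)
        (hno le_rfl (hca.trans_le ht.1) ht.2) (.inl hfix)⟩
  by_cases hm : c ≤ sInf (f '' Icc c d)
  · have hmono : MonotoneOn (fun s => sInf (f '' Icc s d)) (Icc c a) := fun s hs t ht hst =>
      csInf_le_csInf (hbdd hs.1 le_rfl).2 ((nonempty_Icc.2 (ht.2.trans had.le)).image f)
        (image_mono (Icc_subset_Icc_left hst))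
    obtain ⟨s, hs, hfix⟩ := hmono.exists_fixedPoint_mem_Icc hca.le hm
      (((hfI hca.le le_rfl).sInf_image_Icc_le ⟨le_rfl, had.le⟩).trans hfa.le)
    exact ⟨s, d, hs.1, hs.2.trans_lt had, le_rfl, ⟨hs.2, had.le⟩,
      (hfI hs.1 le_rfl).Icc_subset_image_Icc_of_not_mapsTo (hs.2.trans had.le)
        (hno hs.1 (hs.2.trans_lt had) le_rfl) (.inr hfix)⟩
  rw [not_le] at hM hm
  refine ⟨c, d, le_rfl, hca.trans had, le_rfl, ⟨hca.le, had.le⟩, ?_⟩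
  rw [(hfI le_rfl le_rfl).image_Icc (hca.trans had).le]
  exact Icc_subset_Icc hm.le hM.le

theorem MixingOnI.exists_Icc_subset_image_Icc_of_mem_nhds (hmix : MixingOnI f)
    (hf : ContinuousOn f (Icc 0 1)) (hmaps : MapsTo f (Icc 0 1) (Icc 0 1)) {a : ℝ}
    (ha : a ∈ Ioo 0 1) (hfa : f a = a) {s : Set ℝ} (hs : s ∈ 𝓝 a) :
    ∃ u v, u < v ∧ a ∈ Icc u v ∧ Icc u v ⊆ s ∧ Icc u v ⊆ f '' Icc u v := by
  obtain ⟨l, r, ⟨hl, hr⟩, hlr⟩ :=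
    mem_nhds_iff_exists_Ioo_subset.1 (inter_mem hs (Ioo_mem_nhds ha.1 ha.2))
  have hc := (hlr ⟨by linarith, by linarith⟩ : (l + a) / 2 ∈ s ∩ Ioo 0 1).2.1
  have hd := (hlr ⟨by linarith, by linarith⟩ : (a + r) / 2 ∈ s ∩ Ioo 0 1).2.2
  obtain ⟨u, v, hcu, huv, hvd, hau, hexp⟩ := hmix.exists_Icc_subset_image_Icc hf hmaps hfa hc
    (by linarith) (by linarith) hd
  exact ⟨u, v, huv, hau, fun z hz => (hlr ⟨by linarith [hz.1], by linarith [hz.2]⟩).1, hexp⟩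

theorem MixingOnI.exists_Icc_chain_of_length (hmix : MixingOnI f)
    (hf : ContinuousOn f (Icc 0 1)) (hmaps : MapsTo f (Icc 0 1) (Icc 0 1)) {a c d : ℝ}
    (hfa : f a = a) (hc : 0 < c) (hca : c < a) (had : a < d) (hd : d < 1) (N : ℕ) :
    ∃ x y : ℕ → ℝ, (∀ j, a ∈ Icc (x j) (y j)) ∧ (∀ j, Icc (x j) (y j) ⊆ Icc 0 1) ∧
      (∀ j, Icc (x (j + 1)) (y (j + 1)) ⊆ Icc (x j) (y j)) ∧
      (∀ j < N, f '' Icc (x (j + 1)) (y (j + 1)) = Icc (x j) (y j)) ∧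
      Icc c d ⊆ Icc (x 0) (y 0) ∧ (c < x 1 ∨ y 1 < d) := by
  classical
  have ha : a ∈ Ioo 0 1 := ⟨hc.trans hca, had.trans hd⟩
  have hs : {z | ∀ j ∈ Iic N, f^[j] z < d} ∈ 𝓝 a :=
    (eventually_all_finite (finite_Iic N)).2 fun j _ =>
      ((hf.iterate hmaps j).continuousAt (Icc_mem_nhds ha.1 ha.2)).eventually_lt_const
        (by rwa [iterate_fixed hfa])
  obtain ⟨u, v, huv, hau, hsub, hexp⟩ := hmix.exists_Icc_subset_image_Icc_of_mem_nhds hf hmaps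
    ha hfa (inter_mem hs (Icc_mem_nhds ha.1 ha.2))
  have hI : Icc u v ⊆ Icc 0 1 := fun z hz => (hsub hz).2
  have hcover : ∃ m, Icc c d ⊆ f^[m] '' Icc u v :=
    (hmix.eventually_Icc_subset_image_iterate hf hmaps huv hI hc hd).exists
  set m := Nat.find hcover
  -- the first `N` iterates of `Icc u v` stay below `d`, so covering `Icc c d` takes longer
  have hNm : N < m := by
    by_contra! hmN
    obtain ⟨z, hz, hzd⟩ := Nat.find_spec hcover ⟨hca.le.trans had.le, le_rfl⟩
    exact ((hsub hz).1 m hmN).ne hzd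
  set K := fun j => f^[m - j] '' Icc u v
  have hK : ∀ j, K j = Icc (sInf (K j)) (sSup (K j)) :=
    fun j => ((hf.iterate hmaps _).mono hI).image_Icc huv.le
  refine ⟨fun j => sInf (K j), fun j => sSup (K j), fun j => ?_, fun j => ?_, fun j => ?_,
    fun j hj => ?_, ?_, ?_⟩
  · exact hK j ▸ ⟨a, hau, iterate_fixed hfa _⟩
  · exact hK j ▸ (image_mono hI).trans (hmaps.iterate _).image_subset
  · rw [← hK, ← hK]
    exact monotone_image_iterate_of_subset_image hexp (by omega)
  · rw [← hK, ← hK, ← image_comp, ← iterate_succ', show (m - (j + 1)).succ = m - j by omega]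
  · exact hK 0 ▸ Nat.find_spec hcover
  · by_contra! h
    exact Nat.find_min hcover (by omega : m - 1 < m)
      ((Icc_subset_Icc h.1 h.2).trans (hK 1).symm.subset)

end Mixing

structure IsBackwardChain (f : ℝ → ℝ) (a : ℝ) (L : ℕ → Set ℝ) : Prop where
  ordConnected : ∀ j, (L j).OrdConnected
  subset_Icc : ∀ j, L j ⊆ Icc 0 1
  mem : ∀ j, a ∈ L j
  succ_subset : ∀ j, L (j + 1) ⊆ L j
  image_succ : ∀ j, f '' L (j + 1) = L j

theorem MixingOnI.exists_isBackwardChain {f : ℝ → ℝ} (hmix : MixingOnI f)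
    (hf : ContinuousOn f (Icc 0 1)) (hmaps : MapsTo f (Icc 0 1) (Icc 0 1)) {a c d : ℝ}
    (hfa : f a = a) (hc : 0 < c) (hca : c < a) (had : a < d) (hd : d < 1) :
    ∃ L, IsBackwardChain f a L ∧ Icc c d ⊆ L 0 ∧ ¬ Ioo 0 1 ⊆ L 1 := by
  choose x y hmem hI hsucc himg h0 h1 using
    hmix.exists_Icc_chain_of_length hf hmaps hfa hc hca had hd
  let 𝒰 : Ultrafilter ℕ := .of atTop
  have hxy : ∀ N j, x N j ≤ y N j := fun N j => (hmem N j).1.trans (hmem N j).2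
  choose p hp hxp using fun j => isCompact_Icc.exists_tendsto_ultrafilter (𝒰 := 𝒰)
    (.of_forall fun N => hI N j ⟨le_rfl, hxy N j⟩)
  choose q hq hyq using fun j => isCompact_Icc.exists_tendsto_ultrafilter (𝒰 := 𝒰)
    (.of_forall fun N => hI N j ⟨hxy N j, le_rfl⟩)
  have hnest : ∀ N j, x N j ≤ x N (j + 1) ∧ y N (j + 1) ≤ y N j :=
    fun N j => (Icc_subset_Icc_iff (hxy N (j + 1))).1 (hsucc N j)
  refine ⟨fun j => Icc (p j) (q j), ⟨fun j => ordConnected_Icc,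
    fun j => Icc_subset_Icc (hp j).1 (hq j).2,
    fun j => ⟨le_of_tendsto' (hxp j) fun N => (hmem N j).1,
      ge_of_tendsto' (hyq j) fun N => (hmem N j).2⟩,
    fun j => Icc_subset_Icc (le_of_tendsto_of_tendsto' (hxp j) (hxp (j + 1)) fun N => (hnest N j).1)
      (le_of_tendsto_of_tendsto' (hyq (j + 1)) (hyq j) fun N => (hnest N j).2),
    fun j => image_Icc_eq_of_tendsto isCompact_Icc hf (fun N => hxy N (j + 1))
      (fun N => hI N (j + 1)) (hxp (j + 1)) (hyq (j + 1)) (hxp j) (hyq j)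
      (Eventually.filter_mono (Ultrafilter.of_le atTop) (eventually_gt_atTop j) |>.mono
        fun N hN => himg N j hN)⟩,
    Icc_subset_Icc (le_of_tendsto' (hxp 0) fun N => (h0 N ⟨le_rfl, (hca.trans had).le⟩).1)
      (ge_of_tendsto' (hyq 0) fun N => (h0 N ⟨(hca.trans had).le, le_rfl⟩).2), fun hsub => ?_⟩
  rcases Ultrafilter.eventually_or.1 (.of_forall h1 : ∀ᶠ N in 𝒰, _) with h | h
  · have := (hsub ⟨half_pos hc, by linarith⟩).1
    linarith [ge_of_tendsto (hxp 1) (h.mono fun N hN => hN.le)]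
  · have := (hsub (⟨by linarith, by linarith⟩ : (d + 1) / 2 ∈ Ioo 0 1)).2
    linarith [le_of_tendsto (hyq 1) (h.mono fun N hN => hN.le)]

def bilateralChain (f : ℝ → ℝ) (L : ℕ → Set ℝ) (i : ℤ) : Set ℝ :=
  f^[i.toNat] '' L (-i).toNat

@[simp]
theorem bilateralChain_natCast (f : ℝ → ℝ) (L : ℕ → Set ℝ) (k : ℕ) :
    bilateralChain f L k = f^[k] '' L 0 := by
  simp [bilateralChain]

@[simp]
theorem bilateralChain_neg_natCast (f : ℝ → ℝ) (L : ℕ → Set ℝ) (k : ℕ) :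
    bilateralChain f L (-k) = L k := by
  simp [bilateralChain]

namespace IsBackwardChain

variable {f : ℝ → ℝ} {a : ℝ} {L : ℕ → Set ℝ}

theorem antitone (hL : IsBackwardChain f a L) : Antitone L :=
  antitone_nat_of_succ_le hL.succ_subset

theorem shift (hL : IsBackwardChain f a L) (J : ℕ) : IsBackwardChain f a fun j => L (J + j) :=
  ⟨fun _ => hL.ordConnected _, fun _ => hL.subset_Icc _, fun _ => hL.mem _,
    fun j => hL.succ_subset (J + j), fun j => hL.image_succ (J + j)⟩

theorem image_iterate (hL : IsBackwardChain f a L) (k j : ℕ) : f^[k] '' L (k + j) = L j := by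
  induction k with
  | zero => simp
  | succ k ih => rw [iterate_succ, image_comp, Nat.add_right_comm, hL.image_succ, ih]

theorem iInter_eq_singleton (hL : IsBackwardChain f a L) (hmix : MixingOnI f)
    (hf : ContinuousOn f (Icc 0 1)) (hmaps : MapsTo f (Icc 0 1) (Icc 0 1))
    (h1 : ¬ Ioo 0 1 ⊆ L 1) : ⋂ j, L j = {a} := by
  have haA : a ∈ ⋂ j, L j := mem_iInter.2 hL.mem
  refine eq_singleton_iff_unique_mem.2 ⟨haA, fun w hw => by_contra fun hwa => h1 ?_⟩
  have hinv : MapsTo f (⋂ j, L j) (⋂ j, L j) := fun x hx =>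
    mem_iInter.2 fun j => hL.image_succ j ▸ mem_image_of_mem f (mem_iInter.1 hx (j + 1))
  have hsub := (ordConnected_iInter hL.ordConnected).uIcc_subset hw haA
  exact (hmix.Ioo_subset_of_mapsTo hf hmaps (inf_lt_sup.2 hwa)
    (hsub.trans ((iInter_subset _ 0).trans (hL.subset_Icc 0))) hsub hinv).trans
    (iInter_subset _ 1)

theorem exists_subset_Icc (hL : IsBackwardChain f a L) (hA : ⋂ j, L j = {a}) {c d : ℝ}
    (hca : c < a) (had : a < d) : ∃ J, L J ⊆ Icc c d := by
  have hout : ∀ {z}, z ≠ a → ∃ j, z ∉ L j := fun {z} hz => by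
    by_contra! h
    exact hz (by simpa [hA] using mem_iInter.2 h)
  obtain ⟨j₁, hj₁⟩ := hout hca.ne
  obtain ⟨j₂, hj₂⟩ := hout had.ne'
  refine ⟨max j₁ j₂, fun z hz => ⟨not_lt.1 fun hzc => hj₁ ?_, not_lt.1 fun hzd => hj₂ ?_⟩⟩
  · exact hL.antitone (le_max_left _ _)
      ((hL.ordConnected _).out hz (hL.mem _) ⟨hzc.le, hca.le⟩)
  · exact hL.antitone (le_max_right _ _)
      ((hL.ordConnected _).out (hL.mem _) hz ⟨had.le, hzd.le⟩)

theorem subset_image (hL : IsBackwardChain f a L) (j : ℕ) : L j ⊆ f '' L j :=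
  (hL.image_succ j).symm.subset.trans (image_mono (hL.succ_subset j))

theorem image_bilateralChain (hL : IsBackwardChain f a L) (i : ℤ) :
    f '' bilateralChain f L i = bilateralChain f L (i + 1) := by
  cases i with
  | ofNat k =>
    rw [Int.ofNat_eq_natCast, bilateralChain_natCast, ← Nat.cast_succ, bilateralChain_natCast,
      iterate_succ', image_comp]
  | negSucc k =>
    rw [Int.negSucc_eq, show -((k : ℤ) + 1) + 1 = -k by ring, ← Nat.cast_succ,
      bilateralChain_neg_natCast, bilateralChain_neg_natCast, hL.image_succ]

theorem bilateralChain_subset_succ (hL : IsBackwardChain f a L) (i : ℤ) :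
    bilateralChain f L i ⊆ bilateralChain f L (i + 1) := by
  cases i with
  | ofNat k =>
    rw [Int.ofNat_eq_natCast, bilateralChain_natCast, ← Nat.cast_succ, bilateralChain_natCast]
    exact monotone_image_iterate_of_subset_image (hL.subset_image 0) k.le_succ
  | negSucc k =>
    rw [Int.negSucc_eq, show -((k : ℤ) + 1) + 1 = -k by ring, ← Nat.cast_succ,
      bilateralChain_neg_natCast, bilateralChain_neg_natCast]
    exact hL.succ_subset k

theorem ordConnected_bilateralChain (hL : IsBackwardChain f a L) (hf : ContinuousOn f (Icc 0 1))
    (hmaps : MapsTo f (Icc 0 1) (Icc 0 1)) (i : ℤ) : (bilateralChain f L i).OrdConnected :=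
  ((hL.ordConnected _).isPreconnected.image _
    ((hf.iterate hmaps _).mono (hL.subset_Icc _))).ordConnected

theorem bilateralChain_subset_Icc (hL : IsBackwardChain f a L)
    (hmaps : MapsTo f (Icc 0 1) (Icc 0 1)) (i : ℤ) : bilateralChain f L i ⊆ Icc 0 1 :=
  (image_mono (hL.subset_Icc _)).trans (hmaps.iterate _).image_subset

theorem iInter_bilateralChain (hL : IsBackwardChain f a L) (hfa : f a = a)
    (hA : ⋂ j, L j = {a}) : ⋂ i, bilateralChain f L i = {a} := by
  refine eq_singleton_iff_unique_mem.2
    ⟨mem_iInter.2 fun i => ⟨a, hL.mem _, iterate_fixed hfa _⟩, fun w hw => ?_⟩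
  have : w ∈ ⋂ j, L j := mem_iInter.2 fun j => by simpa using mem_iInter.1 hw (-j)
  rwa [hA] at this

theorem Ioo_subset_iUnion_bilateralChain (hL : IsBackwardChain f a L) (hmix : MixingOnI f)
    (hf : ContinuousOn f (Icc 0 1)) (hmaps : MapsTo f (Icc 0 1) (Icc 0 1)) {u v : ℝ} {i : ℤ}
    (huv : u < v) (hI : Icc u v ⊆ Icc 0 1) (hsub : Icc u v ⊆ bilateralChain f L i) :
    Ioo 0 1 ⊆ ⋃ i, bilateralChain f L i :=
  hmix.Ioo_subset_of_mapsTo hf hmaps huv hI (hsub.trans (subset_iUnion _ i)) fun x hx => by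
    obtain ⟨i, hi⟩ := mem_iUnion.1 hx
    exact mem_iUnion.2 ⟨i + 1, hL.image_bilateralChain i ▸ mem_image_of_mem f hi⟩

end IsBackwardChain

theorem stmt_10 (f : ℝ → ℝ) (hf : ContinuousOn f (Icc 0 1))
    (hmaps : MapsTo f (Icc 0 1) (Icc 0 1)) (hmix : MixingOnI f) :
    ∃ a ∈ Ioo (0:ℝ) 1, f a = a ∧
      ∃ U : ℤ → Set ℝ, (∀ i, (U i).OrdConnected ∧ U i ⊆ Icc 0 1) ∧
        (∀ i, U i ⊆ U (i + 1) ∧ U (i + 1) = f '' U i) ∧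
        (⋂ i, U i) = {a} ∧
        (∀ V : Set ℝ, IsOpen V → (V ∩ Icc 0 1).Nonempty →
          ∃ n : ℕ, U 0 ⊆ f^[n] '' (V ∩ Icc 0 1)) ∧
        Ioo (0:ℝ) 1 ⊆ ⋃ i, U i := by
  obtain ⟨a, ha, hfa⟩ := hmix.exists_fixedPoint_mem_Ioo hf hmaps
  have hc : 0 < a / 2 := by linarith [ha.1]
  have hca : a / 2 < a := by linarith [ha.1]
  have had : a < (a + 1) / 2 := by linarith [ha.2]
  have hd : (a + 1) / 2 < 1 := by linarith [ha.2]
  obtain ⟨L, hL, hW, h1⟩ := hmix.exists_isBackwardChain hf hmaps hfa hc hca had hd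
  obtain ⟨J, hJ⟩ := hL.exists_subset_Icc (hL.iInter_eq_singleton hmix hf hmaps h1) hca had
  have hL' := hL.shift J
  have hW' : Icc (a / 2) ((a + 1) / 2) ⊆ bilateralChain f (fun j => L (J + j)) J := by
    rwa [bilateralChain_natCast, hL.image_iterate]
  refine ⟨a, ha, hfa, bilateralChain f fun j => L (J + j),
    fun i => ⟨hL'.ordConnected_bilateralChain hf hmaps i, hL'.bilateralChain_subset_Icc hmaps i⟩,
    fun i => ⟨hL'.bilateralChain_subset_succ i, (hL'.image_bilateralChain i).symm⟩,
    hL'.iInter_bilateralChain hfa (hL'.iInter_eq_singleton hmix hf hmaps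
      fun h => h1 (h.trans (hL.antitone (by omega)))), fun V hV hVne => ?_,
    hL'.Ioo_subset_iUnion_bilateralChain hmix hf hmaps (hca.trans had)
      (Icc_subset_Icc hc.le hd.le) hW'⟩
  obtain ⟨u, v, huv, hsub⟩ := hV.exists_Icc_subset_inter_Icc zero_lt_one hVne
  obtain ⟨n, hn⟩ := (hmix.eventually_Icc_subset_image_iterate hf hmaps huv
    (hsub.trans inter_subset_right) hc hd).exists
  exact ⟨n, by simpa [bilateralChain] using hJ.trans (hn.trans (image_mono hsub))⟩
end

section
/- Let f : [0,1] → [0,1] be a topologically mixing continuous map and let A(f) be the set of those endpoints e ∈ {0,1} that have no preimage under any iterate of f in the open interval (0,1). Then exactly one of the following holds: A(f) = ∅; A(f) = {0} and f(0) = 0; A(f) = {1} and f(1) = 1; A(f) = {0,1} with f(0) = 0 and f(1) = 1; or A(f) = {0,1} with f(0) = 1 and f(1) = 0. Moreover, if I ⊆ [0,1] is a closed interval with I ∩ A(f) = ∅, then for any nonempty open U there exists n such that f^m(U) ⊇ I for all m > n. -/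
open Set Function

/-- The set of endpoints of `[0,1]` having no preimage under any iterate of `f`
inside `(0,1)`. -/
def EndSet (f : ℝ → ℝ) : Set ℝ :=
  {e | e ∈ ({0, 1} : Set ℝ) ∧ ∀ n : ℕ, ∀ x ∈ Ioo (0:ℝ) 1, f^[n] x ≠ e}

/-!
Mixing makes the image of `[0,1]` under each iterate `f^[n]` dense, and it is compact, so
`f^[n]` maps `[0,1]` onto itself. Hence every `e ∈ EndSet f` has an `f`-preimage in `[0,1]`; it
cannot lie in `(0,1)`, and it lies again in `EndSet f`. So `f` maps `EndSet f ⊆ {0,1}` onto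
itself, which leaves exactly the five listed cases.

For the covering statement, shrink `U` to a relatively open subinterval `J` of `[0,1]`. Every
`f^[m] '' J` is an interval, and by mixing it eventually meets both `(0,z)` and `(z,1)`, so it
eventually contains any given `z ∈ (0,1)`. An endpoint outside `EndSet f` is an iterate of such
a `z`, so eventually `f^[m] '' J` contains `a` and `b`, and hence all of `[a,b]`.
-/

theorem Set.SurjOn.pair_cases {α : Type*} {g : α → α} {A : Set α} {a b : α} (hab : a ≠ b)
    (hA : A ⊆ {a, b}) (hg : SurjOn g A A) :
    A = ∅ ∨ (A = {a} ∧ g a = a) ∨ (A = {b} ∧ g b = b) ∨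
      (A = {a, b} ∧ g a = a ∧ g b = b) ∨ (A = {a, b} ∧ g a = b ∧ g b = a) := by
  rcases subset_pair_iff_eq.mp hA with rfl | rfl | rfl | rfl
  · exact Or.inl rfl
  · obtain ⟨x, rfl, hx⟩ := hg (mem_singleton a)
    exact Or.inr (Or.inl ⟨rfl, hx⟩)
  · obtain ⟨x, rfl, hx⟩ := hg (mem_singleton b)
    exact Or.inr (Or.inr (Or.inl ⟨rfl, hx⟩))
  · obtain ⟨x, hx, hxa⟩ := hg (mem_insert a {b})
    obtain ⟨y, hy, hyb⟩ := hg (mem_insert_of_mem a (mem_singleton b))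
    rcases hx with rfl | rfl <;> rcases hy with rfl | rfl
    · exact absurd (hxa.symm.trans hyb) hab
    · exact Or.inr (Or.inr (Or.inr (Or.inl ⟨rfl, hxa, hyb⟩)))
    · exact Or.inr (Or.inr (Or.inr (Or.inr ⟨rfl, hyb, hxa⟩)))
    · exact absurd (hxa.symm.trans hyb) hab

theorem Set.MapsTo.iterate_image_subset_of_le {α : Type*} {f : α → α} {s : Set α}
    (hmaps : MapsTo f s s) {n m : ℕ} (hnm : n ≤ m) : f^[m] '' s ⊆ f^[n] '' s := by
  obtain ⟨k, rfl⟩ := Nat.exists_eq_add_of_le hnm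
  rw [iterate_add, image_comp]
  exact image_mono (hmaps.iterate k).image_subset

namespace MixingOnI

variable {f : ℝ → ℝ}

theorem eventually_mem_iterate_image_of_mem_Ioo (hmix : MixingOnI f)
    (hf : ContinuousOn f (Icc 0 1)) (hmaps : MapsTo f (Icc 0 1) (Icc 0 1)) {U : Set ℝ}
    (hU : IsOpen U) (hne : (U ∩ Icc 0 1).Nonempty) (hconn : IsPreconnected (U ∩ Icc 0 1))
    {z : ℝ} (hz : z ∈ Ioo (0 : ℝ) 1) :
    ∀ᶠ m in Filter.atTop, z ∈ f^[m] '' (U ∩ Icc 0 1) := by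
  have below := Filter.eventually_atTop.mpr <|
    hmix U (Iio z) hU isOpen_Iio hne ⟨0, hz.1, le_rfl, zero_le_one⟩
  have above := Filter.eventually_atTop.mpr <|
    hmix U (Ioi z) hU isOpen_Ioi hne ⟨1, hz.2, zero_le_one, le_rfl⟩
  filter_upwards [below, above] with m ⟨p, hp, hpz⟩ ⟨q, hq, hzq⟩
  have himage : IsPreconnected (f^[m] '' (U ∩ Icc 0 1)) :=
    hconn.image _ ((hf.iterate hmaps m).mono inter_subset_right)
  exact himage.ordConnected.out hp hq ⟨le_of_lt hpz, le_of_lt hzq⟩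

theorem Icc_subset_iterate_image (hmix : MixingOnI f) (hf : ContinuousOn f (Icc 0 1))
    (hmaps : MapsTo f (Icc 0 1) (Icc 0 1)) (n : ℕ) : Icc 0 1 ⊆ f^[n] '' Icc 0 1 := by
  have hclosed : IsClosed (f^[n] '' Icc 0 1) :=
    (isCompact_Icc.image_of_continuousOn (hf.iterate hmaps n)).isClosed
  have hIoo : Ioo 0 1 ⊆ f^[n] '' Icc 0 1 := fun z hz => by
    obtain ⟨m, hm⟩ := ((hmix.eventually_mem_iterate_image_of_mem_Ioo hf hmaps isOpen_univ
      (by simp) (by simpa using isPreconnected_Icc) hz).and (Filter.eventually_ge_atTop n)).exists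
    rw [univ_inter] at hm
    exact hmaps.iterate_image_subset_of_le hm.2 hm.1
  simpa [closure_Ioo zero_ne_one] using hclosed.closure_subset_iff.mpr hIoo

theorem surjOn_endSet (hmix : MixingOnI f) (hf : ContinuousOn f (Icc 0 1))
    (hmaps : MapsTo f (Icc 0 1) (Icc 0 1)) : SurjOn f (EndSet f) (EndSet f) := by
  rintro e ⟨he, hnot⟩
  have he' : e ∈ Icc (0 : ℝ) 1 := by rcases he with rfl | rfl <;> simp
  obtain ⟨x, hx, rfl⟩ := hmix.Icc_subset_iterate_image hf hmaps 1 he'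
  have hx01 : x ∈ ({0, 1} : Set ℝ) :=
    Icc_sdiff_Ioo_same (zero_le_one' ℝ) ▸ ⟨hx, fun hx' => hnot 1 x hx' rfl⟩
  refine ⟨x, ⟨hx01, fun n y hy hyx => hnot (n + 1) y hy ?_⟩, rfl⟩
  rw [iterate_succ_apply', hyx, iterate_one]

theorem eventually_mem_iterate_image (hmix : MixingOnI f) (hf : ContinuousOn f (Icc 0 1))
    (hmaps : MapsTo f (Icc 0 1) (Icc 0 1)) {U : Set ℝ} (hU : IsOpen U)
    (hne : (U ∩ Icc 0 1).Nonempty) (hconn : IsPreconnected (U ∩ Icc 0 1)) {z : ℝ}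
    (hz : z ∈ Icc (0 : ℝ) 1) (hzA : z ∉ EndSet f) :
    ∀ᶠ m in Filter.atTop, z ∈ f^[m] '' (U ∩ Icc 0 1) := by
  by_cases hz' : z ∈ Ioo (0 : ℝ) 1
  · exact hmix.eventually_mem_iterate_image_of_mem_Ioo hf hmaps hU hne hconn hz'
  have hz01 : z ∈ ({0, 1} : Set ℝ) := Icc_sdiff_Ioo_same (zero_le_one' ℝ) ▸ ⟨hz, hz'⟩
  obtain ⟨n, x, hx, hxz⟩ : ∃ n : ℕ, ∃ x ∈ Ioo (0 : ℝ) 1, f^[n] x = z := by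
    simpa [and_assoc] using not_and.mp hzA hz01
  filter_upwards [(Filter.tendsto_sub_atTop_nat n).eventually
      (hmix.eventually_mem_iterate_image_of_mem_Ioo hf hmaps hU hne hconn hx),
    Filter.eventually_ge_atTop n] with m ⟨y, hy, hyx⟩ hnm
  refine ⟨y, hy, ?_⟩
  rw [← Nat.sub_add_cancel hnm, add_comm, iterate_add_apply, hyx, hxz]

theorem eventually_Icc_subset_iterate_image (hmix : MixingOnI f) (hf : ContinuousOn f (Icc 0 1))
    (hmaps : MapsTo f (Icc 0 1) (Icc 0 1)) {U : Set ℝ} (hU : IsOpen U)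
    (hne : (U ∩ Icc 0 1).Nonempty) (hconn : IsPreconnected (U ∩ Icc 0 1)) {a b : ℝ}
    (hsub : Icc a b ⊆ Icc 0 1) (hA : Icc a b ∩ EndSet f = ∅) :
    ∀ᶠ m in Filter.atTop, Icc a b ⊆ f^[m] '' (U ∩ Icc 0 1) := by
  rcases lt_or_ge b a with hba | hab
  · simp [Icc_eq_empty_of_lt hba]
  have eventually_mem {z : ℝ} (hz : z ∈ Icc a b) :=
    hmix.eventually_mem_iterate_image hf hmaps hU hne hconn (hsub hz)
      fun hzA => (eq_empty_iff_forall_notMem.mp hA) z ⟨hz, hzA⟩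
  filter_upwards [eventually_mem (left_mem_Icc.mpr hab),
    eventually_mem (right_mem_Icc.mpr hab)] with m ha hb
  exact (hconn.image _ ((hf.iterate hmaps m).mono inter_subset_right)).ordConnected.out ha hb

end MixingOnI

theorem stmt_11 (f : ℝ → ℝ) (hf : ContinuousOn f (Icc 0 1))
    (hmaps : MapsTo f (Icc 0 1) (Icc 0 1)) (hmix : MixingOnI f) :
    (EndSet f = ∅ ∨
      (EndSet f = {0} ∧ f 0 = 0) ∨
      (EndSet f = {1} ∧ f 1 = 1) ∨
      (EndSet f = {0, 1} ∧ f 0 = 0 ∧ f 1 = 1) ∨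
      (EndSet f = {0, 1} ∧ f 0 = 1 ∧ f 1 = 0)) ∧
    ∀ a b : ℝ, Icc a b ⊆ Icc 0 1 → Icc a b ∩ EndSet f = ∅ →
      ∀ U : Set ℝ, IsOpen U → (U ∩ Icc 0 1).Nonempty →
        ∃ n : ℕ, ∀ m > n, Icc a b ⊆ f^[m] '' (U ∩ Icc 0 1) := by
  refine ⟨(hmix.surjOn_endSet hf hmaps).pair_cases zero_ne_one fun e he => he.1, ?_⟩
  intro a b hsub hA U hU ⟨x, hxU, hx⟩
  obtain ⟨ε, hε, hball⟩ := Metric.isOpen_iff.mp hU x hxU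
  have hconn : IsPreconnected (Metric.ball x ε ∩ Icc 0 1) := by
    rw [Real.ball_eq_Ioo]
    exact (ordConnected_Ioo.inter ordConnected_Icc).isPreconnected
  obtain ⟨n, hn⟩ := Filter.eventually_atTop.mp <|
    hmix.eventually_Icc_subset_iterate_image hf hmaps Metric.isOpen_ball
      ⟨x, Metric.mem_ball_self hε, hx⟩ hconn hsub hA
  exact ⟨n, fun m hm => (hn m hm.le).trans (image_mono (inter_subset_inter_left _ hball))⟩
end

section
/- Let f : [0,1] → [0,1] be a topologically mixing continuous map with f(0) = 0, and suppose 0 has no preimage under any iterate of f in (0,1). Then there exists a sequence of fixed points c_n of f with c_n ≠ 0 and c_n → 0. -/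
open Set Function Filter

lemma exists_fix_aux (f : ℝ → ℝ) (hf : ContinuousOn f (Icc 0 1))
    (hmaps : MapsTo f (Icc 0 1) (Icc 0 1)) (hmix : MixingOnI f)
    (hfix : f 0 = 0) (hnopre : ∀ n : ℕ, ∀ x ∈ Ioo (0:ℝ) 1, f^[n] x ≠ 0)
    (ε : ℝ) (hε : ε ∈ Ioo (0:ℝ) 1) : ∃ c ∈ Ioo 0 ε, f c = c := by
  -- f is positive on (0,1)
  have hpos : ∀ x ∈ Ioo (0:ℝ) 1, 0 < f x := by
    intro x hx
    have h1 := hnopre 1 x hx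
    rw [Function.iterate_one] at h1
    exact lt_of_le_of_ne (hmaps ⟨hx.1.le, hx.2.le⟩).1 (Ne.symm h1)
  -- f 1 ≠ 0
  have hf1 : f 1 ≠ 0 := by
    intro h1
    have hlt : ∀ x ∈ Icc (0:ℝ) 1, f x < 1 := by
      intro x hx
      rcases eq_or_lt_of_le hx.1 with h0 | h0
      · rw [← h0, hfix]; norm_num
      rcases eq_or_lt_of_le hx.2 with h2 | h2
      · rw [h2, h1]; norm_num
      have hne : f x ≠ 1 := by
        intro hfx1
        have := hnopre 2 x ⟨h0, h2⟩
        rw [show (2:ℕ) = 1 + 1 from rfl, Function.iterate_succ_apply,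
          Function.iterate_one, hfx1, h1] at this
        exact this rfl
      exact lt_of_le_of_ne (hmaps hx).2 hne
    obtain ⟨z, hz, hzmax⟩ := isCompact_Icc.exists_isMaxOn
      (⟨0, by norm_num⟩ : (Icc (0:ℝ) 1).Nonempty) hf
    obtain ⟨N, hN⟩ := hmix (Ioo (-1) 2) (Ioo (f z) 2) isOpen_Ioo isOpen_Ioo
      ⟨0, by constructor <;> [norm_num; exact ⟨le_refl 0, by norm_num⟩]⟩
      ⟨1, ⟨hlt z hz, by norm_num⟩, by norm_num⟩
    obtain ⟨y, ⟨x, hx, hxy⟩, hyV⟩ := hN (N + 1) (Nat.le_succ N)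
    have hxI : x ∈ Icc (0:ℝ) 1 := hx.2
    have h1 : f^[N] x ∈ Icc (0:ℝ) 1 := hmaps.iterate N hxI
    have : y ≤ f z := by
      rw [← hxy, Function.iterate_succ_apply']
      exact hzmax h1
    exact absurd hyV.1 (not_lt.mpr this)
  -- main argument
  by_contra hno
  push_neg at hno
  have hsub : Ioo (0:ℝ) ε ⊆ Ioo 0 1 := Ioo_subset_Ioo le_rfl hε.2.le
  -- IVT: no mixed signs
  have ivt : ∀ x ∈ Ioo (0:ℝ) ε, ∀ y ∈ Ioo (0:ℝ) ε, f x < x → y < f y → False := by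
    intro x hx y hy h1 h2
    set g : ℝ → ℝ := fun t => f t - t with hg
    have hgc : ContinuousOn g (Icc 0 1) := hf.sub continuousOn_id
    rcases le_total x y with hxy | hxy
    · have hIsub : Icc x y ⊆ Icc (0:ℝ) 1 := Icc_subset_Icc hx.1.le (hy.2.le.trans hε.2.le)
      have := intermediate_value_Icc hxy (hgc.mono hIsub)
        (show (0:ℝ) ∈ Icc (g x) (g y) from ⟨by simp [hg]; linarith, by simp [hg]; linarith⟩)
      obtain ⟨c, hc, hc0⟩ := this
      have : f c = c := by have : f c - c = 0 := hc0; linarith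
      exact hno c ⟨lt_of_lt_of_le hx.1 hc.1, lt_of_le_of_lt hc.2 hy.2⟩ this
    · have hIsub : Icc y x ⊆ Icc (0:ℝ) 1 := Icc_subset_Icc hy.1.le (hx.2.le.trans hε.2.le)
      have := intermediate_value_Icc' hxy (hgc.mono hIsub)
        (show (0:ℝ) ∈ Icc (g x) (g y) from ⟨by simp [hg]; linarith, by simp [hg]; linarith⟩)
      obtain ⟨c, hc, hc0⟩ := this
      have : f c = c := by have : f c - c = 0 := hc0; linarith
      exact hno c ⟨lt_of_lt_of_le hy.1 hc.1, lt_of_le_of_lt hc.2 hx.2⟩ this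
  have hmem : ε / 2 ∈ Ioo (0:ℝ) ε := ⟨by linarith [hε.1], by linarith [hε.1]⟩
  rcases lt_trichotomy (f (ε / 2)) (ε / 2) with hc | hc | hc
  · -- f x < x on all of (0, ε) : trap Ioo 0 ε
    have hall : ∀ x ∈ Ioo (0:ℝ) ε, f x < x := by
      intro x hx
      rcases lt_trichotomy (f x) x with h | h | h
      · exact h
      · exact absurd h (hno x hx)
      · exact absurd (ivt (ε/2) hmem x hx hc h) (fun h => h)
    have htrap : MapsTo f (Ioo (0:ℝ) ε) (Ioo (0:ℝ) ε) := by
      intro x hx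
      exact ⟨hpos x (hsub hx), lt_trans (hall x hx) hx.2⟩
    obtain ⟨N, hN⟩ := hmix (Ioo 0 ε) (Ioo ε 2) isOpen_Ioo isOpen_Ioo
      ⟨ε/2, hmem, ⟨hmem.1.le, by linarith [hε.2]⟩⟩
      ⟨1, ⟨hε.2, by norm_num⟩, by norm_num⟩
    obtain ⟨y, ⟨x, hx, hxy⟩, hyV⟩ := hN N le_rfl
    have hxU : x ∈ Ioo (0:ℝ) ε := hx.1
    have : y ∈ Ioo (0:ℝ) ε := by rw [← hxy]; exact htrap.iterate N hxU
    exact absurd hyV.1 (not_lt.mpr this.2.le)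
  · exact hno (ε/2) hmem hc
  · -- x < f x on all of (0, ε) : trap Icc δ 1
    have hall : ∀ x ∈ Ioo (0:ℝ) ε, x < f x := by
      intro x hx
      rcases lt_trichotomy (f x) x with h | h | h
      · exact absurd (ivt x hx (ε/2) hmem h hc) (fun h => h)
      · exact absurd h (hno x hx)
      · exact h
    obtain ⟨z, hz, hzmin⟩ := isCompact_Icc.exists_isMinOn
      (⟨ε, ⟨le_rfl, hε.2.le⟩⟩ : (Icc ε 1).Nonempty)
      (hf.mono (Icc_subset_Icc hε.1.le le_rfl))
    have hm : 0 < f z := by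
      rcases eq_or_lt_of_le hz.2 with h | h
      · rw [h]; exact lt_of_le_of_ne (hmaps ⟨by norm_num, le_rfl⟩).1 (Ne.symm hf1)
      · exact hpos z ⟨lt_of_lt_of_le hε.1 hz.1, h⟩
    set δ : ℝ := min (f z) ε with hδ
    have hδpos : 0 < δ := lt_min hm hε.1
    have hδε : δ ≤ ε := min_le_right _ _
    have hδ1 : δ < 1 := lt_of_le_of_lt hδε hε.2
    have hKsub : Icc δ 1 ⊆ Icc (0:ℝ) 1 := Icc_subset_Icc hδpos.le le_rfl
    have htrap : MapsTo f (Icc δ 1) (Icc δ 1) := by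
      intro x hx
      refine ⟨?_, (hmaps (hKsub hx)).2⟩
      rcases lt_or_ge x ε with h | h
      · exact le_of_lt (lt_of_le_of_lt hx.1 (hall x ⟨lt_of_lt_of_le hδpos hx.1, h⟩))
      · exact le_trans (min_le_left _ _) (hzmin ⟨h, hx.2⟩)
    obtain ⟨N, hN⟩ := hmix (Ioo δ 2) (Ioo (-1) δ) isOpen_Ioo isOpen_Ioo
      ⟨1, ⟨hδ1, by norm_num⟩, by norm_num⟩
      ⟨0, ⟨by norm_num, hδpos⟩, ⟨le_rfl, by norm_num⟩⟩
    obtain ⟨y, ⟨x, hx, hxy⟩, hyV⟩ := hN N le_rfl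
    have hxK : x ∈ Icc δ 1 := ⟨hx.1.1.le, hx.2.2⟩
    have : y ∈ Icc δ 1 := by rw [← hxy]; exact htrap.iterate N hxK
    exact absurd hyV.2 (not_lt.mpr this.1)

theorem stmt_12 (f : ℝ → ℝ) (hf : ContinuousOn f (Icc 0 1))
    (hmaps : MapsTo f (Icc 0 1) (Icc 0 1)) (hmix : MixingOnI f)
    (hfix : f 0 = 0) (hnopre : ∀ n : ℕ, ∀ x ∈ Ioo (0:ℝ) 1, f^[n] x ≠ 0) :
    ∃ c : ℕ → ℝ, (∀ n, c n ∈ Icc (0:ℝ) 1 ∧ f (c n) = c n ∧ c n ≠ 0) ∧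
      Tendsto c atTop (nhds 0) := by
  have key : ∀ n : ℕ, ∃ c ∈ Ioo (0:ℝ) (1 / (n + 2)), f c = c := by
    intro n
    apply exists_fix_aux f hf hmaps hmix hfix hnopre
    constructor
    · positivity
    · rw [div_lt_one (by positivity)]
      have : (0:ℝ) ≤ n := Nat.cast_nonneg n
      linarith
  choose c hc1 hc2 using key
  refine ⟨c, fun n => ⟨⟨(hc1 n).1.le, le_trans (hc1 n).2.le ?_⟩, hc2 n, (hc1 n).1.ne'⟩, ?_⟩
  · rw [div_le_one (by positivity)]
    have : (0:ℝ) ≤ n := Nat.cast_nonneg n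
    linarith
  · apply squeeze_zero (fun n => (hc1 n).1.le) (fun n => ?_) tendsto_one_div_add_atTop_nhds_zero_nat
    have h1 : (0:ℝ) < (n:ℝ) + 1 := by positivity
    have h2 : (n:ℝ) + 1 ≤ (n:ℝ) + 2 := by linarith
    exact (hc1 n).2.le.trans (one_div_le_one_div_of_le h1 h2)
end

section
/- Let f : [0,1] → [0,1] be continuous and suppose f has an L-scheme: there exist a fixed point x and a point y such that either f^2(y) ≤ x < y < f(y) or f(y) < y < x ≤ f^2(y). Then the topological entropy of f is at least ln 2. -/
/-
When `f (f y) ≤ x < y < f y`, the intermediate value theorem gives `r ∈ (y, f y]` with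
`f r = x`. The intervals `[x, y]` and `[y, r]` both `f`-cover `[x, r]`, so every finite itinerary through them is realised by a closed
set of points. The itineraries of length `n + 2` ending in `[y, r]` are realised by pairwise
disjoint sets: two orbits that split at a time `k < n` pass through `y`, hence `f y = r`, and from
time `k + 2` on they sit at the fixed point `x ∉ [y, r]`. These `2 ^ n` disjoint compact sets form
a horseshoe for `f^[n + 2]`, so `h(f) ≥ n / (n + 2) * log 2` for every `n`. The second kind of
L-scheme is the first one for the conjugate map `t ↦ -f (-t)`.
-/

open Set Function
open scoped ENNReal

section Itinerary

variable {X ι : Type*} (g : X → X) (K : ι → Set X)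

def itinerarySet {m : ℕ} (c : Fin m → ι) : Set X := {z | ∀ j : Fin m, g^[j] z ∈ K (c j)}

variable {g K}

lemma itinerarySet_zero (c : Fin 0 → ι) : itinerarySet g K c = univ := by
  simp [itinerarySet]

lemma itinerarySet_succ {m : ℕ} (c : Fin (m + 1) → ι) :
    itinerarySet g K c = K (c 0) ∩ g ⁻¹' itinerarySet g K (Fin.tail c) := by
  ext z
  simp [itinerarySet, Fin.forall_fin_succ, Fin.tail, iterate_succ_apply]

lemma isClosed_itinerarySet [TopologicalSpace X] (hK : ∀ i, IsClosed (K i))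
    (hg : ∀ i, ContinuousOn g (K i)) {m : ℕ} (c : Fin m → ι) :
    IsClosed (itinerarySet g K c) := by
  induction m with
  | zero => simp [itinerarySet_zero]
  | succ m ih =>
    rw [itinerarySet_succ]
    exact (hg _).preimage_isClosed_of_isClosed (hK _) (ih _)

lemma subset_image_iterate_itinerarySet {A : Set X} (hKA : ∀ i, K i ⊆ A)
    (hA : ∀ i, A ⊆ g '' K i) {m : ℕ} (c : Fin m → ι) :
    A ⊆ g^[m] '' (itinerarySet g K c ∩ A) := by
  induction m with
  | zero => simp [itinerarySet_zero]
  | succ m ih =>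
    have hstep : itinerarySet g K (Fin.tail c) ∩ A ⊆ g '' (itinerarySet g K c ∩ A) := by
      rintro _ ⟨hz, hzA⟩
      obtain ⟨w, hw, rfl⟩ := hA (c 0) hzA
      exact ⟨w, ⟨by rw [itinerarySet_succ]; exact ⟨hw, hz⟩, hKA _ hw⟩, rfl⟩
    rw [iterate_succ, image_comp]
    exact (ih _).trans (image_mono hstep)

lemma exists_iterate_mem_of_subset_image {A : Set X} (hKA : ∀ i, K i ⊆ A)
    (hA : ∀ i, A ⊆ g '' K i) (hne : A.Nonempty) {m : ℕ} (c : Fin m → ι) :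
    ∃ z ∈ A, ∀ j : Fin m, g^[j] z ∈ K (c j) := by
  obtain ⟨z, ⟨hz, hzA⟩, -⟩ := subset_image_iterate_itinerarySet hKA hA c hne.some_mem
  exact ⟨z, hzA, hz⟩

end Itinerary

section Entropy

open Dynamics UniformSpace Uniformity ExpGrowth

variable {X ι : Type*}

lemma pow_card_le_netMaxcard [Fintype ι] {T : X → X} {F : Set X} {K : ι → Set X}
    {V : SetRel X X} (hK : Pairwise (Disjoint on K))
    (hV : Pairwise (Disjoint on fun i ↦ ⋃ x ∈ K i, ball x V)) {p M : ℕ} (hp : p ≠ 0)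
    (horbit : ∀ c : Fin M → ι, ∃ z ∈ F, ∀ j : Fin M, T^[p * j] z ∈ K (c j)) :
    ((Fintype.card ι ^ M : ℕ) : ℕ∞) ≤ netMaxcard T F V (p * M) := by
  classical
  choose z hzF hzK using horbit
  have hz : Injective z := by
    intro σ τ hστ
    by_contra hne
    obtain ⟨j, hj⟩ := Function.ne_iff.1 hne
    exact disjoint_left.1 (hK hj) (hzK σ j) (hστ ▸ hzK τ j)
  have hsep : ∀ σ τ, σ ≠ τ → Disjoint (ball (z σ) (dynEntourage T V (p * M)))
      (ball (z τ) (dynEntourage T V (p * M))) := by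
    intro σ τ hne
    obtain ⟨j, hj⟩ := Function.ne_iff.1 hne
    have hjM : p * j < p * M := Nat.mul_lt_mul_of_pos_left j.isLt (Nat.pos_of_ne_zero hp)
    exact disjoint_left.2 fun q hqσ hqτ ↦ disjoint_left.1 (hV hj)
      (mem_biUnion (hzK σ j) (mem_ball_dynEntourage.1 hqσ _ hjM))
      (mem_biUnion (hzK τ j) (mem_ball_dynEntourage.1 hqτ _ hjM))
  have hnet : IsDynNetIn T F V (p * M) (Finset.univ.image z : Finset X) := by
    refine ⟨?_, ?_⟩
    · simpa [subset_def] using hzF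
    · simp only [Finset.coe_image, Finset.coe_univ, image_univ]
      rintro _ ⟨σ, rfl⟩ _ ⟨τ, rfl⟩ hστ
      exact hsep σ τ fun h ↦ hστ (h ▸ rfl)
  simpa [Finset.card_image_of_injective _ hz] using hnet.card_le_netMaxcard

variable [UniformSpace X]

lemma exists_mem_uniformity_pairwise_disjoint_thickening [Finite ι] {K : ι → Set X}
    (hKc : ∀ i, IsCompact (K i)) (hKcl : ∀ i, IsClosed (K i)) (hK : Pairwise (Disjoint on K)) :
    ∃ V ∈ 𝓤 X, Pairwise (Disjoint on fun i ↦ ⋃ x ∈ K i, ball x V) := by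
  have hpair : ∀ i j, ∃ V ∈ 𝓤 X, i ≠ j →
      Disjoint (⋃ x ∈ K i, ball x V) (⋃ x ∈ K j, ball x V) := by
    intro i j
    by_cases hij : i = j
    · exact ⟨univ, Filter.univ_mem, fun h ↦ (h hij).elim⟩
    · obtain ⟨V, hV, hd⟩ := (hK hij).exists_uniform_thickening (hKc i) (hKcl j)
      exact ⟨V, hV, fun _ ↦ hd⟩
  choose V hV hVd using hpair
  have hW : ∀ i j, ⋂ k, ⋂ l, V k l ⊆ V i j := fun i j ↦
    (iInter_subset _ i).trans (iInter_subset _ j)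
  refine ⟨⋂ k, ⋂ l, V k l, Filter.iInter_mem.2 fun k ↦ Filter.iInter_mem.2 (hV k),
    fun i j hij ↦ ?_⟩
  exact (hVd i j hij).mono (biUnion_mono subset_rfl fun x _ ↦ ball_mono (hW i j) x)
    (biUnion_mono subset_rfl fun x _ ↦ ball_mono (hW i j) x)

theorem log_card_div_le_coverEntropy [Fintype ι] [Nonempty ι] {T : X → X} {F : Set X}
    {K : ι → Set X} (hKc : ∀ i, IsCompact (K i)) (hKcl : ∀ i, IsClosed (K i))
    (hK : Pairwise (Disjoint on K)) {p : ℕ} (hp : p ≠ 0)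
    (horbit : ∀ (M : ℕ) (c : Fin M → ι), ∃ z ∈ F, ∀ j : Fin M, T^[p * j] z ∈ K (c j)) :
    ((Real.log (Fintype.card ι) / p : ℝ) : EReal) ≤ coverEntropy T F := by
  obtain ⟨V, hV, hVd⟩ := exists_mem_uniformity_pairwise_disjoint_thickening hKc hKcl hK
  have hmono : Monotone fun n ↦ (netMaxcard T F V n : ℝ≥0∞) :=
    ENat.toENNReal_mono.comp (netMaxcard_monotone_time T F V)
  have hgrowth : (Real.log (Fintype.card ι) : EReal) ≤ p * netEntropyEntourage T F V := by
    rw [netEntropyEntourage, ← hmono.expGrowthSup_comp_mul hp]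
    calc (Real.log (Fintype.card ι) : EReal)
        = expGrowthSup fun M ↦ (Fintype.card ι : ℝ≥0∞) ^ M := by
          rw [expGrowthSup_pow, ← ENNReal.ofReal_natCast,
            ENNReal.log_ofReal_of_pos (by exact_mod_cast Fintype.card_pos)]
      _ ≤ _ := expGrowthSup_monotone fun M ↦ by
          simpa using ENat.toENNReal_le.2 (pow_card_le_netMaxcard hK hVd hp (horbit M))
  calc ((Real.log (Fintype.card ι) / p : ℝ) : EReal)
      ≤ netEntropyEntourage T F V := by
        rw [EReal.coe_div, EReal.div_le_iff_le_mul (by exact_mod_cast Nat.pos_of_ne_zero hp)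
          (EReal.coe_ne_top _)]
        exact_mod_cast hgrowth
    _ ≤ coverEntropy T F := netEntropyEntourage_le_coverEntropy T F hV

end Entropy

section Interval

open Dynamics

variable {f : ℝ → ℝ} {x y r : ℝ}

def lSchemeInterval (x y r : ℝ) (b : Bool) : Set ℝ := cond b (Icc y r) (Icc x y)

lemma lSchemeInterval_subset (hxy : x < y) (hyr : y < r) (b : Bool) :
    lSchemeInterval x y r b ⊆ Icc x r := by
  cases b
  · exact Icc_subset_Icc le_rfl hyr.le
  · exact Icc_subset_Icc hxy.le le_rfl

lemma pairwise_disjoint_itinerarySet_lSchemeInterval (hxy : x < y) (hyr : y < r)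
    (hry : r ≤ f y) (hfx : f x = x) (hfr : f r = x) (n : ℕ) :
    Pairwise (Disjoint on fun c : Fin n → Bool ↦ itinerarySet f (lSchemeInterval x y r)
      fun j : Fin (n + 2) ↦ if h : (j : ℕ) < n then c ⟨j, h⟩ else true) := by
  intro c c' hne
  refine disjoint_left.2 fun q hq hq' ↦ ?_
  obtain ⟨k, hk⟩ := Function.ne_iff.1 hne
  have hy : f^[k] q = y := by
    have h := hq ⟨k, by omega⟩
    have h' := hq' ⟨k, by omega⟩
    simp only [k.isLt, dif_pos] at h h'
    cases hc : c k <;> cases hc' : c' k <;> simp_all [lSchemeInterval] <;> linarith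
  have hfy : f y = r := by
    refine le_antisymm ?_ hry
    have h := lSchemeInterval_subset hxy hyr _ (hq ⟨k + 1, by omega⟩)
    rw [Fin.val_mk, iterate_succ_apply', hy] at h
    exact h.2
  have hlast : f^[n + 1] q = x := by
    obtain ⟨m, hm⟩ : ∃ m, n + 1 = m + (k + 1 + 1) := ⟨n - 1 - k, by omega⟩
    rw [hm, iterate_add_apply, iterate_succ_apply', iterate_succ_apply', hy, hfy, hfr]
    exact IsFixedPt.iterate hfx m
  have h : f^[n + 1] q ∈ Icc y r := by simpa [lSchemeInterval] using hq (Fin.last _)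
  exact hxy.not_ge (hlast ▸ h.1)

theorem log_two_le_coverEntropy_Icc_of_lt (hxy : x < y) (hyr : y < r) (hry : r ≤ f y)
    (hfx : f x = x) (hfr : f r = x) (hf : ContinuousOn f (Icc x r)) :
    (Real.log 2 : EReal) ≤ coverEntropy f (Icc x r) := by
  set I := lSchemeInterval x y r
  have hIA := lSchemeInterval_subset hxy hyr
  have hI : ∀ b, IsClosed (I b) := by rintro (_ | _) <;> exact isClosed_Icc
  have hcover : ∀ b, Icc x r ⊆ f '' I b := by
    rintro (_ | _)
    · calc Icc x r ⊆ Icc (f x) (f y) := by rw [hfx]; exact Icc_subset_Icc le_rfl hry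
        _ ⊆ f '' Icc x y := intermediate_value_Icc hxy.le (hf.mono (hIA false))
    · calc Icc x r ⊆ Icc (f r) (f y) := by rw [hfr]; exact Icc_subset_Icc le_rfl hry
        _ ⊆ f '' Icc y r := intermediate_value_Icc' hyr.le (hf.mono (hIA true))
  have hbound : ∀ n : ℕ,
      (((n : ℝ) / (n + 2) * Real.log 2 : ℝ) : EReal) ≤ coverEntropy f (Icc x r) := by
    intro n
    set K : (Fin n → Bool) → Set ℝ := fun c ↦ itinerarySet f I
      (fun j : Fin (n + 2) ↦ if h : (j : ℕ) < n then c ⟨j, h⟩ else true) ∩ Icc x r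
    have hKcl : ∀ c, IsClosed (K c) := fun c ↦
      (isClosed_itinerarySet hI (fun b ↦ hf.mono (hIA b)) _).inter isClosed_Icc
    have hKA : ∀ c, K c ⊆ Icc x r := fun c ↦ inter_subset_right
    have hKcover : ∀ c, Icc x r ⊆ f^[n + 2] '' K c := fun c ↦
      subset_image_iterate_itinerarySet hIA hcover _
    have hKdisj : Pairwise (Disjoint on K) := fun c c' hcc' ↦
      (pairwise_disjoint_itinerarySet_lSchemeInterval hxy hyr hry hfx hfr n hcc').mono
        inter_subset_left inter_subset_left
    have h := log_card_div_le_coverEntropy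
      (fun c ↦ isCompact_Icc.of_isClosed_subset (hKcl c) (hKA c)) hKcl hKdisj
      (p := n + 2) (by omega) fun M c ↦ by
        simpa only [iterate_mul] using exists_iterate_mem_of_subset_image hKA hKcover
          (nonempty_Icc.2 (hxy.trans hyr).le) c
    convert h using 3
    simp only [Fintype.card_fun, Fintype.card_bool, Fintype.card_fin, Nat.cast_pow,
      Real.log_pow]
    push_cast
    ring
  have hlim : Filter.Tendsto (fun n : ℕ ↦ (((n : ℝ) / (n + 2) * Real.log 2 : ℝ) : EReal))
      Filter.atTop (nhds (Real.log 2 : EReal)) :=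
    EReal.tendsto_coe.2 (by simpa using (tendsto_natCast_div_add_atTop (2 : ℝ)).mul_const _)
  exact le_of_tendsto' hlim hbound

theorem log_two_le_coverEntropy_Icc_of_gt (hry : r < y) (hyx : y < x) (hfy : f y ≤ r)
    (hfx : f x = x) (hfr : f r = x) (hf : ContinuousOn f (Icc r x)) :
    (Real.log 2 : EReal) ≤ coverEntropy f (Icc r x) := by
  set g : ℝ → ℝ := fun t ↦ -f (-t)
  have hg : ContinuousOn g (Icc (-x) (-r)) :=
    (hf.comp continuousOn_neg fun t ht ↦ ⟨le_neg.2 ht.2, neg_le.2 ht.1⟩).neg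
  have hsemi : Semiconj Neg.neg f g := fun t ↦ by simp [g]
  calc (Real.log 2 : EReal)
      ≤ coverEntropy g (Icc (-x) (-r)) :=
        log_two_le_coverEntropy_Icc_of_lt (neg_lt_neg hyx) (neg_lt_neg hry) (by simpa [g])
          (by simp [g, hfx]) (by simp [g, hfr]) hg
    _ = coverEntropy g (Neg.neg '' Icc r x) := by rw [image_neg_Icc]
    _ ≤ coverEntropy f (Icc r x) :=
        coverEntropy_image_le_of_uniformContinuous hsemi uniformContinuous_neg _

end Interval

theorem stmt_13 (f : ℝ → ℝ) (hf : ContinuousOn f (Icc 0 1))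
    (hmaps : MapsTo f (Icc 0 1) (Icc 0 1))
    (x y : ℝ) (hx : x ∈ Icc (0:ℝ) 1) (hy : y ∈ Icc (0:ℝ) 1) (hfix : f x = x)
    (hL : (f (f y) ≤ x ∧ x < y ∧ y < f y) ∨ (f y < y ∧ y < x ∧ x ≤ f (f y))) :
    (Real.log 2 : EReal) ≤ Dynamics.coverEntropy f (Icc 0 1) := by
  have hfy := hmaps hy
  rcases hL with ⟨hffy, hxy, hyfy⟩ | ⟨hfyy, hyx, hffy⟩
  · obtain ⟨r, hr, hfr⟩ : ∃ r ∈ Icc y (f y), f r = x :=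
      intermediate_value_Icc' hyfy.le (hf.mono (Icc_subset_Icc hy.1 hfy.2))
        ⟨hffy, (hxy.trans hyfy).le⟩
    have hyr : y < r := hr.1.lt_of_ne (by rintro rfl; exact (hxy.trans hyfy).ne' hfr)
    have hsub : Icc x r ⊆ Icc 0 1 := Icc_subset_Icc hx.1 (hr.2.trans hfy.2)
    exact (log_two_le_coverEntropy_Icc_of_lt hxy hyr hr.2 hfix hfr (hf.mono hsub)).trans
      (Dynamics.coverEntropy_monotone f hsub)
  · obtain ⟨r, hr, hfr⟩ : ∃ r ∈ Icc (f y) y, f r = x :=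
      intermediate_value_Icc' hfyy.le (hf.mono (Icc_subset_Icc hfy.1 hy.2))
        ⟨(hfyy.trans hyx).le, hffy⟩
    have hry : r < y := hr.2.lt_of_ne (by rintro rfl; exact (hfyy.trans hyx).ne hfr)
    have hsub : Icc r x ⊆ Icc 0 1 := Icc_subset_Icc (hfy.1.trans hr.1) hx.2
    exact (log_two_le_coverEntropy_Icc_of_gt hry hyx hr.1 hfix hfr (hf.mono hsub)).trans
      (Dynamics.coverEntropy_monotone f hsub)
end
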